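/- arXiv:math/0008209 — 6 statements merged into one kernel-verified Lean document; each statement's English description precedes it below -/
import Mathlib

section
/- For odd i dividing 2n (so i divides n), the number ψ_n(i) of elements of the wreath product S_2 ≀ S_n (acting on [n] × [2]) whose cycle type consists of 2n/i cycles all of length i equals 2^n · n! / (2^{n/i} · i^{n/i} · (n/i)!). -/
open Nat Finset

/-- The permutation of `[n] × [2]` induced by the element `(τ, σ̄)` of the wreath
product `S_2 ≀ S_n`: `(a, b) ↦ (τ a, σ_a b)`. -/
def wreathPerm {n : ℕ} (τ : Equiv.Perm (Fin n)) (σ : Fin n → Equiv.Perm (Fin 2)) :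
    Equiv.Perm (Fin n × Fin 2) where
  toFun p := (τ p.1, σ p.1 p.2)
  invFun p := (τ⁻¹ p.1, (σ (τ⁻¹ p.1))⁻¹ p.2)
  left_inv p := by simp
  right_inv p := by simp

/-!
The `k`-th power of `wreathPerm τ σ` sends `(a, b)` to `(τ^k a, (σ_{τ^{k-1} a} ⋯ σ_a) b)`. A
`τ`-cycle of length `d` therefore carries cycles of length `d` or `2d`, and since `i` is odd, all
cycles have length `i` exactly when all cycles of `τ` have length `i` and `σ` has trivial product
along each of them. The permutations `τ` of cycle type `i^{n/i}` number `n! / (i^{n/i} (n/i)!)`.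
For such a `τ`, the admissible `σ` form the kernel of the norm map `σ ↦ ∏_{t<i} σ ∘ τ^t` on
`Fin n → S_2`. As `i` is odd and `S_2` has exponent 2, this kernel is the image of the coboundary
`f ↦ (f ∘ τ) / f`, whose kernel consists of the functions constant on the `n/i` cycles of `τ`;
so there are `2^n / 2^{n/i}` admissible `σ`.
-/

open Function

namespace Equiv.Perm

instance commGroupFinTwo : CommGroup (Perm (Fin 2)) :=
  { permGroup with mul_comm := by decide }

theorem mul_self_fin_two (g : Perm (Fin 2)) : g * g = 1 := by
  revert g; decide

variable {α : Type*}

theorem isPeriodicPt_iff_pow_apply_eq {τ : Perm α} {k : ℕ} {a : α} :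
    IsPeriodicPt τ k a ↔ (τ ^ k) a = a := by
  rw [IsPeriodicPt, IsFixedPt, iterate_eq_pow]

theorem pow_minimalPeriod_apply (τ : Perm α) (a : α) : (τ ^ minimalPeriod τ a) a = a :=
  isPeriodicPt_iff_pow_apply_eq.1 (isPeriodicPt_minimalPeriod τ a)

theorem minimalPeriod_eq_card_support_cycleOf [DecidableEq α] [Fintype α] {τ : Perm α} {a : α}
    (ha : a ∈ τ.support) : minimalPeriod τ a = #(τ.cycleOf a).support :=
  Nat.dvd_right_iff_eq.mp fun k => by
    rw [← isPeriodicPt_iff_minimalPeriod_dvd, isPeriodicPt_iff_pow_apply_eq,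
      (isCycleOn_support_cycleOf τ a).pow_apply_eq (mem_support_cycleOf_iff.2 ⟨.refl _ _, ha⟩)]

theorem mem_cycleType_iff_exists_minimalPeriod [DecidableEq α] [Fintype α] {τ : Perm α}
    {k : ℕ} : k ∈ τ.cycleType ↔ ∃ a ∈ τ.support, minimalPeriod τ a = k := by
  rw [cycleType_def, Multiset.mem_map]
  constructor
  · rintro ⟨c, hc, rfl⟩
    obtain ⟨a, ha⟩ := (mem_cycleFactorsFinset_iff.1 hc).1.nonempty_support
    refine ⟨a, mem_cycleFactorsFinset_support_le hc ha, ?_⟩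
    rw [minimalPeriod_eq_card_support_cycleOf (mem_cycleFactorsFinset_support_le hc ha),
      ← cycle_is_cycleOf ha hc, comp_apply]
  · rintro ⟨a, ha, rfl⟩
    exact ⟨_, cycleOf_mem_cycleFactorsFinset_iff.2 ha,
      (minimalPeriod_eq_card_support_cycleOf ha).symm⟩

theorem forall_minimalPeriod_eq_iff_cycleType_eq [DecidableEq α] [Fintype α] {τ : Perm α}
    {i m : ℕ} (hi : 2 ≤ i) (hm : i * m = Fintype.card α) :
    (∀ a, minimalPeriod τ a = i) ↔ τ.cycleType = Multiset.replicate m i := by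
  constructor
  · intro H
    have hsupp : τ.support = univ := eq_univ_of_forall fun a => by
      rw [mem_support]
      intro ha
      have := H a
      rw [minimalPeriod_eq_one_iff_isFixedPt.2 ha] at this
      omega
    have hall : ∀ k ∈ τ.cycleType, k = i := by
      intro k hk
      obtain ⟨a, -, rfl⟩ := mem_cycleType_iff_exists_minimalPeriod.1 hk
      exact H a
    have hsum := sum_cycleType τ
    rw [Multiset.eq_replicate_card.2 hall, Multiset.sum_replicate, smul_eq_mul, hsupp,
      Finset.card_univ, ← hm, mul_comm] at hsum
    exact Multiset.eq_replicate.2 ⟨Nat.eq_of_mul_eq_mul_left (by omega) hsum, hall⟩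
  · intro h a
    have hsupp : τ.support = univ := eq_univ_of_card _ <| by
      rw [← sum_cycleType, h, Multiset.sum_replicate, smul_eq_mul, mul_comm, hm]
    exact Multiset.eq_of_mem_replicate <|
      h ▸ mem_cycleType_iff_exists_minimalPeriod.2 ⟨a, hsupp ▸ mem_univ a, rfl⟩

theorem card_forall_minimalPeriod_eq_mul [DecidableEq α] [Fintype α] {i m : ℕ} (hi : 0 < i)
    (hm : i * m = Fintype.card α) :
    #{τ : Perm α | ∀ a, minimalPeriod τ a = i} * (i ^ m * m !) = (Fintype.card α)! := by
  -- `cycleType` omits fixed points, so `i = 1` is treated apart.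
  obtain rfl | hi2 : i = 1 ∨ 2 ≤ i := by omega
  · have hone : ∀ τ : Perm α, (∀ a, minimalPeriod τ a = 1) ↔ τ = 1 := fun τ => by
      simp only [minimalPeriod_eq_one_iff_isFixedPt, IsFixedPt, Perm.ext_iff, one_apply]
    simp_rw [hone, filter_eq', mem_univ, if_true, card_singleton, one_pow, one_mul, ← hm, one_mul]
  · simp_rw [forall_minimalPeriod_eq_iff_cycleType_eq hi2 hm]
    have h := card_of_cycleType_mul_eq α (Multiset.replicate m i)
    have hle : ∀ a ∈ Multiset.replicate m i, 2 ≤ a := fun a ha =>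
      Multiset.eq_of_mem_replicate ha ▸ hi2
    rw [if_pos ⟨by simp [hm, mul_comm], hle⟩] at h
    rw [← h]
    rcases Nat.eq_zero_or_pos m with rfl | hm0
    · simp [← hm]
    · simp [Multiset.toFinset_replicate, hm0.ne', ← hm, mul_comm]

theorem apply_zpow_apply_eq (τ : Perm α) {β : Type*} {f : α → β} (hf : ∀ a, f (τ a) = f a)
    (k : ℤ) (a : α) : f ((τ ^ k) a) = f a := by
  induction k using Int.induction_on generalizing a with
  | zero => rfl
  | succ k ih => rw [zpow_add_one, mul_apply, ih, hf]
  | pred k ih =>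
    rw [zpow_sub_one, mul_apply, ih, ← hf (τ⁻¹ a), ← mul_apply, mul_inv_cancel, one_apply]

section OrbitProd

variable {G : Type*} [CommGroup G] (τ : Perm α)

def orbitProd (k : ℕ) : (α → G) →* (α → G) where
  toFun σ a := ∏ t ∈ range k, σ ((τ ^ t) a)
  map_one' := by ext; simp
  map_mul' σ σ' := by ext; simp [prod_mul_distrib]

theorem orbitProd_apply (k : ℕ) (σ : α → G) (a : α) :
    orbitProd τ k σ a = ∏ t ∈ range k, σ ((τ ^ t) a) := rfl

theorem orbitProd_add (j k : ℕ) (σ : α → G) (a : α) :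
    orbitProd τ (j + k) σ a = orbitProd τ j σ ((τ ^ k) a) * orbitProd τ k σ a := by
  rw [orbitProd_apply, add_comm, prod_range_add, mul_comm]
  congr 1
  refine prod_congr rfl fun t _ => ?_
  rw [← mul_apply, ← pow_add, add_comm]

theorem orbitProd_succ' (k : ℕ) (σ : α → G) (a : α) :
    orbitProd τ (k + 1) σ a = orbitProd τ k σ (τ a) * σ a := by
  simpa [orbitProd_apply] using orbitProd_add τ k 1 σ a

theorem orbitProd_two_mul (h : ℕ) (σ : α → G) (a : α) :
    orbitProd τ (2 * h) σ a = orbitProd (τ ^ 2) h σ (τ a) * orbitProd (τ ^ 2) h σ a := by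
  induction h with
  | zero => simp [orbitProd_apply]
  | succ h ih =>
    simp only [orbitProd_apply, ← pow_mul] at ih ⊢
    rw [show 2 * (h + 1) = 2 * h + 1 + 1 by ring, prod_range_succ, prod_range_succ,
      prod_range_succ, prod_range_succ, ih, _root_.pow_succ, mul_apply]
    ac_rfl

def coboundary : (α → G) →* (α → G) where
  toFun f a := f (τ a) / f a
  map_one' := by ext; simp
  map_mul' f g := by ext; simp [mul_div_mul_comm]

theorem coboundary_apply (f : α → G) (a : α) : coboundary τ f a = f (τ a) / f a := rfl

theorem orbitProd_coboundary (k : ℕ) (f : α → G) (a : α) :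
    orbitProd τ k (coboundary τ f) a = f ((τ ^ k) a) / f a := by
  simpa only [orbitProd_apply, coboundary_apply, _root_.pow_succ', mul_apply, pow_zero, one_apply]
    using prod_range_div (fun t => f ((τ ^ t) a)) k

theorem mem_ker_coboundary {f : α → G} : f ∈ (coboundary τ).ker ↔ ∀ a, f (τ a) = f a := by
  simp [MonoidHom.mem_ker, funext_iff, coboundary_apply, div_eq_one]

theorem ker_orbitProd_eq_range_coboundary (hG : ∀ g : G, g * g = 1) {i : ℕ} (hi : Odd i)
    (hτ : τ ^ i = 1) : (orbitProd τ i).ker = (coboundary (G := G) τ).range := by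
  ext σ
  constructor
  · intro hσ
    -- Over a group of exponent 2, `1 + x + ⋯ + x^{2h} = 1 + (1 + x)(x + x^3 + ⋯ + x^{2h-1})`.
    obtain ⟨h, rfl⟩ := hi
    refine ⟨fun a => orbitProd (τ ^ 2) h σ (τ a), funext fun a => ?_⟩
    have h1 : orbitProd τ (2 * h + 1) σ a = 1 := congrFun hσ a
    rw [orbitProd_succ', orbitProd_two_mul] at h1
    rw [coboundary_apply, div_eq_mul_inv, inv_eq_of_mul_eq_one_right (hG _)]
    exact (eq_inv_of_mul_eq_one_left h1).trans (inv_eq_of_mul_eq_one_right (hG _))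
  · rintro ⟨f, rfl⟩
    ext a
    rw [orbitProd_coboundary, hτ, one_apply, div_self', Pi.one_apply]

open MulAction Subgroup

theorem mem_ker_coboundary_iff_orbitRel_le {f : α → G} :
    f ∈ (coboundary τ).ker ↔ orbitRel (zpowers τ) α ≤ Setoid.ker f := by
  rw [mem_ker_coboundary]
  constructor
  · rintro hf a - ⟨⟨g, hg⟩, rfl⟩
    obtain ⟨k, rfl⟩ := mem_zpowers_iff.1 hg
    exact apply_zpow_apply_eq τ hf k _
  · intro h a
    exact h ⟨⟨τ, mem_zpowers τ⟩, rfl⟩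

def kerCoboundaryEquiv : (coboundary (G := G) τ).ker ≃ (orbitRel.Quotient (zpowers τ) α → G) :=
  (Equiv.subtypeEquivRight fun _ => mem_ker_coboundary_iff_orbitRel_le τ).trans
    (Setoid.liftEquiv _)

theorem card_orbitRel_quotient_mul [Finite α] {i : ℕ} (H : ∀ a, minimalPeriod τ a = i) :
    Nat.card (orbitRel.Quotient (zpowers τ) α) * i = Nat.card α := by
  classical
  have := Fintype.ofFinite α
  rw [Nat.card_congr (selfEquivSigmaOrbits (zpowers τ) α), Nat.card_sigma]
  have horbit : ∀ b : α, Nat.card (orbit (zpowers τ) b) = i := fun b => by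
    rw [Nat.card_eq_fintype_card, ← minimalPeriod_eq_card]
    exact H b
  simp only [horbit, sum_const, Finset.card_univ, smul_eq_mul, Nat.card_eq_fintype_card]

theorem card_ker_orbitProd_mul [Finite α] [Finite G] (hG : ∀ g : G, g * g = 1) {i m : ℕ}
    (hi : Odd i) (H : ∀ a, minimalPeriod τ a = i) (hm : i * m = Nat.card α) :
    Nat.card (orbitProd (G := G) τ i).ker * Nat.card G ^ m = Nat.card G ^ Nat.card α := by
  have hτ : τ ^ i = 1 := ext fun a => H a ▸ pow_minimalPeriod_apply τ a
  have hq : Nat.card (orbitRel.Quotient (zpowers τ) α) = m :=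
    Nat.eq_of_mul_eq_mul_left hi.pos (by rw [mul_comm, card_orbitRel_quotient_mul τ H, hm])
  rw [ker_orbitProd_eq_range_coboundary τ hG hi hτ, ← hq, ← Nat.card_fun,
    ← Nat.card_congr (kerCoboundaryEquiv τ), ← index_ker, mul_comm, card_mul_index, Nat.card_fun]

end OrbitProd

theorem card_forall_minimalPeriod_eq_and_mem_ker_orbitProd_mul [Fintype α] [DecidableEq α]
    {G : Type*} [CommGroup G] [Finite G] (hG : ∀ g : G, g * g = 1) {i m : ℕ} (hi : Odd i)
    (hm : i * m = Fintype.card α) :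
    Nat.card {p : Perm α × (α → G) //
        (∀ a, minimalPeriod p.1 a = i) ∧ p.2 ∈ (orbitProd p.1 i).ker} *
        (Nat.card G ^ m * i ^ m * m !) =
      Nat.card G ^ Fintype.card α * (Fintype.card α)! := by
  let e : {p : Perm α × (α → G) //
        (∀ a, minimalPeriod p.1 a = i) ∧ p.2 ∈ (orbitProd p.1 i).ker} ≃
      Σ τ : {τ : Perm α // ∀ a, minimalPeriod τ a = i}, (orbitProd (G := G) τ.1 i).ker :=
    { toFun p := ⟨⟨p.1.1, p.2.1⟩, ⟨p.1.2, p.2.2⟩⟩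
      invFun q := ⟨(q.1.1, q.2.1), q.1.2, q.2.2⟩ }
  have hfiber : ∀ τ : {τ : Perm α // ∀ a, minimalPeriod τ a = i},
      Nat.card (orbitProd (G := G) τ.1 i).ker * Nat.card G ^ m = Nat.card G ^ Fintype.card α :=
    fun τ => by
      rw [← Nat.card_eq_fintype_card] at hm ⊢
      exact card_ker_orbitProd_mul τ.1 hG hi τ.2 hm
  calc _ = ∑ τ : {τ : Perm α // ∀ a, minimalPeriod τ a = i},
        Nat.card (orbitProd (G := G) τ.1 i).ker * Nat.card G ^ m * (i ^ m * m !) := by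
        rw [Nat.card_congr e, Nat.card_sigma, sum_mul]
        exact sum_congr rfl fun _ _ => by ring
    _ = Nat.card G ^ Fintype.card α *
          (#{τ : Perm α | ∀ a, minimalPeriod τ a = i} * (i ^ m * m !)) := by
        simp only [hfiber, sum_const, Finset.card_univ, Fintype.card_subtype, smul_eq_mul]
        ring
    _ = _ := by rw [card_forall_minimalPeriod_eq_mul hi.pos hm]

end Equiv.Perm

open Equiv Perm

theorem wreathPerm_pow_apply {n : ℕ} (τ : Perm (Fin n)) (σ : Fin n → Perm (Fin 2)) (k : ℕ)
    (a : Fin n) (b : Fin 2) :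
    (wreathPerm τ σ ^ k) (a, b) = ((τ ^ k) a, orbitProd τ k σ a b) := by
  induction k generalizing a b with
  | zero => simp [orbitProd_apply]
  | succ k ih =>
    rw [pow_succ, mul_apply, show wreathPerm τ σ (a, b) = (τ a, σ a b) from rfl, ih,
      orbitProd_succ', mul_apply, ← mul_apply (τ ^ k), ← _root_.pow_succ]

theorem isPeriodicPt_wreathPerm_iff {n k : ℕ} {τ : Perm (Fin n)} {σ : Fin n → Perm (Fin 2)}
    {a : Fin n} {b : Fin 2} :
    IsPeriodicPt (wreathPerm τ σ) k (a, b) ↔ (τ ^ k) a = a ∧ orbitProd τ k σ a b = b := by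
  rw [isPeriodicPt_iff_pow_apply_eq, wreathPerm_pow_apply, Prod.ext_iff]

theorem forall_minimalPeriod_wreathPerm_eq_iff {n i : ℕ} (hi : Odd i) (τ : Perm (Fin n))
    (σ : Fin n → Perm (Fin 2)) :
    (∀ x, minimalPeriod (wreathPerm τ σ) x = i) ↔
      (∀ a, minimalPeriod τ a = i) ∧ σ ∈ (orbitProd τ i).ker := by
  constructor
  · intro H
    have hper : ∀ a b, (τ ^ i) a = a ∧ orbitProd τ i σ a b = b := fun a b =>
      isPeriodicPt_wreathPerm_iff.1 (H (a, b) ▸ isPeriodicPt_minimalPeriod _ _)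
    refine ⟨fun a => Nat.dvd_antisymm ?_ ?_, funext fun a => Perm.ext fun b => (hper a b).2⟩
    · exact isPeriodicPt_iff_minimalPeriod_dvd.1 (isPeriodicPt_iff_pow_apply_eq.2 (hper a 0).1)
    · have hτ := pow_minimalPeriod_apply τ a
      have h2 : IsPeriodicPt (wreathPerm τ σ) (2 * minimalPeriod τ a) (a, 0) := by
        rw [isPeriodicPt_wreathPerm_iff, two_mul, orbitProd_add, hτ, mul_self_fin_two, pow_add,
          mul_apply, hτ, hτ]
        exact ⟨rfl, rfl⟩
      exact hi.coprime_two_right.dvd_of_dvd_mul_left (H (a, 0) ▸ h2.minimalPeriod_dvd)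
  · rintro ⟨hτ, hσ⟩ ⟨a, b⟩
    have hper : IsPeriodicPt (wreathPerm τ σ) i (a, b) :=
      isPeriodicPt_wreathPerm_iff.2
        ⟨hτ a ▸ pow_minimalPeriod_apply τ a, by rw [congrFun hσ a]; rfl⟩
    refine Nat.dvd_antisymm hper.minimalPeriod_dvd (hτ a ▸ ?_)
    exact isPeriodicPt_iff_minimalPeriod_dvd.1 <| isPeriodicPt_iff_pow_apply_eq.2
      (isPeriodicPt_wreathPerm_iff.1 (isPeriodicPt_minimalPeriod _ (a, b))).1

theorem card_wreath_cycle_type_odd_general (n i : ℕ) (hi : Odd i) (hd : i ∣ 2 * n) :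
    Nat.card {p : Equiv.Perm (Fin n) × (Fin n → Equiv.Perm (Fin 2)) //
        ∀ x, Function.minimalPeriod (wreathPerm p.1 p.2) x = i} =
      2 ^ n * n ! / (2 ^ (n / i) * i ^ (n / i) * (n / i)!) := by
  obtain ⟨m, rfl⟩ : i ∣ n := hi.coprime_two_right.dvd_of_dvd_mul_left hd
  have hcount := card_forall_minimalPeriod_eq_and_mem_ker_orbitProd_mul (α := Fin (i * m))
    mul_self_fin_two hi (Fintype.card_fin _).symm
  rw [Nat.card_perm, Nat.card_fin, factorial_two, Fintype.card_fin] at hcount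
  simp_rw [Nat.mul_div_cancel_left m hi.pos, forall_minimalPeriod_wreathPerm_eq_iff hi]
  exact (Nat.div_eq_of_eq_mul_left (by have := hi.pos; positivity) hcount.symm).symm

/-- For odd `i` dividing `2n` (hence `i ∣ n`), the number of elements of the wreath
product `S_2 ≀ S_n` whose induced permutation of `[n] × [2]` has all cycles of length
`i` equals `2^n · n! / (2^{n/i} · i^{n/i} · (n/i)!)`. -/
theorem card_wreath_cycle_type_odd (n i : ℕ) (hn : 0 < n) (hi : Odd i) (hd : i ∣ 2 * n) :
    Nat.card {p : Equiv.Perm (Fin n) × (Fin n → Equiv.Perm (Fin 2)) //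
        ∀ x, Function.minimalPeriod (wreathPerm p.1 p.2) x = i} =
      2 ^ n * n ! / (2 ^ (n / i) * i ^ (n / i) * (n / i)!) :=
  card_wreath_cycle_type_odd_general n i hi hd
end

section
/- For odd i dividing 2n, the number of perfect matchings of K_{2n} (vertex set Z/2n) fixed by a rotation of order i equals i^{n/i} · (2n/i − 1)!!. -/
open Nat Finset

/-- A perfect matching of the complete graph on vertex set `ZMod (2n)`: a set of
2-element edges such that every vertex lies on exactly one edge. -/
def PMatching (n : ℕ) :=
  {M : Finset (Finset (ZMod (2 * n))) //
    (∀ e ∈ M, e.card = 2) ∧ ∀ v : ZMod (2 * n), ∃! e, e ∈ M ∧ v ∈ e}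

/-- Two perfect matchings are rotation-equivalent if some rotation `v ↦ v + a`
carries the one to the other. -/
def rotRel (n : ℕ) (M M' : PMatching n) : Prop :=
  ∃ a : ZMod (2 * n), M'.1 = M.1.image (Finset.image (fun v => v + a))

/-- The number of equivalence classes (orbits) of perfect matchings of `K_{2n}` under
the rotation action of the cyclic group `C_{2n}`. -/
noncomputable def rotOrbitCount (n : ℕ) : ℕ :=
  Set.ncard {S : Set (PMatching n) | ∃ m, S = {m' | rotRel n m m'}}

set_option linter.unusedSectionVars false

section Generic
variable {s N : ℕ}

/-- The decorated-matching data: `g c` gives the displacement of the coset `c`. -/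
def DD (hs : s ∣ N) (A : Finset (ZMod s)) : Type :=
  {g : ZMod s → ZMod N //
    (∀ c ∈ A, ZMod.castHom hs (ZMod s) (g c) ≠ 0 ∧
        c + ZMod.castHom hs (ZMod s) (g c) ∈ A ∧
        g (c + ZMod.castHom hs (ZMod s) (g c)) = - g c) ∧
    ∀ c ∉ A, g c = 0}

lemma q_natCast_val (hs : s ∣ N) [NeZero N] [NeZero s] (t : ZMod s) :
    ZMod.castHom hs (ZMod s) ((t.val : ℕ) : ZMod N) = t := by
  rw [map_natCast]
  exact ZMod.natCast_rightInverse t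

lemma card_fiber (hs : s ∣ N) [NeZero N] (t : ZMod s) :
    Nat.card {b : ZMod N // ZMod.castHom hs (ZMod s) b = t} = N / s := by
  haveI : NeZero s := ⟨fun h => (NeZero.ne N) (by simpa [h] using hs)⟩
  set q := ZMod.castHom hs (ZMod s) with hq
  have hsurj : Function.Surjective q := fun t => ⟨((t.val : ℕ) : ZMod N), q_natCast_val hs t⟩
  -- fiber over t ≃ fiber over 0
  have e1 : {b : ZMod N // q b = t} ≃ {b : ZMod N // q b = 0} :=
    { toFun := fun b => ⟨b.1 - ((t.val : ℕ) : ZMod N), by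
        simp [map_sub, b.2, q_natCast_val hs t]⟩
      invFun := fun b => ⟨b.1 + ((t.val : ℕ) : ZMod N), by
        simp [map_add, b.2, q_natCast_val hs t]⟩
      left_inv := fun b => by ext; simp
      right_inv := fun b => by ext; simp }
  have e2 : {b : ZMod N // q b = 0} ≃ q.toAddMonoidHom.ker :=
    Equiv.subtypeEquivRight (by simp [AddMonoidHom.mem_ker])
  rw [Nat.card_congr (e1.trans e2)]
  have hcard := AddSubgroup.card_eq_card_quotient_mul_card_addSubgroup q.toAddMonoidHom.ker
  rw [Nat.card_congr (QuotientAddGroup.quotientKerEquivOfSurjective q.toAddMonoidHom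
      hsurj).toEquiv] at hcard
  simp only [Nat.card_zmod] at hcard
  conv_rhs => rw [hcard]
  rw [Nat.mul_div_cancel_left _ (Nat.pos_of_ne_zero (NeZero.ne s))]

variable (hs : s ∣ N) {A : Finset (ZMod s)} {x0 : ZMod s}

lemma partner_invol {g : ZMod s → ZMod N}
    (hg : ∀ c ∈ A, ZMod.castHom hs (ZMod s) (g c) ≠ 0 ∧
        c + ZMod.castHom hs (ZMod s) (g c) ∈ A ∧
        g (c + ZMod.castHom hs (ZMod s) (g c)) = - g c)
    {c : ZMod s} (hc : c ∈ A) :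
    (c + ZMod.castHom hs (ZMod s) (g c)) +
      ZMod.castHom hs (ZMod s) (g (c + ZMod.castHom hs (ZMod s) (g c))) = c := by
  rw [(hg c hc).2.2, map_neg, add_assoc, add_neg_cancel, add_zero]

lemma restrict_spec (hx0 : x0 ∈ A) (g : ZMod s → ZMod N)
    (hg : ∀ c ∈ A, ZMod.castHom hs (ZMod s) (g c) ≠ 0 ∧
        c + ZMod.castHom hs (ZMod s) (g c) ∈ A ∧
        g (c + ZMod.castHom hs (ZMod s) (g c)) = - g c)
    (hg2 : ∀ c ∉ A, g c = 0)
    (y : ZMod s) (hy : y = x0 + ZMod.castHom hs (ZMod s) (g x0)) :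
    (∀ c ∈ (A.erase x0).erase y,
       ZMod.castHom hs (ZMod s) ((fun c => if c = x0 ∨ c = y then 0 else g c) c) ≠ 0 ∧
        c + ZMod.castHom hs (ZMod s) ((fun c => if c = x0 ∨ c = y then 0 else g c) c)
          ∈ (A.erase x0).erase y ∧
        (fun c => if c = x0 ∨ c = y then 0 else g c)
          (c + ZMod.castHom hs (ZMod s) ((fun c => if c = x0 ∨ c = y then 0 else g c) c)) =
          - (fun c => if c = x0 ∨ c = y then 0 else g c) c) ∧
    ∀ c ∉ (A.erase x0).erase y, (fun c => if c = x0 ∨ c = y then 0 else g c) c = 0 := by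
  constructor
  · intro c hc
    have hcy : c ≠ y := (Finset.mem_erase.1 hc).1
    have hcx : c ≠ x0 := (Finset.mem_erase.1 (Finset.mem_erase.1 hc).2).1
    have hcA : c ∈ A := (Finset.mem_erase.1 (Finset.mem_erase.1 hc).2).2
    obtain ⟨h1, h2, h3⟩ := hg c hcA
    have hpx0 : c + ZMod.castHom hs (ZMod s) (g c) ≠ x0 := by
      intro h
      apply hcy
      have hI := partner_invol hs hg hcA
      rw [h] at hI
      rw [hy]
      exact hI.symm
    have hpy : c + ZMod.castHom hs (ZMod s) (g c) ≠ y := by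
      intro h
      apply hcx
      have hI := partner_invol hs hg hcA
      rw [h] at hI
      have h0 := partner_invol hs hg hx0
      rw [← hy] at h0
      rw [← hI]
      exact h0
    simp only [hcx, hcy, or_self, if_false]
    refine ⟨h1, Finset.mem_erase.2 ⟨hpy, Finset.mem_erase.2 ⟨hpx0, h2⟩⟩, ?_⟩
    simp only [hpx0, hpy, or_self, if_false]
    exact h3
  · intro c hc
    by_cases h : c = x0 ∨ c = y
    · simp [h]
    · push_neg at h
      simp only [h.1, h.2, or_self, if_false]
      apply hg2
      intro hcA
      exact hc (Finset.mem_erase.2 ⟨h.2, Finset.mem_erase.2 ⟨h.1, hcA⟩⟩)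


lemma glue_spec (hx0 : x0 ∈ A) {y : ZMod s} (hy : y ∈ A.erase x0)
    {b : ZMod N} (hb : ZMod.castHom hs (ZMod s) b = y - x0)
    (g' : ZMod s → ZMod N)
    (hg' : ∀ c ∈ (A.erase x0).erase y, ZMod.castHom hs (ZMod s) (g' c) ≠ 0 ∧
        c + ZMod.castHom hs (ZMod s) (g' c) ∈ (A.erase x0).erase y ∧
        g' (c + ZMod.castHom hs (ZMod s) (g' c)) = - g' c)
    (hg'2 : ∀ c ∉ (A.erase x0).erase y, g' c = 0) :
    (∀ c ∈ A,
       ZMod.castHom hs (ZMod s) ((fun c => if c = x0 then b else if c = y then -b else g' c) c) ≠ 0 ∧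
        c + ZMod.castHom hs (ZMod s)
            ((fun c => if c = x0 then b else if c = y then -b else g' c) c) ∈ A ∧
        (fun c => if c = x0 then b else if c = y then -b else g' c)
          (c + ZMod.castHom hs (ZMod s)
            ((fun c => if c = x0 then b else if c = y then -b else g' c) c)) =
          - (fun c => if c = x0 then b else if c = y then -b else g' c) c) ∧
    ∀ c ∉ A, (fun c => if c = x0 then b else if c = y then -b else g' c) c = 0 := by
  have hyx : y ≠ x0 := (Finset.mem_erase.1 hy).1
  have hyA : y ∈ A := (Finset.mem_erase.1 hy).2
  constructor
  · intro c hcA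
    by_cases hc1 : c = x0
    · subst hc1
      have e1 : c + (y - c) = y := by ring
      refine ⟨?_, ?_, ?_⟩ <;>
        simp [hb, e1, hyx, hyA, sub_eq_zero]
    · by_cases hc2 : c = y
      · subst hc2
        have e1 : c + -(c - x0) = x0 := by ring
        refine ⟨?_, ?_, ?_⟩ <;>
          simp [map_neg, hb, e1, hc1, Ne.symm hc1, sub_eq_zero, hx0]
      · have hcA' : c ∈ (A.erase x0).erase y :=
          Finset.mem_erase.2 ⟨hc2, Finset.mem_erase.2 ⟨hc1, hcA⟩⟩
        obtain ⟨h1, h2, h3⟩ := hg' c hcA'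
        have hp2 : c + ZMod.castHom hs (ZMod s) (g' c) ∈ (A.erase x0).erase y := h2
        have hpy : c + ZMod.castHom hs (ZMod s) (g' c) ≠ y := (Finset.mem_erase.1 hp2).1
        have hpx : c + ZMod.castHom hs (ZMod s) (g' c) ≠ x0 :=
          (Finset.mem_erase.1 (Finset.mem_erase.1 hp2).2).1
        simp only [if_neg hc1, if_neg hc2]
        refine ⟨h1, (Finset.mem_erase.1 (Finset.mem_erase.1 hp2).2).2, ?_⟩
        simp only [if_neg hpx, if_neg hpy]
        exact h3
  · intro c hcA
    have hc1 : c ≠ x0 := fun h => hcA (h ▸ hx0)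
    have hc2 : c ≠ y := fun h => hcA (h ▸ hyA)
    simp only [if_neg hc1, if_neg hc2]
    exact hg'2 c fun h =>
      hcA (Finset.mem_erase.1 (Finset.mem_erase.1 h).2).2


/-- slice of `DD A` where the partner of `x0` is a fixed `y` -/
def sliceEquiv (hx0 : x0 ∈ A) {y : ZMod s} (hy : y ∈ A.erase x0) :
    {g : DD hs A // x0 + ZMod.castHom hs (ZMod s) (g.1 x0) = y} ≃
      ({b : ZMod N // ZMod.castHom hs (ZMod s) b = y - x0} ×
        DD hs ((A.erase x0).erase y)) where
  toFun gg :=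
    (⟨gg.1.1 x0, eq_sub_of_add_eq' gg.2⟩,
     ⟨fun c => if c = x0 ∨ c = y then 0 else gg.1.1 c,
      restrict_spec hs hx0 gg.1.1 gg.1.2.1 gg.1.2.2 y gg.2.symm⟩)
  invFun bg :=
    ⟨⟨fun c => if c = x0 then bg.1.1 else if c = y then -bg.1.1 else bg.2.1 c,
      glue_spec hs hx0 hy bg.1.2 bg.2.1 bg.2.2.1 bg.2.2.2⟩, by
        simp [bg.1.2]⟩
  left_inv := by
    rintro ⟨⟨g, hg1, hg2⟩, hgy⟩
    apply Subtype.ext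
    apply Subtype.ext
    funext c
    simp only
    by_cases hc1 : c = x0
    · simp [hc1]
    · by_cases hc2 : c = y
      · subst hc2
        have := (hg1 x0 hx0).2.2
        rw [hgy] at this
        simp [hc1, this]
      · simp [hc1, hc2]
  right_inv := by
    rintro ⟨⟨b, hb⟩, ⟨g', hg'1, hg'2⟩⟩
    have hyx : y ≠ x0 := (Finset.mem_erase.1 hy).1
    refine Prod.ext (Subtype.ext ?_) (Subtype.ext ?_)
    · simp
    · funext c
      simp only
      by_cases hc1 : c = x0
      · subst hc1
        simp only [true_or, if_pos rfl, if_true]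
        exact (hg'2 c (by simp)).symm
      · by_cases hc2 : c = y
        · subst hc2
          simp only [or_true, if_true]
          exact (hg'2 c (by simp)).symm
        · simp [hc1, hc2]

instance instFiniteDD [NeZero N] [NeZero s] (hs : s ∣ N) (A : Finset (ZMod s)) :
    Finite (DD hs A) := by
  unfold DD; infer_instance

lemma card_DD [NeZero N] [NeZero s] (hs : s ∣ N) :
    ∀ (r : ℕ) (A : Finset (ZMod s)), A.card = 2 * r →
      Nat.card (DD hs A) = (N / s) ^ r * ∏ j ∈ Finset.range r, (2 * j + 1) := by
  intro r
  induction r with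
  | zero =>
    intro A hA
    rw [Finset.card_eq_zero.1 hA]
    rw [pow_zero, Finset.range_zero, Finset.prod_empty, mul_one]
    rw [Nat.card_eq_one_iff_exists]
    refine ⟨⟨fun _ => 0, by simp, fun c _ => rfl⟩, ?_⟩
    rintro ⟨g, hg1, hg2⟩
    apply Subtype.ext
    funext c
    exact hg2 c (by simp)
  | succ r ih =>
    intro A hA
    have hAne : A.Nonempty := Finset.card_pos.1 (by omega)
    obtain ⟨x0, hx0⟩ := hAne
    set F : DD hs A → {y : ZMod s // y ∈ A.erase x0} := fun g =>
      ⟨x0 + ZMod.castHom hs (ZMod s) (g.1 x0),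
        Finset.mem_erase.2 ⟨by simpa using (g.2.1 x0 hx0).1, (g.2.1 x0 hx0).2.1⟩⟩ with hF
    rw [← Nat.card_congr (Equiv.sigmaFiberEquiv F)]
    haveI : ∀ y : {y : ZMod s // y ∈ A.erase x0}, Fintype {g : DD hs A // F g = y} :=
      fun y => Fintype.ofFinite _
    rw [Nat.card_eq_fintype_card, Fintype.card_sigma]
    have hcard : ∀ y : {y : ZMod s // y ∈ A.erase x0},
        Fintype.card {g : DD hs A // F g = y}
          = (N / s) * ((N / s) ^ r * ∏ j ∈ Finset.range r, (2 * j + 1)) := by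
      intro y
      rw [Fintype.card_eq_nat_card]
      have e1 : {g : DD hs A // F g = y}
          ≃ {g : DD hs A // x0 + ZMod.castHom hs (ZMod s) (g.1 x0) = y.1} :=
        Equiv.subtypeEquivRight (fun g => by rw [hF, Subtype.ext_iff])
      rw [Nat.card_congr (e1.trans (sliceEquiv hs hx0 y.2))]
      rw [Nat.card_prod, card_fiber hs]
      have hA' : ((A.erase x0).erase y.1).card = 2 * r := by
        rw [Finset.card_erase_of_mem y.2, Finset.card_erase_of_mem hx0, hA]
        omega
      rw [ih _ hA']
    rw [Finset.sum_congr rfl (fun y _ => hcard y)]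
    rw [Finset.sum_const, Finset.card_univ, Fintype.card_coe,
      Finset.card_erase_of_mem hx0, hA]
    rw [Finset.prod_range_succ, smul_eq_mul]
    have h21 : 2 * (r + 1) - 1 = 2 * r + 1 := by omega
    rw [h21]
    ring

end Generic

section Matching
variable {n : ℕ}

/-- The edge through `v`. -/
def medge (M : PMatching n) (v : ZMod (2 * n)) : Finset (ZMod (2 * n)) :=
  Finset.choose (fun e => v ∈ e) M.1 (M.2.2 v)

lemma medge_mem (M : PMatching n) (v : ZMod (2 * n)) : medge M v ∈ M.1 :=
  Finset.choose_mem _ _ _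

lemma mem_medge (M : PMatching n) (v : ZMod (2 * n)) : v ∈ medge M v :=
  Finset.choose_property (fun e => v ∈ e) M.1 (M.2.2 v)

lemma medge_eq (M : PMatching n) {v : ZMod (2 * n)} {e : Finset (ZMod (2 * n))}
    (he : e ∈ M.1) (hv : v ∈ e) : medge M v = e := by
  obtain ⟨e', -, hu⟩ := M.2.2 v
  rw [hu _ ⟨medge_mem M v, mem_medge M v⟩, hu _ ⟨he, hv⟩]

/-- The partner of `v`. -/
def mpt (M : PMatching n) (v : ZMod (2 * n)) : ZMod (2 * n) :=
  ∑ w ∈ (medge M v).erase v, w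

lemma erase_medge (M : PMatching n) (v : ZMod (2 * n)) :
    (medge M v).erase v = {mpt M v} := by
  have hcard : ((medge M v).erase v).card = 1 := by
    rw [Finset.card_erase_of_mem (mem_medge M v), M.2.1 _ (medge_mem M v)]
  obtain ⟨w, hw⟩ := Finset.card_eq_one.1 hcard
  rw [hw]
  congr 1
  rw [mpt, hw, Finset.sum_singleton]

lemma mpt_ne (M : PMatching n) (v : ZMod (2 * n)) : mpt M v ≠ v := by
  have : mpt M v ∈ (medge M v).erase v := by rw [erase_medge]; exact Finset.mem_singleton_self _
  exact (Finset.mem_erase.1 this).1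

lemma mpt_mem (M : PMatching n) (v : ZMod (2 * n)) : mpt M v ∈ medge M v := by
  have : mpt M v ∈ (medge M v).erase v := by rw [erase_medge]; exact Finset.mem_singleton_self _
  exact (Finset.mem_erase.1 this).2

lemma medge_eq_pair (M : PMatching n) (v : ZMod (2 * n)) :
    medge M v = {v, mpt M v} := by
  have h := Finset.insert_erase (mem_medge M v)
  rw [erase_medge] at h
  rw [← h]

lemma pair_erase {α : Type*} [DecidableEq α] {v w : α} (h : w ≠ v) :
    ({v, w} : Finset α).erase w = {v} := by
  rw [Finset.pair_comm, Finset.erase_insert (by simpa using h)]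

lemma mpt_mpt (M : PMatching n) (v : ZMod (2 * n)) : mpt M (mpt M v) = v := by
  have h1 : medge M (mpt M v) = medge M v := medge_eq M (medge_mem M v) (mpt_mem M v)
  have h2 := erase_medge M (mpt M v)
  rw [h1, medge_eq_pair M v, pair_erase (mpt_ne M v)] at h2
  exact (Finset.singleton_injective h2).symm

variable {a : ZMod (2 * n)}

lemma medge_add (M : PMatching n)
    (hMa : M.1.image (Finset.image (fun v => v + a)) = M.1) (v : ZMod (2 * n)) :
    medge M (v + a) = (medge M v).image (fun w => w + a) := by
  refine medge_eq M ?_ ?_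
  · rw [← hMa]
    exact Finset.mem_image_of_mem _ (medge_mem M v)
  · exact Finset.mem_image_of_mem _ (mem_medge M v)

lemma mpt_add (M : PMatching n)
    (hMa : M.1.image (Finset.image (fun v => v + a)) = M.1) (v : ZMod (2 * n)) :
    mpt M (v + a) = mpt M v + a := by
  have h2 := erase_medge M (v + a)
  rw [medge_add M hMa v, medge_eq_pair M v, Finset.image_insert, Finset.image_singleton,
    Finset.erase_insert (by simpa using Ne.symm (mpt_ne M v))] at h2
  exact (Finset.singleton_injective h2).symm

lemma mpt_zsmul (M : PMatching n)
    (hMa : M.1.image (Finset.image (fun v => v + a)) = M.1) (v : ZMod (2 * n)) (t : ℤ) :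
    mpt M (v + t • a) = mpt M v + t • a := by
  induction t using Int.induction_on with
  | zero => simp
  | succ k ih =>
    have : v + ((k : ℤ) + 1) • a = (v + (k : ℤ) • a) + a := by
      rw [add_smul, one_smul, add_assoc]
    rw [this, mpt_add M hMa, ih, add_smul, one_smul, add_assoc]
  | pred k ih =>
    have : v + (-(k : ℤ) - 1) • a + a = v + (-(k : ℤ)) • a := by
      rw [sub_smul, one_smul]; ring
    have h := mpt_add M hMa (v + (-(k : ℤ) - 1) • a)
    rw [this, ih] at h
    have : mpt M v + (-(k : ℤ)) • a - a = mpt M v + (-(k : ℤ) - 1) • a := by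
      rw [sub_smul, one_smul]; ring
    rw [← this, h]
    ring

end Matching


section NT
variable {n i : ℕ}

lemma i_dvd_n (hi : Odd i) (hd : i ∣ 2 * n) : i ∣ n :=
  (Nat.coprime_two_right.2 hi).dvd_of_dvd_mul_left hd

lemma hsi (hi : Odd i) (hd : i ∣ 2 * n) : 2 * (n / i) * i = 2 * n := by
  rw [mul_assoc, Nat.div_mul_cancel (i_dvd_n hi hd)]

variable (hn : 0 < n) (hi : Odd i) (hd : i ∣ 2 * n)

lemma hs_dvd (hi : Odd i) (hd : i ∣ 2 * n) : 2 * (n / i) ∣ 2 * n :=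
  ⟨i, (hsi hi hd).symm⟩

variable {a : ZMod (2 * n)} (ha : addOrderOf a = i)

lemma aval_dvd (hn : 0 < n) (hi : Odd i) (hd : i ∣ 2 * n) (ha : addOrderOf a = i) :
    2 * (n / i) ∣ a.val := by
  haveI : NeZero (2 * n) := ⟨by omega⟩
  have h1 : i • a = 0 := by rw [← ha]; exact addOrderOf_nsmul_eq_zero a
  have h2 : ((i * a.val : ℕ) : ZMod (2 * n)) = 0 := by
    push_cast
    rw [ZMod.natCast_val, ZMod.cast_id]
    rw [← nsmul_eq_mul]
    exact h1
  have h3 : 2 * n ∣ i * a.val := (ZMod.natCast_eq_zero_iff _ _).1 h2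
  have hi0 : 0 < i := hi.pos
  have h4 : i * (2 * (n / i)) ∣ i * a.val := by
    rw [mul_comm i, hsi hi hd]
    exact h3
  exact (mul_dvd_mul_iff_left (by omega : i ≠ 0)).1 h4

lemma qa0 (hn : 0 < n) (hi : Odd i) (hd : i ∣ 2 * n) (ha : addOrderOf a = i) :
    ZMod.castHom (hs_dvd hi hd) (ZMod (2 * (n / i))) a = 0 := by
  haveI : NeZero (2 * n) := ⟨by omega⟩
  have hv : a = ((a.val : ℕ) : ZMod (2 * n)) := by rw [ZMod.natCast_val, ZMod.cast_id]
  rw [hv, map_natCast]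
  exact (ZMod.natCast_eq_zero_iff _ _).2 (aval_dvd hn hi hd ha)

lemma zmult_eq (hn : 0 < n) (hi : Odd i) (hd : i ∣ 2 * n) (ha : addOrderOf a = i) :
    AddSubgroup.zmultiples a
      = AddSubgroup.zmultiples ((2 * (n / i) : ℕ) : ZMod (2 * n)) := by
  haveI : NeZero (2 * n) := ⟨by omega⟩
  have hm0 : 0 < n / i := Nat.div_pos (Nat.le_of_dvd hn (i_dvd_n hi hd)) hi.pos
  have hle : AddSubgroup.zmultiples a
      ≤ AddSubgroup.zmultiples ((2 * (n / i) : ℕ) : ZMod (2 * n)) := by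
    rw [AddSubgroup.zmultiples_le]
    obtain ⟨u, hu⟩ := aval_dvd hn hi hd ha
    have hv : a = ((a.val : ℕ) : ZMod (2 * n)) := by rw [ZMod.natCast_val, ZMod.cast_id]
    refine ⟨(u : ℤ), ?_⟩
    rw [hv, hu]
    simp only [zsmul_eq_mul]
    push_cast
    ring
  have hcards : Nat.card (AddSubgroup.zmultiples ((2 * (n / i) : ℕ) : ZMod (2 * n)))
      = Nat.card (AddSubgroup.zmultiples a) := by
    rw [Nat.card_zmultiples, Nat.card_zmultiples, ha, ZMod.addOrderOf_coe _ (by omega : 2 * n ≠ 0)]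
    rw [Nat.gcd_eq_right (hs_dvd hi hd)]
    have h0 := hsi hi hd
    have h2m : 0 < 2 * (n / i) := by omega
    rw [← h0, Nat.mul_div_cancel_left i h2m]
  exact (AddSubgroup.eq_of_le_of_card_ge hle (le_of_eq hcards))

lemma ker_mem (hn : 0 < n) (hi : Odd i) (hd : i ∣ 2 * n) (ha : addOrderOf a = i)
    (d : ZMod (2 * n)) (hq : ZMod.castHom (hs_dvd hi hd) (ZMod (2 * (n / i))) d = 0) :
    d ∈ AddSubgroup.zmultiples a := by
  haveI : NeZero (2 * n) := ⟨by omega⟩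
  rw [zmult_eq hn hi hd ha]
  have hv : d = ((d.val : ℕ) : ZMod (2 * n)) := by rw [ZMod.natCast_val, ZMod.cast_id]
  rw [hv, map_natCast] at hq
  have hdvd : 2 * (n / i) ∣ d.val := (ZMod.natCast_eq_zero_iff _ _).1 hq
  obtain ⟨u, hu⟩ := hdvd
  refine ⟨(u : ℤ), ?_⟩
  rw [hv, hu]
  simp only [zsmul_eq_mul]
  push_cast
  ring

end NT

section Main
variable {n i : ℕ} {a : ZMod (2 * n)}
variable (hi : Odd i) (hd : i ∣ 2 * n)

lemma mpt_constancy (hn : 0 < n) (ha : addOrderOf a = i) (M : PMatching n)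
    (hMa : M.1.image (Finset.image (fun v => v + a)) = M.1) {x y : ZMod (2 * n)}
    (hxy : ZMod.castHom (hs_dvd hi hd) (ZMod (2 * (n / i))) x
        = ZMod.castHom (hs_dvd hi hd) (ZMod (2 * (n / i))) y) :
    mpt M y - y = mpt M x - x := by
  have hd0 : ZMod.castHom (hs_dvd hi hd) (ZMod (2 * (n / i))) (y - x) = 0 := by
    rw [map_sub, hxy, sub_self]
  have hmem := ker_mem hn hi hd ha _ hd0
  rw [AddSubgroup.mem_zmultiples_iff] at hmem
  obtain ⟨t, ht⟩ := hmem
  have hy : y = x + t • a := by rw [ht]; ring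
  rw [hy, mpt_zsmul M hMa x t]
  ring

lemma mpt_q_ne (hn : 0 < n) (ha : addOrderOf a = i) (M : PMatching n)
    (hMa : M.1.image (Finset.image (fun v => v + a)) = M.1) (x : ZMod (2 * n)) :
    ZMod.castHom (hs_dvd hi hd) (ZMod (2 * (n / i))) (mpt M x - x) ≠ 0 := by
  intro h0
  have hmem := ker_mem hn hi hd ha _ h0
  rw [AddSubgroup.mem_zmultiples_iff] at hmem
  obtain ⟨t, ht⟩ := hmem
  have h1 : mpt M x = x + t • a := by rw [ht]; ring
  have h2 := mpt_zsmul M hMa x t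
  rw [← h1, mpt_mpt] at h2
  -- h2 : x = mpt M x + t • a
  have h3 : (2 * t) • a = 0 := by
    have : x = x + (2 * t) • a := by
      conv_lhs => rw [h2, h1]
      rw [mul_smul]
      abel
    exact (left_eq_add.1 this)
  have h4 : ((i : ℕ) : ℤ) ∣ 2 * t := by
    rw [← ha]
    exact addOrderOf_dvd_iff_zsmul_eq_zero.2 h3
  have hco : IsCoprime ((i : ℕ) : ℤ) (2 : ℤ) := by
    have := Nat.isCoprime_iff_coprime.2 (Nat.coprime_two_right.2 hi)
    exact_mod_cast this
  have h5 : ((i : ℕ) : ℤ) ∣ t := hco.dvd_of_dvd_mul_left h4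
  obtain ⟨u, hu⟩ := h5
  have h6 : t • a = 0 := by
    have hia : i • a = 0 := by rw [← ha]; exact addOrderOf_nsmul_eq_zero a
    have hcomm : (((i : ℕ) : ℤ) * u) • a = u • (((i : ℕ) : ℤ) • a) := by
      rw [mul_comm ((i : ℕ) : ℤ) u, mul_smul]
    rw [hu, hcomm, natCast_zsmul, hia, smul_zero]
  rw [h6] at ht
  exact mpt_ne M x (by rw [← sub_eq_zero]; exact ht.symm)
end Main

section Main2
variable {n i : ℕ} {a : ZMod (2 * n)}

abbrev QQ (hi : Odd i) (hd : i ∣ 2 * n) : ZMod (2 * n) →+* ZMod (2 * (n / i)) :=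
  ZMod.castHom (hs_dvd hi hd) (ZMod (2 * (n / i)))

variable (hi : Odd i) (hd : i ∣ 2 * n) [NeZero (2 * n)] [NeZero (2 * (n / i))]

lemma QQ_rep (c : ZMod (2 * (n / i))) : QQ hi hd ((c.val : ℕ) : ZMod (2 * n)) = c :=
  q_natCast_val _ c

def mg (g : ZMod (2 * (n / i)) → ZMod (2 * n)) : Finset (Finset (ZMod (2 * n))) :=
  Finset.image (fun x => ({x, x + g (QQ hi hd x)} : Finset _)) Finset.univ

lemma g_ne_zero (g : DD (hs_dvd hi hd) Finset.univ) (c : ZMod (2 * (n / i))) :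
    g.1 c ≠ 0 := fun h => (g.2.1 c (Finset.mem_univ c)).1 (by rw [h, map_zero])

lemma mg_card2 (g : DD (hs_dvd hi hd) Finset.univ) : ∀ e ∈ mg hi hd g.1, e.card = 2 := by
  intro e he
  obtain ⟨x, -, hx⟩ := Finset.mem_image.1 he
  rw [← hx]
  refine Finset.card_pair ?_
  intro h
  exact g_ne_zero hi hd g _ (left_eq_add.1 h)

lemma mg_unique (g : DD (hs_dvd hi hd) Finset.univ) (v : ZMod (2 * n))
    (e : Finset (ZMod (2 * n))) (he : e ∈ mg hi hd g.1) (hv : v ∈ e) :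
    e = {v, v + g.1 (QQ hi hd v)} := by
  obtain ⟨x, -, hx⟩ := Finset.mem_image.1 he
  subst hx
  rcases Finset.mem_insert.1 hv with h | h
  · subst h; rfl
  · rw [Finset.mem_singleton] at h
    subst h
    have hkey := (g.2.1 (QQ hi hd x) (Finset.mem_univ _)).2.2
    have hqv : QQ hi hd (x + g.1 (QQ hi hd x))
        = QQ hi hd x + QQ hi hd (g.1 (QQ hi hd x)) := map_add _ _ _
    rw [hqv, hkey]
    ext w
    simp only [Finset.mem_insert, Finset.mem_singleton]
    constructor
    · rintro (rfl | rfl)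
      · right; ring
      · left; rfl
    · rintro (rfl | rfl)
      · right; rfl
      · left; ring

lemma mg_exu (g : DD (hs_dvd hi hd) Finset.univ) (v : ZMod (2 * n)) :
    ∃! e, e ∈ mg hi hd g.1 ∧ v ∈ e := by
  refine ⟨{v, v + g.1 (QQ hi hd v)}, ⟨Finset.mem_image_of_mem _ (Finset.mem_univ v),
    Finset.mem_insert_self _ _⟩, ?_⟩
  rintro e ⟨he, hve⟩
  exact mg_unique hi hd g v e he hve

def mgM (g : DD (hs_dvd hi hd) Finset.univ) : PMatching n :=
  ⟨mg hi hd g.1, mg_card2 hi hd g, mg_exu hi hd g⟩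

lemma mg_fixed (hn : 0 < n) (ha : addOrderOf a = i) (g : DD (hs_dvd hi hd) Finset.univ) :
    (mgM hi hd g).1.image (Finset.image (fun v => v + a)) = (mgM hi hd g).1 := by
  have hqa : QQ hi hd a = 0 := qa0 hn hi hd ha
  have hTE : ∀ x : ZMod (2 * n),
      ({x, x + g.1 (QQ hi hd x)} : Finset _).image (fun v => v + a)
        = {x + a, (x + a) + g.1 (QQ hi hd (x + a))} := by
    intro x
    rw [Finset.image_insert, Finset.image_singleton]
    have : QQ hi hd (x + a) = QQ hi hd x := by rw [map_add, hqa, add_zero]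
    rw [this]
    congr 1
    rw [Finset.singleton_inj]
    ring
  apply Finset.Subset.antisymm
  · intro e he
    obtain ⟨e', he', rfl⟩ := Finset.mem_image.1 he
    obtain ⟨x, -, rfl⟩ := Finset.mem_image.1 he'
    rw [hTE x]
    exact Finset.mem_image_of_mem _ (Finset.mem_univ _)
  · intro e he
    obtain ⟨x, -, rfl⟩ := Finset.mem_image.1 he
    rw [Finset.mem_image]
    refine ⟨{x - a, (x - a) + g.1 (QQ hi hd (x - a))}, Finset.mem_image_of_mem _ (Finset.mem_univ _), ?_⟩
    rw [hTE (x - a)]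
    have h1 : x - a + a = x := by ring
    rw [h1]

lemma mpt_mg (g : DD (hs_dvd hi hd) Finset.univ) (x : ZMod (2 * n)) :
    mpt (mgM hi hd g) x = x + g.1 (QQ hi hd x) := by
  have hedge : medge (mgM hi hd g) x = {x, x + g.1 (QQ hi hd x)} :=
    mg_unique hi hd g x _ (medge_mem _ x) (mem_medge _ x)
  have h2 := erase_medge (mgM hi hd g) x
  rw [hedge, Finset.erase_insert (by
    rw [Finset.mem_singleton]
    intro h
    exact g_ne_zero hi hd g _ (left_eq_add.1 h))] at h2
  exact (Finset.singleton_injective h2).symm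

def gOf (M : PMatching n) (c : ZMod (2 * (n / i))) : ZMod (2 * n) :=
  mpt M ((c.val : ℕ) : ZMod (2 * n)) - ((c.val : ℕ) : ZMod (2 * n))

lemma gOf_eq (hn : 0 < n) (ha : addOrderOf a = i) (M : PMatching n)
    (hMa : M.1.image (Finset.image (fun v => v + a)) = M.1) (x : ZMod (2 * n)) :
    gOf M (QQ hi hd x) = mpt M x - x :=
  mpt_constancy hi hd hn ha M hMa (QQ_rep hi hd (QQ hi hd x)).symm

def mainEquiv (hn : 0 < n) (ha : addOrderOf a = i) :
    {M : PMatching n // M.1.image (Finset.image (fun v => v + a)) = M.1}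
      ≃ DD (hs_dvd hi hd) (Finset.univ : Finset (ZMod (2 * (n / i)))) where
  toFun M :=
    ⟨gOf M.1, by
      constructor
      · intro c _
        set x : ZMod (2 * n) := ((c.val : ℕ) : ZMod (2 * n)) with hxdef
        have hqx : QQ hi hd x = c := QQ_rep hi hd c
        have hgc : gOf M.1 c = mpt M.1 x - x := rfl
        refine ⟨?_, Finset.mem_univ _, ?_⟩
        · rw [hgc]
          exact mpt_q_ne hi hd hn ha M.1 M.2 x
        · have hc2 : c + QQ hi hd (gOf M.1 c)
              = QQ hi hd (mpt M.1 x) := by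
            rw [hgc, map_sub, hqx]; ring
          rw [hc2, gOf_eq hi hd hn ha M.1 M.2 (mpt M.1 x), mpt_mpt, hgc]
          ring
      · intro c hc
        exact absurd (Finset.mem_univ c) hc⟩
  invFun g := ⟨mgM hi hd g, mg_fixed hi hd hn ha g⟩
  left_inv := by
    rintro ⟨M, hMa⟩
    apply Subtype.ext
    apply Subtype.ext
    simp only [mgM, mg]
    apply Finset.Subset.antisymm
    · intro e he
      obtain ⟨x, -, rfl⟩ := Finset.mem_image.1 he
      rw [gOf_eq hi hd hn ha M hMa x]
      have h1 : x + (mpt M x - x) = mpt M x := by ring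
      rw [h1, ← medge_eq_pair]
      exact medge_mem M x
    · intro e he
      have hne : e.Nonempty := by
        rw [← Finset.card_pos, M.2.1 e he]; omega
      obtain ⟨v, hv⟩ := hne
      have hedge : medge M v = e := medge_eq M he hv
      rw [Finset.mem_image]
      refine ⟨v, Finset.mem_univ v, ?_⟩
      rw [gOf_eq hi hd hn ha M hMa v]
      have h1 : v + (mpt M v - v) = mpt M v := by ring
      rw [h1, ← medge_eq_pair, hedge]
  right_inv := by
    intro g
    apply Subtype.ext
    funext c
    show gOf (mgM hi hd g) c = g.1 c
    have h1 : gOf (mgM hi hd g) c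
        = mpt (mgM hi hd g) ((c.val : ℕ) : ZMod (2 * n)) - ((c.val : ℕ) : ZMod (2 * n)) := rfl
    rw [h1, mpt_mg hi hd g, QQ_rep hi hd c]
    ring
end Main2

/-- For odd `i` dividing `2n`, the number of perfect matchings of `K_{2n}` fixed by a
rotation of order `i` equals `i^{n/i} · (2n/i − 1)!!`. -/
theorem card_fixed_matchings_odd (n i : ℕ) (hn : 0 < n) (hi : Odd i) (hd : i ∣ 2 * n)
    (a : ZMod (2 * n)) (ha : addOrderOf a = i) :
    Nat.card {M : PMatching n // M.1.image (Finset.image (fun v => v + a)) = M.1} =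
      i ^ (n / i) * ∏ j ∈ Finset.range (n / i), (2 * j + 1) := by
  haveI : NeZero (2 * n) := ⟨by omega⟩
  have hm0 : 0 < n / i := Nat.div_pos (Nat.le_of_dvd hn (i_dvd_n hi hd)) hi.pos
  haveI : NeZero (2 * (n / i)) := ⟨by omega⟩
  rw [Nat.card_congr (mainEquiv hi hd hn ha)]
  rw [card_DD (hs_dvd hi hd) (n / i) Finset.univ
    (by rw [Finset.card_univ, ZMod.card])]
  congr 2
  rw [← hsi hi hd, Nat.mul_div_cancel_left i (by omega : 0 < 2 * (n / i))]
end

section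
/- For even i dividing 2n, the number of perfect matchings of K_{2n} (vertex set Z/2n) fixed by a rotation of order i equals Σ_{k=0}^{⌊n/i⌋} C(2n/i, 2k) · i^k · (2k−1)!!. -/
open Nat Finset

def pim (N m : ℕ) (x : ZMod N) : ZMod m := (x.val : ZMod m)

section Ker
set_option linter.unusedSectionVars false
variable {N i m : ℕ} [NeZero N] [NeZero m] (him : i * m = N) (a : ZMod N)
  (ha : addOrderOf a = i)

lemma pim_eq_cast (hmn : m ∣ N) (x : ZMod N) : pim N m x = ZMod.castHom hmn (ZMod m) x := by
  rw [pim, ZMod.natCast_val, ZMod.castHom_apply]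

include him

lemma hmdvd : m ∣ N := Dvd.intro_left i him

lemma ipos : 0 < i := by
  rcases Nat.eq_zero_or_pos i with h | h
  · subst h; simp at him; exact absurd him.symm (NeZero.ne N)
  · exact h

lemma pim_add (x y : ZMod N) : pim N m (x + y) = pim N m x + pim N m y := by
  rw [pim_eq_cast (hmdvd him), pim_eq_cast (hmdvd him), pim_eq_cast (hmdvd him), map_add]

lemma pim_zero : pim N m (0 : ZMod N) = 0 := by
  rw [pim_eq_cast (hmdvd him), map_zero]

lemma pim_neg (x : ZMod N) : pim N m (-x) = - pim N m x := by
  rw [pim_eq_cast (hmdvd him), pim_eq_cast (hmdvd him), map_neg]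

lemma pim_sub (x y : ZMod N) : pim N m (x - y) = pim N m x - pim N m y := by
  rw [pim_eq_cast (hmdvd him), pim_eq_cast (hmdvd him), pim_eq_cast (hmdvd him), map_sub]

lemma pim_nsmul (j : ℕ) (x : ZMod N) : pim N m (j • x) = j • pim N m x := by
  rw [pim_eq_cast (hmdvd him), pim_eq_cast (hmdvd him)]; exact map_nsmul _ _ _

lemma pim_natCast (k : ℕ) : pim N m ((k : ℕ) : ZMod N) = (k : ZMod m) := by
  rw [pim_eq_cast (hmdvd him), map_natCast]

lemma pim_L (q : ZMod m) : pim N m ((q.val : ℕ) : ZMod N) = q := by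
  rw [pim_natCast him, ZMod.natCast_rightInverse q]

include ha

lemma pim_a : pim N m a = 0 := by
  have h1 : i • a = 0 := by rw [← ha]; exact addOrderOf_nsmul_eq_zero a
  have h2 : ((i * a.val : ℕ) : ZMod N) = 0 := by
    push_cast
    rw [ZMod.natCast_rightInverse a, ← nsmul_eq_mul]
    exact h1
  have h3 : N ∣ i * a.val := (ZMod.natCast_eq_zero_iff _ _).1 h2
  have h4 : m ∣ a.val := by
    have h3' : i * m ∣ i * a.val := by rw [him]; exact h3
    exact (mul_dvd_mul_iff_left (by have := ipos him; omega : i ≠ 0)).1 h3'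
  rw [pim]
  exact (ZMod.natCast_eq_zero_iff _ _).2 h4

omit ha in
lemma pim_fiber_card (t : ZMod m) :
    (univ.filter fun x : ZMod N => pim N m x = t).card = i := by
  have key : ∀ t : ZMod m,
      (univ.filter fun x : ZMod N => pim N m x = t).card
      = (univ.filter fun x : ZMod N => pim N m x = 0).card := by
    intro t
    apply Finset.card_bij' (fun x _ => x - ((t.val : ℕ) : ZMod N))
      (fun x _ => x + ((t.val : ℕ) : ZMod N))
    · intro x hx
      simp only [mem_filter, mem_univ, true_and] at hx ⊢
      rw [pim_sub him, hx, pim_L him, sub_self]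
    · intro x hx
      simp only [mem_filter, mem_univ, true_and] at hx ⊢
      rw [pim_add him, hx, pim_L him, zero_add]
    · intro x _; ring
    · intro x _; ring
  have hsum : Fintype.card (ZMod N) =
      ∑ t : ZMod m, (univ.filter fun x : ZMod N => pim N m x = t).card := by
    rw [← Finset.card_univ]
    exact Finset.card_eq_sum_card_fiberwise (fun x _ => mem_univ _)
  rw [key t]
  have : ∀ t ∈ (univ : Finset (ZMod m)),
      (univ.filter fun x : ZMod N => pim N m x = t).card
      = (univ.filter fun x : ZMod N => pim N m x = 0).card := fun t _ => key t
  rw [Finset.sum_congr rfl this, Finset.sum_const, smul_eq_mul] at hsum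
  rw [ZMod.card, Finset.card_univ, ZMod.card] at hsum
  have hm : 0 < m := Nat.pos_of_ne_zero (NeZero.ne m)
  nlinarith [hsum, him]

include ha in
lemma pim_ker (x : ZMod N) : pim N m x = 0 ↔ ∃ j, j < i ∧ x = j • a := by
  constructor
  · intro hx
    have hT : ((range i).image (· • a) : Finset (ZMod N))
        ⊆ univ.filter fun x : ZMod N => pim N m x = 0 := by
      intro y hy
      simp only [mem_image, mem_range] at hy
      obtain ⟨j, _, rfl⟩ := hy
      simp only [mem_filter, mem_univ, true_and]
      rw [pim_nsmul him, pim_a him a ha, smul_zero]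
    have key : ∀ p q : ℕ, p < i → q < i → p • a = q • a → p ≤ q → p = q := by
      intro p q hp hq hpq hle
      by_contra hne
      have h1 : (p + (q - p)) • a = p • a + (q - p) • a := add_nsmul a p (q - p)
      rw [Nat.add_sub_cancel' hle, ← hpq] at h1
      have h2 : (q - p) • a = 0 := by
        nth_rewrite 1 [← add_zero (p • a)] at h1
        exact (add_left_cancel h1).symm
      have := addOrderOf_le_of_nsmul_eq_zero (by omega : 0 < q - p) h2
      omega
    have hinj : Set.InjOn (· • a) ((range i : Finset ℕ) : Set ℕ) := by
      intro j hj k hk hjk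
      simp only [coe_range, Set.mem_Iio] at hj hk
      have hjk' : j • a = k • a := hjk
      rcases le_total j k with h | h
      · exact key j k hj hk hjk' h
      · exact (key k j hk hj hjk'.symm h).symm
    have hcardT : ((range i).image (· • a) : Finset (ZMod N)).card = i := by
      rw [Finset.card_image_of_injOn hinj, card_range]
    have hEq : ((range i).image (· • a) : Finset (ZMod N))
        = univ.filter fun x : ZMod N => pim N m x = 0 :=
      Finset.eq_of_subset_of_card_le hT (by rw [hcardT, pim_fiber_card him])
    have hxmem : x ∈ ((range i).image (· • a) : Finset (ZMod N)) := by
      rw [hEq]; simp [hx]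
    simp only [mem_image, mem_range] at hxmem
    obtain ⟨j, hj, hjx⟩ := hxmem
    exact ⟨j, hj, hjx.symm⟩
  · rintro ⟨j, _, rfl⟩
    rw [pim_nsmul him, pim_a him a ha, smul_zero]

include ha in
lemma half_uniq (hi : Even i) (x : ZMod N) :
    (pim N m x = 0 ∧ x + x = 0 ∧ x ≠ 0) ↔ x = (i / 2) • a := by
  obtain ⟨r, hr⟩ := hi
  have hipos := ipos him
  have hr2 : i / 2 = r := by omega
  constructor
  · rintro ⟨h0, h2, hne⟩
    obtain ⟨j, hj, rfl⟩ := (pim_ker him a ha x).1 h0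
    have hjne : j ≠ 0 := by rintro rfl; simp at hne
    have : (j + j) • a = 0 := by rw [add_nsmul, h2]
    have hdvd : i ∣ j + j := by
      rw [← ha]; exact addOrderOf_dvd_iff_nsmul_eq_zero.2 this
    have : j + j = i := by
      rcases hdvd with ⟨c, hc⟩
      rcases Nat.lt_or_ge c 2 with h | h
      · interval_cases c <;> omega
      · nlinarith
    have : j = i / 2 := by omega
    rw [this]
  · rintro rfl
    refine ⟨?_, ?_, ?_⟩
    · rw [pim_nsmul him, pim_a him a ha, smul_zero]
    · rw [← add_nsmul]
      have : i / 2 + i / 2 = i := by omega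
      rw [this, ← ha]; exact addOrderOf_nsmul_eq_zero a
    · intro h
      have := addOrderOf_le_of_nsmul_eq_zero (by omega : 0 < i / 2) h
      omega

end Ker



def Rr (i s : ℕ) : ℕ :=
  ∑ k ∈ Finset.range (s / 2 + 1), s.choose (2 * k) * i ^ k * ∏ j ∈ Finset.range k, (2 * j + 1)

lemma Rr_zero (i : ℕ) : Rr i 0 = 1 := by simp [Rr]

lemma Rr_one (i : ℕ) : Rr i 1 = 1 := by simp [Rr]

lemma Rr_rec (i s : ℕ) : Rr i (s + 2) = Rr i (s + 1) + (s + 1) * (i * Rr i s) := by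
  have hA : Rr i (s + 2) =
      (∑ k ∈ Finset.range (s / 2 + 1),
        (s + 1).choose (2 * (k + 1)) * i ^ (k + 1) * ∏ j ∈ Finset.range (k + 1), (2 * j + 1))
      + 1
      + ∑ k ∈ Finset.range (s / 2 + 1),
          (s + 1) * (i * (s.choose (2 * k) * i ^ k * ∏ j ∈ Finset.range k, (2 * j + 1))) := by
    have hrange : (s + 2) / 2 + 1 = (s / 2 + 1) + 1 := by omega
    rw [Rr, hrange, Finset.sum_range_succ']
    simp only [Nat.mul_zero, Nat.choose_zero_right, pow_zero, Finset.range_zero,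
      Finset.prod_empty, mul_one, one_mul]
    rw [add_right_comm, ← Finset.sum_add_distrib]
    congr 1
    apply Finset.sum_congr rfl
    intro k _
    have e : 2 * (k + 1) = 2 * k + 1 + 1 := by ring
    have h1 : (s + 2).choose (2 * (k + 1))
        = (s + 1).choose (2 * k + 1) + (s + 1).choose (2 * (k + 1)) := by
      rw [e]; exact Nat.choose_succ_succ (s + 1) (2 * k + 1)
    have h2 : (s + 1).choose (2 * k + 1) * (2 * k + 1) = (s + 1) * s.choose (2 * k) :=
      (Nat.add_one_mul_choose_eq s (2 * k)).symm
    rw [h1, Finset.prod_range_succ]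
    have expand : ((s + 1).choose (2 * k + 1) + (s + 1).choose (2 * (k + 1))) * i ^ (k + 1) *
        ((∏ j ∈ Finset.range k, (2 * j + 1)) * (2 * k + 1))
        = (s + 1).choose (2 * (k + 1)) * i ^ (k + 1) *
            ((∏ j ∈ Finset.range k, (2 * j + 1)) * (2 * k + 1))
          + ((s + 1).choose (2 * k + 1) * (2 * k + 1)) * i ^ (k + 1) *
            (∏ j ∈ Finset.range k, (2 * j + 1)) := by ring
    rw [expand, h2]
    ring
  rw [hA]
  have hB : (∑ k ∈ Finset.range (s / 2 + 1),
        (s + 1).choose (2 * (k + 1)) * i ^ (k + 1) * ∏ j ∈ Finset.range (k + 1), (2 * j + 1))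
      + 1 = Rr i (s + 1) := by
    have h0 : (∑ k ∈ Finset.range (s / 2 + 1),
        (s + 1).choose (2 * (k + 1)) * i ^ (k + 1) * ∏ j ∈ Finset.range (k + 1), (2 * j + 1)) + 1
        = ∑ k ∈ Finset.range (s / 2 + 1 + 1),
            (s + 1).choose (2 * k) * i ^ k * ∏ j ∈ Finset.range k, (2 * j + 1) := by
      conv_rhs => rw [Finset.sum_range_succ']
      simp
    rw [h0, Rr]
    apply (Finset.sum_subset ?_ ?_).symm
    · intro k hk
      simp only [Finset.mem_range] at hk ⊢
      omega
    · intro k _ hk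
      simp only [Finset.mem_range, not_lt] at hk
      have : s + 1 < 2 * k := by omega
      rw [Nat.choose_eq_zero_of_lt this]
      simp
  rw [hB, ← Finset.mul_sum, ← Finset.mul_sum]
  rfl

def Pg (N m : ℕ) (S : Finset (ZMod m)) (g : ZMod m → ZMod N) : Prop :=
  (∀ q ∈ S, q + pim N m (g q) ∈ S) ∧ (∀ q ∈ S, g (q + pim N m (g q)) = - g q) ∧
  (∀ q ∈ S, g q ≠ 0) ∧ (∀ q, q ∉ S → g q = 0)

lemma Pg_iff {N m : ℕ} {S : Finset (ZMod m)} {g : ZMod m → ZMod N} :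
    Pg N m S g ↔ (∀ q ∈ S, q + pim N m (g q) ∈ S) ∧ (∀ q ∈ S, g (q + pim N m (g q)) = - g q) ∧
      (∀ q ∈ S, g q ≠ 0) ∧ (∀ q, q ∉ S → g q = 0) := Iff.rfl

section Count
set_option linter.unusedSectionVars false
variable {N i m : ℕ} [NeZero N] [NeZero m] (him : i * m = N) (a : ZMod N)
  (ha : addOrderOf a = i) (hi : Even i)

include him

lemma Pg_invol {S : Finset (ZMod m)} {g : ZMod m → ZMod N} (h : Pg N m S g) {q : ZMod m}
    (hq : q ∈ S) : (q + pim N m (g q)) + pim N m (g (q + pim N m (g q))) = q := by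
  rw [h.2.1 q hq, pim_neg him]
  ring

include ha hi

lemma G_count : ∀ s : ℕ, ∀ S : Finset (ZMod m), S.card = s →
    Nat.card {g : ZMod m → ZMod N // Pg N m S g} = Rr i s := by
  intro s
  induction s using Nat.strong_induction_on with
  | _ s IH =>
  intro S hS
  classical
  have hconv : ∀ S' : Finset (ZMod m),
      Nat.card {g : ZMod m → ZMod N // Pg N m S' g} = (univ.filter (Pg N m S')).card := by
    intro S'
    rw [Nat.card_eq_fintype_card, Fintype.card_subtype]
  rw [hconv]
  rcases Finset.eq_empty_or_nonempty S with rfl | ⟨q0, hq0⟩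
  · -- empty case
    have hflt : (univ.filter (Pg N m (∅ : Finset (ZMod m)))) = {fun _ => (0 : ZMod N)} := by
      ext g
      simp only [mem_filter, mem_univ, true_and, mem_singleton]
      constructor
      · intro h
        funext q
        exact h.2.2.2 q (Finset.notMem_empty q)
      · rintro rfl
        exact ⟨fun q hq => absurd hq (Finset.notMem_empty q),
          fun q hq => absurd hq (Finset.notMem_empty q),
          fun q hq => absurd hq (Finset.notMem_empty q), fun q _ => rfl⟩
    rw [hflt]
    simp only [Finset.card_empty] at hS
    rw [Finset.card_singleton, ← hS, Rr_zero]
  · -- main case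
    have hs1 : 0 < s := by
      rw [← hS]
      exact Finset.card_pos.2 ⟨q0, hq0⟩
    obtain ⟨a0, ha0, huniq⟩ : ∃ a0 : ZMod N, (pim N m a0 = 0 ∧ a0 + a0 = 0 ∧ a0 ≠ 0) ∧
        (∀ x : ZMod N, (pim N m x = 0 ∧ x + x = 0 ∧ x ≠ 0) → x = a0) :=
      ⟨(i / 2) • a, (half_uniq him a ha hi _).2 rfl,
        fun x hx => (half_uniq him a ha hi x).1 hx⟩
    have ha0neg : -a0 = a0 := neg_eq_of_add_eq_zero_left ha0.2.1
    -- fiberwise decomposition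
    have hfib : (univ.filter (Pg N m S)).card
        = ∑ q ∈ S, ((univ.filter (Pg N m S)).filter fun g => q0 + pim N m (g q0) = q).card := by
      apply Finset.card_eq_sum_card_fiberwise
      intro g hg
      simp only [Finset.mem_coe, mem_filter, mem_univ, true_and] at hg
      exact hg.1 q0 hq0
    have hsplit : ∑ q ∈ S, ((univ.filter (Pg N m S)).filter fun g => q0 + pim N m (g q0) = q).card
        = ((univ.filter (Pg N m S)).filter fun g => q0 + pim N m (g q0) = q0).card
          + ∑ q ∈ S.erase q0,
              ((univ.filter (Pg N m S)).filter fun g => q0 + pim N m (g q0) = q).card :=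
      (Finset.add_sum_erase S _ hq0).symm
    -- self fiber
    have hself : ((univ.filter (Pg N m S)).filter fun g => q0 + pim N m (g q0) = q0).card
        = (univ.filter (Pg N m (S.erase q0))).card := by
      refine Finset.card_bij' (fun g _ => Function.update g q0 0)
        (fun g _ => Function.update g q0 a0) ?_ ?_ ?_ ?_
      · -- down maps into target
        intro g hg
        simp only [mem_filter, mem_univ, true_and, Pg_iff] at hg ⊢
        obtain ⟨⟨h1, h2, h3, h4⟩, hkey⟩ := hg
        have F1 : ∀ q ∈ S, q ≠ q0 → q + pim N m (g q) ≠ q0 := by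
          intro q hq hqne hcon
          apply hqne
          have := Pg_invol him ⟨h1, h2, h3, h4⟩ hq
          rw [hcon] at this
          rw [← this, hkey]
        refine ⟨?_, ?_, ?_, ?_⟩
        · intro q hq
          have hqS := Finset.mem_of_mem_erase hq
          have hqne := Finset.ne_of_mem_erase hq
          rw [Function.update_of_ne hqne]
          exact Finset.mem_erase.2 ⟨F1 q hqS hqne, h1 q hqS⟩
        · intro q hq
          have hqS := Finset.mem_of_mem_erase hq
          have hqne := Finset.ne_of_mem_erase hq
          rw [Function.update_of_ne hqne, Function.update_of_ne (F1 q hqS hqne)]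
          exact h2 q hqS
        · intro q hq
          have hqS := Finset.mem_of_mem_erase hq
          have hqne := Finset.ne_of_mem_erase hq
          rw [Function.update_of_ne hqne]
          exact h3 q hqS
        · intro q hq
          by_cases hqq : q = q0
          · subst hqq; rw [Function.update_self]
          · rw [Function.update_of_ne hqq]
            exact h4 q (fun hqS => hq (Finset.mem_erase.2 ⟨hqq, hqS⟩))
      · -- up maps into source
        intro g hg
        simp only [mem_filter, mem_univ, true_and, Pg_iff] at hg ⊢
        obtain ⟨h1, h2, h3, h4⟩ := hg
        have hkey : q0 + pim N m (Function.update g q0 a0 q0) = q0 := by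
          rw [Function.update_self, ha0.1, add_zero]
        refine ⟨⟨?_, ?_, ?_, ?_⟩, hkey⟩
        · intro q hq
          by_cases hqq : q = q0
          · subst hqq; rw [Function.update_self, ha0.1, add_zero]; exact hq
          · rw [Function.update_of_ne hqq]
            exact Finset.mem_of_mem_erase (h1 q (Finset.mem_erase.2 ⟨hqq, hq⟩))
        · intro q hq
          by_cases hqq : q = q0
          · subst hqq
            rw [Function.update_self, ha0.1, add_zero, Function.update_self, ha0neg]
          · rw [Function.update_of_ne hqq]
            have hqe : q ∈ S.erase q0 := Finset.mem_erase.2 ⟨hqq, hq⟩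
            have hpne : q + pim N m (g q) ≠ q0 := Finset.ne_of_mem_erase (h1 q hqe)
            rw [Function.update_of_ne hpne]
            exact h2 q hqe
        · intro q hq
          by_cases hqq : q = q0
          · subst hqq; rw [Function.update_self]; exact ha0.2.2
          · rw [Function.update_of_ne hqq]
            exact h3 q (Finset.mem_erase.2 ⟨hqq, hq⟩)
        · intro q hq
          have hqq : q ≠ q0 := fun h => hq (h ▸ hq0)
          rw [Function.update_of_ne hqq]
          exact h4 q (fun hqe => hq (Finset.mem_of_mem_erase hqe))
      · -- left inverse
        intro g hg
        simp only [mem_filter, mem_univ, true_and, Pg_iff] at hg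
        obtain ⟨⟨h1, h2, h3, h4⟩, hkey⟩ := hg
        have hpg0 : pim N m (g q0) = 0 := by
          have := hkey
          rwa [add_eq_left] at this
        have hgg : g q0 + g q0 = 0 := by
          have h := h2 q0 hq0
          rw [hpg0, add_zero] at h
          nth_rewrite 2 [h]
          exact add_neg_cancel _
        have hga0 : g q0 = a0 := huniq _ ⟨hpg0, hgg, h3 q0 hq0⟩
        show Function.update (Function.update g q0 0) q0 a0 = g
        rw [Function.update_idem, ← hga0, Function.update_eq_self]
      · -- right inverse
        intro g hg
        simp only [mem_filter, mem_univ, true_and, Pg_iff] at hg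
        have hg0 : g q0 = 0 := hg.2.2.2 q0 (Finset.notMem_erase _ _)
        show Function.update (Function.update g q0 a0) q0 0 = g
        rw [Function.update_idem, ← hg0, Function.update_eq_self]
    -- cross fibers
    have hcross : ∀ q1 ∈ S.erase q0,
        ((univ.filter (Pg N m S)).filter fun g => q0 + pim N m (g q0) = q1).card
        = i * (univ.filter (Pg N m ((S.erase q0).erase q1))).card := by
      intro q1 hq1
      have hq1S : q1 ∈ S := Finset.mem_of_mem_erase hq1
      have hne10 : q1 ≠ q0 := Finset.ne_of_mem_erase hq1
      have hcard : ((univ.filter fun x : ZMod N => pim N m x = q1 - q0)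
          ×ˢ (univ.filter (Pg N m ((S.erase q0).erase q1)))).card
          = i * (univ.filter (Pg N m ((S.erase q0).erase q1))).card := by
        rw [Finset.card_product, pim_fiber_card him]
      rw [← hcard]
      refine Finset.card_bij'
        (fun g _ => (g q0, Function.update (Function.update g q0 0) q1 0))
        (fun p _ => Function.update (Function.update p.2 q0 p.1) q1 (-p.1)) ?_ ?_ ?_ ?_
      · -- down maps into target
        intro g hg
        simp only [mem_filter, mem_univ, true_and, Pg_iff] at hg
        obtain ⟨⟨h1, h2, h3, h4⟩, hkey⟩ := hg
        have hpim0 : pim N m (g q0) = q1 - q0 := by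
          rw [← hkey]; ring
        have hgq1 : g q1 = - g q0 := by
          have h := h2 q0 hq0
          rwa [hkey] at h
        have hpart1 : q1 + pim N m (g q1) = q0 := by
          have := Pg_invol him ⟨h1, h2, h3, h4⟩ hq0
          rwa [hkey] at this
        have F2 : ∀ q ∈ S, q ≠ q0 → q ≠ q1 → q + pim N m (g q) ≠ q0 ∧ q + pim N m (g q) ≠ q1 := by
          intro q hq hne0 hne1
          constructor
          · intro hcon
            apply hne1
            have := Pg_invol him ⟨h1, h2, h3, h4⟩ hq
            rw [hcon] at this
            rw [← this, hkey]
          · intro hcon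
            apply hne0
            have := Pg_invol him ⟨h1, h2, h3, h4⟩ hq
            rw [hcon] at this
            rw [← this, hpart1]
        simp only [Finset.mem_product, mem_filter, mem_univ, true_and, Pg_iff]
        refine ⟨hpim0, ?_, ?_, ?_, ?_⟩
        · intro q hq
          obtain ⟨hne1, hq'⟩ := Finset.mem_erase.1 hq
          obtain ⟨hne0, hqS⟩ := Finset.mem_erase.1 hq'
          rw [Function.update_of_ne hne1, Function.update_of_ne hne0]
          obtain ⟨c0, c1⟩ := F2 q hqS hne0 hne1
          exact Finset.mem_erase.2 ⟨c1, Finset.mem_erase.2 ⟨c0, h1 q hqS⟩⟩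
        · intro q hq
          obtain ⟨hne1, hq'⟩ := Finset.mem_erase.1 hq
          obtain ⟨hne0, hqS⟩ := Finset.mem_erase.1 hq'
          obtain ⟨c0, c1⟩ := F2 q hqS hne0 hne1
          rw [Function.update_of_ne hne1, Function.update_of_ne hne0,
            Function.update_of_ne c1, Function.update_of_ne c0]
          exact h2 q hqS
        · intro q hq
          obtain ⟨hne1, hq'⟩ := Finset.mem_erase.1 hq
          obtain ⟨hne0, hqS⟩ := Finset.mem_erase.1 hq'
          rw [Function.update_of_ne hne1, Function.update_of_ne hne0]
          exact h3 q hqS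
        · intro q hq
          by_cases hqq1 : q = q1
          · subst hqq1; rw [Function.update_self]
          · by_cases hqq0 : q = q0
            · subst hqq0
              rw [Function.update_of_ne hqq1, Function.update_self]
            · rw [Function.update_of_ne hqq1, Function.update_of_ne hqq0]
              exact h4 q fun hqS =>
                hq (Finset.mem_erase.2 ⟨hqq1, Finset.mem_erase.2 ⟨hqq0, hqS⟩⟩)
      · -- up maps into source
        rintro ⟨x, g⟩ hp
        simp only [Finset.mem_product, mem_filter, mem_univ, true_and, Pg_iff] at hp
        obtain ⟨hx, h1, h2, h3, h4⟩ := hp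
        have hxne : x ≠ 0 := by
          intro h
          rw [h, pim_zero him] at hx
          rw [eq_comm, sub_eq_zero] at hx
          exact hne10 hx
        have hv0 : Function.update (Function.update g q0 x) q1 (-x) q0 = x := by
          rw [Function.update_of_ne (Ne.symm hne10), Function.update_self]
        have hv1 : Function.update (Function.update g q0 x) q1 (-x) q1 = -x := by
          rw [Function.update_self]
        have hvother : ∀ q, q ≠ q0 → q ≠ q1 →
            Function.update (Function.update g q0 x) q1 (-x) q = g q := by
          intro q hn0 hn1
          rw [Function.update_of_ne hn1, Function.update_of_ne hn0]
        have hkey : q0 + pim N m (Function.update (Function.update g q0 x) q1 (-x) q0) = q1 := by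
          rw [hv0, hx]; ring
        simp only [mem_filter, mem_univ, true_and, Pg_iff]
        refine ⟨⟨?_, ?_, ?_, ?_⟩, hkey⟩
        · intro q hq
          by_cases hqq0 : q = q0
          · rw [hqq0, hv0, hx]
            have : q0 + (q1 - q0) = q1 := by ring
            rw [this]; exact hq1S
          · by_cases hqq1 : q = q1
            · rw [hqq1, hv1, pim_neg him, hx]
              have : q1 + -(q1 - q0) = q0 := by ring
              rw [this]; exact hq0
            · rw [hvother q hqq0 hqq1]
              have hq'' : q ∈ (S.erase q0).erase q1 :=
                Finset.mem_erase.2 ⟨hqq1, Finset.mem_erase.2 ⟨hqq0, hq⟩⟩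
              have := h1 q hq''
              exact Finset.mem_of_mem_erase (Finset.mem_of_mem_erase this)
        · intro q hq
          by_cases hqq0 : q = q0
          · rw [hqq0, hv0, hx]
            have e1 : q0 + (q1 - q0) = q1 := by ring
            rw [e1, hv1]
          · by_cases hqq1 : q = q1
            · rw [hqq1, hv1, pim_neg him, hx]
              have e1 : q1 + -(q1 - q0) = q0 := by ring
              rw [e1, hv0, neg_neg]
            · rw [hvother q hqq0 hqq1]
              have hq'' : q ∈ (S.erase q0).erase q1 :=
                Finset.mem_erase.2 ⟨hqq1, Finset.mem_erase.2 ⟨hqq0, hq⟩⟩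
              have hp1 := Finset.ne_of_mem_erase (h1 q hq'')
              have hp0 := Finset.ne_of_mem_erase (Finset.mem_of_mem_erase (h1 q hq''))
              rw [hvother _ hp0 hp1]
              exact h2 q hq''
        · intro q hq
          by_cases hqq0 : q = q0
          · rw [hqq0, hv0]; exact hxne
          · by_cases hqq1 : q = q1
            · rw [hqq1, hv1]; exact neg_ne_zero.2 hxne
            · rw [hvother q hqq0 hqq1]
              exact h3 q (Finset.mem_erase.2 ⟨hqq1, Finset.mem_erase.2 ⟨hqq0, hq⟩⟩)
        · intro q hq
          have hqq0 : q ≠ q0 := fun h => hq (h ▸ hq0)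
          have hqq1 : q ≠ q1 := fun h => hq (h ▸ hq1S)
          rw [hvother q hqq0 hqq1]
          exact h4 q fun hqe => hq (Finset.mem_of_mem_erase (Finset.mem_of_mem_erase hqe))
      · -- left inverse
        intro g hg
        simp only [mem_filter, mem_univ, true_and, Pg_iff] at hg
        obtain ⟨⟨h1, h2, h3, h4⟩, hkey⟩ := hg
        have hgq1 : g q1 = - g q0 := by
          have h := h2 q0 hq0
          rwa [hkey] at h
        show Function.update (Function.update
            (Function.update (Function.update g q0 0) q1 0) q0 (g q0)) q1 (-(g q0)) = g
        funext q
        by_cases hqq1 : q = q1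
        · subst hqq1
          rw [Function.update_self, hgq1]
        · rw [Function.update_of_ne hqq1]
          by_cases hqq0 : q = q0
          · subst hqq0
            rw [Function.update_self]
          · rw [Function.update_of_ne hqq0, Function.update_of_ne hqq1,
              Function.update_of_ne hqq0]
      · -- right inverse
        rintro ⟨x, g⟩ hp
        simp only [Finset.mem_product, mem_filter, mem_univ, true_and, Pg_iff] at hp
        obtain ⟨hx, h1, h2, h3, h4⟩ := hp
        have hg0 : g q0 = 0 := h4 q0 fun h =>
          (Finset.ne_of_mem_erase (Finset.mem_of_mem_erase h)) rfl
        have hg1 : g q1 = 0 := h4 q1 fun h => (Finset.ne_of_mem_erase h) rfl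
        have hv0 : Function.update (Function.update g q0 x) q1 (-x) q0 = x := by
          rw [Function.update_of_ne (Ne.symm hne10), Function.update_self]
        have hB : Function.update (Function.update
            (Function.update (Function.update g q0 x) q1 (-x)) q0 0) q1 0 = g := by
          funext q
          by_cases hqq1 : q = q1
          · rw [hqq1, Function.update_self, hg1]
          · rw [Function.update_of_ne hqq1]
            by_cases hqq0 : q = q0
            · rw [hqq0, Function.update_self, hg0]
            · rw [Function.update_of_ne hqq0, Function.update_of_ne hqq1,
                Function.update_of_ne hqq0]
        show (Function.update (Function.update g q0 x) q1 (-x) q0,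
          Function.update (Function.update
            (Function.update (Function.update g q0 x) q1 (-x)) q0 0) q1 0) = (x, g)
        rw [hv0, hB]
    -- assemble
    rw [hfib, hsplit, hself]
    have hcerase : (S.erase q0).card = s - 1 := by
      rw [Finset.card_erase_of_mem hq0, hS]
    have hterm1 : (univ.filter (Pg N m (S.erase q0))).card = Rr i (s - 1) := by
      have hIH := IH (s - 1) (Nat.sub_lt hs1 one_pos) (S.erase q0) hcerase
      rw [hconv] at hIH
      exact hIH
    have hterm2 : ∀ q1 ∈ S.erase q0,
        ((univ.filter (Pg N m S)).filter fun g => q0 + pim N m (g q0) = q1).card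
        = i * Rr i (s - 2) := by
      intro q1 hq1
      have hcard2 : ((S.erase q0).erase q1).card = s - 2 := by
        rw [Finset.card_erase_of_mem hq1, hcerase, Nat.sub_sub]
      have hIH := IH (s - 2) (Nat.sub_lt hs1 two_pos) ((S.erase q0).erase q1) hcard2
      rw [hconv] at hIH
      rw [hcross q1 hq1, hIH]
    rw [Finset.sum_congr rfl hterm2, Finset.sum_const, hcerase, smul_eq_mul, hterm1]
    rcases s with _ | _ | t
    · exact absurd hs1 (Nat.not_succ_le_zero 0)
    · simp [Rr_zero, Rr_one]
    · have e1 : t + 2 - 1 = t + 1 := rfl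
      have e2 : t + 2 - 2 = t := rfl
      rw [e1, e2, Rr_rec]
end Count

section Part1
set_option linter.unusedSectionVars false
variable {n : ℕ} [NeZero (2 * n)]

lemma exists_partner (M : PMatching n) (v : ZMod (2 * n)) :
    ∃! w, w ≠ v ∧ ({v, w} : Finset (ZMod (2 * n))) ∈ M.1 := by
  classical
  obtain ⟨e, ⟨heM, hve⟩, huniq⟩ := M.2.2 v
  obtain ⟨x, y, hxy, rfl⟩ := Finset.card_eq_two.1 (M.2.1 e heM)
  have hv : v = x ∨ v = y := by simpa using hve
  rcases hv with rfl | rfl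
  · refine ⟨y, ⟨Ne.symm hxy, heM⟩, ?_⟩
    rintro w ⟨hwv, hwM⟩
    have he : ({v, w} : Finset (ZMod (2 * n))) = {v, y} := huniq _ ⟨hwM, by simp⟩
    have : w ∈ ({v, y} : Finset (ZMod (2 * n))) := by rw [← he]; simp
    simp only [Finset.mem_insert, Finset.mem_singleton] at this
    rcases this with rfl | rfl
    · exact absurd rfl hwv
    · rfl
  · refine ⟨x, ⟨hxy, by rw [Finset.pair_comm]; exact heM⟩, ?_⟩
    rintro w ⟨hwv, hwM⟩
    have he : ({v, w} : Finset (ZMod (2 * n))) = {x, v} := huniq _ ⟨hwM, by simp⟩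
    have : w ∈ ({x, v} : Finset (ZMod (2 * n))) := by rw [← he]; simp
    simp only [Finset.mem_insert, Finset.mem_singleton] at this
    rcases this with rfl | rfl
    · rfl
    · exact absurd rfl hwv

noncomputable def pfn (M : PMatching n) (v : ZMod (2 * n)) : ZMod (2 * n) :=
  (exists_partner M v).exists.choose

lemma pfn_spec (M : PMatching n) (v : ZMod (2 * n)) :
    pfn M v ≠ v ∧ ({v, pfn M v} : Finset (ZMod (2 * n))) ∈ M.1 :=
  (exists_partner M v).exists.choose_spec

lemma pfn_unique (M : PMatching n) {v w : ZMod (2 * n)} (h1 : w ≠ v)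
    (h2 : ({v, w} : Finset (ZMod (2 * n))) ∈ M.1) : w = pfn M v :=
  (exists_partner M v).unique ⟨h1, h2⟩ (pfn_spec M v)

lemma pfn_invol (M : PMatching n) : Function.Involutive (pfn M) := by
  intro v
  have h := pfn_spec M v
  exact (pfn_unique M (Ne.symm h.1) (by rw [Finset.pair_comm]; exact h.2)).symm

lemma pfn_equiv (M : PMatching n) (a : ZMod (2 * n))
    (hfix : M.1.image (Finset.image (fun v => v + a)) = M.1) (v : ZMod (2 * n)) :
    pfn M (v + a) = pfn M v + a := by
  have h := pfn_spec M v
  have himg : Finset.image (fun w => w + a) ({v, pfn M v} : Finset (ZMod (2 * n)))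
      = {v + a, pfn M v + a} := by
    rw [Finset.image_insert, Finset.image_singleton]
  have hmem : ({v + a, pfn M v + a} : Finset (ZMod (2 * n))) ∈ M.1 := by
    rw [← hfix, ← himg]
    exact Finset.mem_image_of_mem _ h.2
  have hne : pfn M v + a ≠ v + a := fun hc => h.1 (add_right_cancel hc)
  exact (pfn_unique M hne hmem).symm

def mOf (f : ZMod (2 * n) → ZMod (2 * n)) : Finset (Finset (ZMod (2 * n))) :=
  Finset.univ.image (fun v => ({v, f v} : Finset (ZMod (2 * n))))

lemma mem_mOf {f : ZMod (2 * n) → ZMod (2 * n)} {e : Finset (ZMod (2 * n))} :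
    e ∈ mOf f ↔ ∃ v, ({v, f v} : Finset (ZMod (2 * n))) = e := by
  simp [mOf]

lemma pair_mem_mOf (f : ZMod (2 * n) → ZMod (2 * n)) (v : ZMod (2 * n)) :
    ({v, f v} : Finset (ZMod (2 * n))) ∈ mOf f := mem_mOf.2 ⟨v, rfl⟩

lemma mOf_card {f : ZMod (2 * n) → ZMod (2 * n)} (hf : ∀ v, f v ≠ v) :
    ∀ e ∈ mOf f, e.card = 2 := by
  intro e he
  obtain ⟨v, rfl⟩ := mem_mOf.1 he
  exact Finset.card_pair (Ne.symm (hf v))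

lemma mOf_unique {f : ZMod (2 * n) → ZMod (2 * n)} (hinv : Function.Involutive f)
    (v : ZMod (2 * n)) : ∃! e, e ∈ mOf f ∧ v ∈ e := by
  refine ⟨{v, f v}, ⟨pair_mem_mOf f v, by simp⟩, ?_⟩
  rintro e ⟨he, hve⟩
  obtain ⟨w, rfl⟩ := mem_mOf.1 he
  have : v = w ∨ v = f w := by simpa using hve
  rcases this with rfl | rfl
  · rfl
  · rw [hinv w]
    exact Finset.pair_comm w (f w)

lemma mOf_fixed {f : ZMod (2 * n) → ZMod (2 * n)} (a : ZMod (2 * n))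
    (hequi : ∀ v, f (v + a) = f v + a) :
    (mOf f).image (Finset.image (fun v => v + a)) = mOf f := by
  rw [mOf]
  rw [Finset.image_image]
  have hfun : (Finset.image (fun v => v + a)) ∘ (fun v => ({v, f v} : Finset (ZMod (2 * n))))
      = (fun v => ({v, f v} : Finset (ZMod (2 * n)))) ∘ (fun v => v + a) := by
    funext v
    simp only [Function.comp_apply]
    rw [Finset.image_insert, Finset.image_singleton, hequi]
  rw [hfun, ← Finset.image_image]
  congr 1
  exact Finset.image_univ_equiv (Equiv.addRight a)

lemma mOf_pfn (M : PMatching n) : mOf (pfn M) = M.1 := by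
  ext e
  constructor
  · intro he
    obtain ⟨v, rfl⟩ := mem_mOf.1 he
    exact (pfn_spec M v).2
  · intro he
    obtain ⟨x, y, hxy, rfl⟩ := Finset.card_eq_two.1 (M.2.1 e he)
    have hy : y = pfn M x := pfn_unique M (Ne.symm hxy) he
    rw [hy]
    exact pair_mem_mOf _ x

noncomputable def E1 (a : ZMod (2 * n)) :
    {M : PMatching n // M.1.image (Finset.image (fun v => v + a)) = M.1}
    ≃ {f : ZMod (2 * n) → ZMod (2 * n) //
        Function.Involutive f ∧ (∀ v, f v ≠ v) ∧ ∀ v, f (v + a) = f v + a} where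
  toFun Mp := ⟨pfn Mp.1, pfn_invol Mp.1, fun v => (pfn_spec Mp.1 v).1, pfn_equiv Mp.1 a Mp.2⟩
  invFun fp := ⟨⟨mOf fp.1, mOf_card fp.2.2.1, mOf_unique fp.2.1⟩, mOf_fixed a fp.2.2.2⟩
  left_inv Mp := Subtype.ext (Subtype.ext (mOf_pfn Mp.1))
  right_inv fp := by
    apply Subtype.ext
    funext v
    have hmem : ({v, fp.1 v} : Finset (ZMod (2 * n))) ∈ mOf fp.1 :=
      pair_mem_mOf _ v
    exact (pfn_unique ⟨mOf fp.1, mOf_card fp.2.2.1, mOf_unique fp.2.1⟩ (fp.2.2.1 v) hmem).symm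

end Part1



section Part2
set_option linter.unusedSectionVars false
variable {N i m : ℕ} [NeZero N] [NeZero m] (him : i * m = N) (a : ZMod N)
  (ha : addOrderOf a = i)

lemma equi_nsmul {f : ZMod N → ZMod N} (hequi : ∀ v, f (v + a) = f v + a)
    (v : ZMod N) (j : ℕ) : f (v + j • a) = f v + j • a := by
  induction j with
  | zero => simp
  | succ j IHj => rw [succ_nsmul, ← add_assoc, hequi, IHj, add_assoc]

include him ha in
lemma fdiff {f : ZMod N → ZMod N} (hequi : ∀ v, f (v + a) = f v + a)
    (v w : ZMod N) (h : pim N m (v - w) = 0) : f v - v = f w - w := by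
  obtain ⟨j, -, hj⟩ := (pim_ker him a ha _).1 h
  have hv : v = w + j • a := by rw [← hj]; ring
  rw [hv, equi_nsmul a hequi]
  ring

include him ha in
lemma cond1_core {f : ZMod N → ZMod N} (hinv : Function.Involutive f)
    (hequi : ∀ v, f (v + a) = f v + a) (v w : ZMod N)
    (hw : pim N m w = pim N m (f v)) : f w - w = -(f v - v) := by
  have hd : pim N m (w - f v) = 0 := by rw [pim_sub him, hw, sub_self]
  have h2 := fdiff him a ha hequi w (f v) hd
  rw [h2, hinv]
  ring

include him ha in
lemma pim_fL {f : ZMod N → ZMod N} (q : ZMod m) :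
    pim N m (f ((q.val : ℕ) : ZMod N))
      = q + pim N m (f ((q.val : ℕ) : ZMod N) - ((q.val : ℕ) : ZMod N)) := by
  have e : f ((q.val : ℕ) : ZMod N)
      = ((q.val : ℕ) : ZMod N) + (f ((q.val : ℕ) : ZMod N) - ((q.val : ℕ) : ZMod N)) := by
    ring
  nth_rewrite 1 [e]
  rw [pim_add him, pim_L him]

noncomputable def E2 (him : i * m = N) (ha : addOrderOf a = i) :
    {f : ZMod N → ZMod N //
      Function.Involutive f ∧ (∀ v, f v ≠ v) ∧ ∀ v, f (v + a) = f v + a}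
    ≃ {g : ZMod m → ZMod N //
        (∀ q, g (q + pim N m (g q)) = - g q) ∧ ∀ q, g q ≠ 0} where
  toFun := fun ⟨f, hinv, hfpf, hequi⟩ =>
    ⟨fun q => f ((q.val : ℕ) : ZMod N) - ((q.val : ℕ) : ZMod N),
     fun q => by
      apply cond1_core him a ha hinv hequi
      rw [pim_L him, pim_fL him a ha (f := f)],
     fun q => sub_ne_zero.2 (hfpf _)⟩
  invFun gp := by
    refine ⟨fun v => v + gp.1 (pim N m v), ?_, ?_, ?_⟩
    · intro v
      obtain ⟨g, hg1, hg2⟩ := gp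
      show (v + g (pim N m v)) + g (pim N m (v + g (pim N m v))) = v
      rw [pim_add him, hg1]
      ring
    · intro v hc
      exact gp.2.2 _ (add_eq_left.1 hc)
    · intro v
      show (v + a) + gp.1 (pim N m (v + a)) = (v + gp.1 (pim N m v)) + a
      rw [pim_add him, pim_a him a ha, add_zero]
      ring
  left_inv fp := by
    apply Subtype.ext
    obtain ⟨f, hinv, hfpf, hequi⟩ := fp
    funext v
    show v + (f (((pim N m v).val : ℕ) : ZMod N) - (((pim N m v).val : ℕ) : ZMod N)) = f v
    have hd : pim N m (v - (((pim N m v).val : ℕ) : ZMod N)) = 0 := by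
      rw [pim_sub him, pim_L him, sub_self]
    have := fdiff him a ha hequi v ((((pim N m v).val : ℕ) : ZMod N)) hd
    rw [← this]
    ring
  right_inv gp := by
    apply Subtype.ext
    obtain ⟨g, hg1, hg2⟩ := gp
    funext q
    show (((q.val : ℕ) : ZMod N) + g (pim N m ((q.val : ℕ) : ZMod N)))
        - ((q.val : ℕ) : ZMod N) = g q
    rw [pim_L him]
    ring
end Part2

/-- For even `i` dividing `2n`, the number of perfect matchings of `K_{2n}` fixed by a
rotation of order `i` equals `Σ_{k=0}^{⌊n/i⌋} C(2n/i, 2k) · i^k · (2k−1)!!`. -/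
theorem card_fixed_matchings_even (n i : ℕ) (hn : 0 < n) (hi : Even i) (hd : i ∣ 2 * n)
    (a : ZMod (2 * n)) (ha : addOrderOf a = i) :
    Nat.card {M : PMatching n // M.1.image (Finset.image (fun v => v + a)) = M.1} =
      ∑ k ∈ Finset.range (n / i + 1),
        (2 * n / i).choose (2 * k) * i ^ k * ∏ j ∈ Finset.range k, (2 * j + 1) := by
  haveI hN : NeZero (2 * n) := ⟨by omega⟩
  have him : i * (2 * n / i) = 2 * n := Nat.mul_div_cancel' hd
  haveI hm : NeZero (2 * n / i) := ⟨fun h => by rw [h, mul_zero] at him; omega⟩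
  have hidx : 2 * n / i / 2 = n / i := by
    have hipos : 0 < i := by
      rcases Nat.eq_zero_or_pos i with h | h
      · subst h; simp at him; omega
      · exact h
    rw [Nat.div_div_eq_div_mul, mul_comm i 2, Nat.mul_div_mul_left _ _ (by norm_num)]
  have h1 := Nat.card_congr (E1 a)
  have h2 := Nat.card_congr (E2 a him ha)
  have h3 : Nat.card {g : ZMod (2 * n / i) → ZMod (2 * n) //
        (∀ q, g (q + pim (2 * n) (2 * n / i) (g q)) = - g q) ∧ ∀ q, g q ≠ 0}
      = Nat.card {g : ZMod (2 * n / i) → ZMod (2 * n) // Pg (2 * n) (2 * n / i) Finset.univ g} := by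
    apply Nat.card_congr
    apply Equiv.subtypeEquivRight
    intro g
    constructor
    · rintro ⟨c1, c2⟩
      exact ⟨fun q _ => Finset.mem_univ _, fun q _ => c1 q, fun q _ => c2 q,
        fun q hq => absurd (Finset.mem_univ q) hq⟩
    · intro h
      exact ⟨fun q => h.2.1 q (Finset.mem_univ q), fun q => h.2.2.1 q (Finset.mem_univ q)⟩
  have h4 := G_count him a ha hi (2 * n / i) Finset.univ
    (by rw [Finset.card_univ, ZMod.card])
  rw [h1, h2, h3, h4, Rr, hidx]
end

section
/- The number c_n of orbits of perfect matchings of K_{2n} under rotation satisfies c_n ~ (2n−1)!!/(2n) as n → ∞; equivalently, 2n·c_n / (2n−1)!! → 1. -/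
open Nat Finset

open scoped Classical

variable {α : Type*} [Fintype α] [DecidableEq α]

noncomputable def matchFinset (s : Finset α) : Finset (Finset (Finset α)) :=
  univ.filter (fun M => (∀ e ∈ M, e.card = 2 ∧ e ⊆ s) ∧ ∀ v ∈ s, ∃! e, e ∈ M ∧ v ∈ e)

lemma mem_matchFinset {s : Finset α} {M : Finset (Finset α)} :
    M ∈ matchFinset s ↔
      (∀ e ∈ M, e.card = 2 ∧ e ⊆ s) ∧ ∀ v ∈ s, ∃! e, e ∈ M ∧ v ∈ e := by
  simp [matchFinset]

lemma matchFinset_empty : matchFinset (∅ : Finset α) = {∅} := by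
  ext M
  simp only [mem_matchFinset, mem_singleton]
  constructor
  · rintro ⟨h1, _⟩
    by_contra hM
    obtain ⟨e, he⟩ := Finset.nonempty_iff_ne_empty.2 hM
    obtain ⟨hc, hsub⟩ := h1 e he
    obtain ⟨v, hv⟩ := Finset.card_pos.1 (by omega : 0 < e.card)
    exact absurd (hsub hv) (by simp)
  · rintro rfl
    exact ⟨by simp, by simp⟩

lemma exists_unique_partner {s : Finset α} {M : Finset (Finset α)} (hM : M ∈ matchFinset s)
    {x : α} (hx : x ∈ s) : ∃! y, y ≠ x ∧ ({x, y} : Finset α) ∈ M := by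
  rw [mem_matchFinset] at hM
  obtain ⟨e, ⟨heM, hxe⟩, huniq⟩ := hM.2 x hx
  obtain ⟨a, b, hab, rfl⟩ := Finset.card_eq_two.1 (hM.1 e heM).1
  rcases (by simpa using hxe : x = a ∨ x = b) with rfl | rfl
  · refine ⟨b, ⟨hab.symm, heM⟩, ?_⟩
    rintro y ⟨hyx, hyM⟩
    have := huniq _ ⟨hyM, by simp⟩
    have hy : y ∈ ({x, b} : Finset α) := this ▸ (by simp : y ∈ ({x, y} : Finset α))
    simp only [mem_insert, mem_singleton] at hy
    tauto
  · refine ⟨a, ⟨hab, by rwa [Finset.pair_comm]⟩, ?_⟩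
    rintro y ⟨hyx, hyM⟩
    have := huniq _ ⟨hyM, by simp⟩
    have hy : y ∈ ({a, x} : Finset α) := this ▸ (by simp : y ∈ ({x, y} : Finset α))
    simp only [mem_insert, mem_singleton] at hy
    tauto

/-- The partner of `x` in a matching `M` (junk value `x` if undefined). -/
noncomputable def mpartner (x : α) (M : Finset (Finset α)) : α :=
  if h : ∃ y, y ≠ x ∧ ({x, y} : Finset α) ∈ M then h.choose else x

lemma mpartner_spec {s : Finset α} {M : Finset (Finset α)} (hM : M ∈ matchFinset s)
    {x : α} (hx : x ∈ s) : mpartner x M ≠ x ∧ ({x, mpartner x M} : Finset α) ∈ M := by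
  obtain ⟨y, hy, -⟩ := exists_unique_partner hM hx
  rw [mpartner, dif_pos ⟨y, hy⟩]
  exact (⟨y, hy⟩ : ∃ y, y ≠ x ∧ ({x, y} : Finset α) ∈ M).choose_spec

lemma mpartner_eq {s : Finset α} {M : Finset (Finset α)} (hM : M ∈ matchFinset s)
    {x y : α} (hx : x ∈ s) (hyx : y ≠ x) (hyM : ({x, y} : Finset α) ∈ M) :
    mpartner x M = y := by
  obtain ⟨z, hz, huniq⟩ := exists_unique_partner hM hx
  have h1 := huniq _ ⟨(mpartner_spec hM hx).1, (mpartner_spec hM hx).2⟩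
  have h2 := huniq _ ⟨hyx, hyM⟩
  rw [h1, h2]

lemma edge_eq_pair {s : Finset α} {M : Finset (Finset α)} (hM : M ∈ matchFinset s)
    {x : α} {e : Finset α} (hx : x ∈ s) (he : e ∈ M) (hxe : x ∈ e) :
    e = {x, mpartner x M} := by
  have hM' := mem_matchFinset.1 hM
  obtain ⟨f, hf, huniq⟩ := hM'.2 x hx
  rw [huniq e ⟨he, hxe⟩, huniq _ ⟨(mpartner_spec hM hx).2, by simp⟩]

set_option maxHeartbeats 2000000 in
lemma card_matchFinset_step {s : Finset α} {x : α} (hx : x ∈ s) :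
    (matchFinset s).card
      = ∑ y ∈ s.erase x, (matchFinset ((s.erase x).erase y)).card := by
  have hfib : ∀ M ∈ matchFinset s, mpartner x M ∈ s.erase x := by
    intro M hM
    obtain ⟨hne, hmem⟩ := mpartner_spec hM hx
    have hsub := (mem_matchFinset.1 hM).1 _ hmem
    exact mem_erase.2 ⟨hne, hsub.2 (by simp)⟩
  rw [Finset.card_eq_sum_card_fiberwise hfib]
  refine Finset.sum_congr rfl fun y hy => ?_
  obtain ⟨hyx, hys⟩ := mem_erase.1 hy
  refine Finset.card_bij (fun M _ => M.erase {x, y}) ?_ ?_ ?_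
  · -- maps to
    rintro M hMf
    obtain ⟨hM, hpy⟩ := mem_filter.1 hMf
    have hxyM : ({x, y} : Finset α) ∈ M := by
      have := (mpartner_spec hM hx).2; rwa [hpy] at this
    rw [mem_matchFinset]
    constructor
    · intro e he
      rw [mem_erase] at he
      obtain ⟨hexy, heM⟩ := he
      refine ⟨((mem_matchFinset.1 hM).1 e heM).1, ?_⟩
      intro v hv
      have hvs := ((mem_matchFinset.1 hM).1 e heM).2 hv
      rw [mem_erase, mem_erase]
      refine ⟨?_, ?_, hvs⟩
      · rintro rfl
        exact hexy ((edge_eq_pair hM hys heM hv).trans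
          (by rw [mpartner_eq hM hys (Ne.symm hyx) (by rwa [Finset.pair_comm]), Finset.pair_comm]))
      · rintro rfl
        exact hexy ((edge_eq_pair hM hx heM hv).trans (by rw [hpy]))
    · intro v hv
      rw [mem_erase, mem_erase] at hv
      obtain ⟨hvy, hvx, hvs⟩ := hv
      obtain ⟨e, ⟨heM, hve⟩, huniq⟩ := (mem_matchFinset.1 hM).2 v hvs
      have hexy : e ≠ ({x, y} : Finset α) := by
        rintro rfl
        simp only [mem_insert, mem_singleton] at hve
        tauto
      exact ⟨e, ⟨mem_erase.2 ⟨hexy, heM⟩, hve⟩,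
        fun e' ⟨he', hve'⟩ => huniq e' ⟨(mem_erase.1 he').2, hve'⟩⟩
  · -- inj
    rintro M1 hM1 M2 hM2 h
    rw [mem_filter] at hM1 hM2
    have h1 : ({x, y} : Finset α) ∈ M1 := by
      have := (mpartner_spec hM1.1 hx).2; rwa [hM1.2] at this
    have h2 : ({x, y} : Finset α) ∈ M2 := by
      have := (mpartner_spec hM2.1 hx).2; rwa [hM2.2] at this
    rw [← Finset.insert_erase h1, ← Finset.insert_erase h2, h]
  · -- surj
    rintro N hN
    have hxy : x ≠ y := Ne.symm hyx
    have hxN : ∀ e ∈ N, x ∉ e ∧ y ∉ e := by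
      intro e he
      have hsub := ((mem_matchFinset.1 hN).1 e he).2
      constructor
      · intro hxe
        have := hsub hxe
        rw [mem_erase, mem_erase] at this
        exact this.2.1 rfl
      · intro hye
        have := hsub hye
        rw [mem_erase, mem_erase] at this
        exact this.1 rfl
    have hxyN : ({x, y} : Finset α) ∉ N := fun h => (hxN _ h).1 (by simp)
    refine ⟨insert {x, y} N, ?_, ?_⟩
    · rw [mem_filter]
      have hmem : insert ({x, y} : Finset α) N ∈ matchFinset s := by
        rw [mem_matchFinset]
        constructor
        · intro e he
          rcases mem_insert.1 he with rfl | heN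
          · exact ⟨Finset.card_pair hxy, by
              intro v hv
              rcases (by simpa using hv : v = x ∨ v = y) with rfl | rfl
              exacts [hx, hys]⟩
          · refine ⟨((mem_matchFinset.1 hN).1 e heN).1, ?_⟩
            exact ((mem_matchFinset.1 hN).1 e heN).2.trans
              ((Finset.erase_subset _ _).trans (Finset.erase_subset _ _))
        · intro v hvs
          by_cases hvx : v = x
          · subst hvx
            refine ⟨{v, y}, ⟨mem_insert_self _ _, by simp⟩, ?_⟩
            rintro e ⟨he, hve⟩
            rcases mem_insert.1 he with rfl | heN
            · rfl
            · exact absurd hve (hxN _ heN).1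
          by_cases hvy : v = y
          · subst hvy
            refine ⟨{x, v}, ⟨mem_insert_self _ _, by simp⟩, ?_⟩
            rintro e ⟨he, hve⟩
            rcases mem_insert.1 he with rfl | heN
            · rfl
            · exact absurd hve (hxN _ heN).2
          · obtain ⟨e, ⟨heN, hve⟩, huniq⟩ := (mem_matchFinset.1 hN).2 v
              (by rw [mem_erase, mem_erase]; exact ⟨hvy, hvx, hvs⟩)
            refine ⟨e, ⟨mem_insert_of_mem heN, hve⟩, ?_⟩
            rintro e' ⟨he', hve'⟩
            rcases mem_insert.1 he' with rfl | he'N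
            · exact absurd (by simpa using hve') (by tauto)
            · exact huniq e' ⟨he'N, hve'⟩
      refine ⟨hmem, ?_⟩
      exact mpartner_eq hmem hx hyx (mem_insert_self _ _)
    · exact Finset.erase_insert hxyN

theorem card_matchFinset : ∀ (k : ℕ) (s : Finset α), s.card = 2 * k →
    (matchFinset s).card = ∏ j ∈ range k, (2 * j + 1)
  | 0, s, hs => by
    have : s = ∅ := Finset.card_eq_zero.1 (by omega)
    subst this
    simp [matchFinset_empty]
  | (k + 1), s, hs => by
    obtain ⟨x, hx⟩ := Finset.card_pos.1 (by omega : 0 < s.card)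
    rw [card_matchFinset_step hx]
    have hcard : ∀ y ∈ s.erase x,
        (matchFinset ((s.erase x).erase y)).card = ∏ j ∈ range k, (2 * j + 1) := by
      intro y hy
      refine card_matchFinset k _ ?_
      rw [Finset.card_erase_of_mem hy, Finset.card_erase_of_mem hx, hs]
      omega
    rw [Finset.sum_congr rfl hcard, Finset.sum_const, Finset.card_erase_of_mem hx, hs,
      Finset.prod_range_succ, smul_eq_mul, mul_comm,
      show 2 * (k + 1) - 1 = 2 * k + 1 from by omega]

/-! ### Counting involutions -/

noncomputable def invOn (s : Finset α) : Finset (α → α) :=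
  univ.filter (fun f => (∀ x ∈ s, f x ∈ s ∧ f (f x) = x) ∧ ∀ x, x ∉ s → f x = x)

lemma mem_invOn {s : Finset α} {f : α → α} :
    f ∈ invOn s ↔ (∀ x ∈ s, f x ∈ s ∧ f (f x) = x) ∧ ∀ x, x ∉ s → f x = x := by
  simp [invOn]

lemma card_invOn_step {s : Finset α} {x : α} (hx : x ∈ s) :
    (invOn s).card ≤ ∑ y ∈ s, (invOn ((s.erase x).erase y)).card := by
  have hfib : ∀ f ∈ invOn s, f x ∈ s := fun f hf => ((mem_invOn.1 hf).1 x hx).1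
  rw [Finset.card_eq_sum_card_fiberwise hfib]
  refine Finset.sum_le_sum fun y hy => ?_
  refine Finset.card_le_card_of_injOn (fun f z => if z = x ∨ z = y then z else f z) ?_ ?_
  · rintro f hf
    obtain ⟨hf, hfx⟩ := mem_filter.1 hf
    obtain ⟨h1, h2⟩ := mem_invOn.1 hf
    rw [Finset.mem_coe, mem_invOn]
    constructor
    · intro z hz
      rw [mem_erase, mem_erase] at hz
      obtain ⟨hzy, hzx, hzs⟩ := hz
      have hfz := h1 z hzs
      have hfzx : f z ≠ x := by
        intro h
        exact hzy (by rw [← hfx, ← h, hfz.2])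
      have hfzy : f z ≠ y := by
        intro h
        apply hzx
        rw [← hfz.2, h, ← hfx, (h1 x hx).2]
      simp only [if_neg (by tauto : ¬(z = x ∨ z = y)), if_neg (by tauto : ¬(f z = x ∨ f z = y))]
      exact ⟨mem_erase.2 ⟨hfzy, mem_erase.2 ⟨hfzx, hfz.1⟩⟩, hfz.2⟩
    · intro z hz
      by_cases hc : z = x ∨ z = y
      · simp [if_pos hc]
      · dsimp only
        rw [if_neg hc]
        rw [mem_erase, mem_erase] at hz
        push_neg at hc hz
        exact h2 z fun hzs => (hz (by tauto) (by tauto) hzs).elim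
  · rintro f1 hf1 f2 hf2 h
    simp only [Finset.coe_filter, Set.mem_setOf_eq] at hf1 hf2
    obtain ⟨hf1, hf1x⟩ := hf1
    obtain ⟨hf2, hf2x⟩ := hf2
    funext z
    by_cases hzx : z = x
    · rw [hzx, hf1x, hf2x]
    by_cases hzy : z = y
    · subst hzy
      have e1 : f1 z = x := by rw [← hf1x, (mem_invOn.1 hf1).1 x hx |>.2]
      have e2 : f2 z = x := by rw [← hf2x, (mem_invOn.1 hf2).1 x hx |>.2]
      rw [e1, e2]
    · have := congrFun h z
      simpa [if_neg (by tauto : ¬(z = x ∨ z = y))] using this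

theorem card_invOn_le (b : ℕ) (hb : Fintype.card α ≤ b) (s : Finset α) :
    (invOn s).card ≤ 2 ^ s.card * b ^ (s.card / 2) := by
  induction s using Finset.strongInduction with
  | _ s IH =>
    rcases Finset.eq_empty_or_nonempty s with rfl | ⟨x, hx⟩
    · have h1 : (invOn (∅ : Finset α)).card ≤ 1 := by
        refine Finset.card_le_one.2 fun f hf g hg => ?_
        funext z
        rw [(mem_invOn.1 hf).2 z (by simp), (mem_invOn.1 hg).2 z (by simp)]
      simpa using h1
    · have hb1 : 1 ≤ b := le_trans (by
        calc 1 ≤ s.card := Finset.card_pos.2 ⟨x, hx⟩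
        _ ≤ Fintype.card α := Finset.card_le_univ s) hb
      have hm : s.card ≤ b := le_trans (Finset.card_le_univ s) hb
      set m := s.card with hmdef
      have hm1 : 1 ≤ m := Finset.card_pos.2 ⟨x, hx⟩
      calc (invOn s).card ≤ ∑ y ∈ s, (invOn ((s.erase x).erase y)).card :=
            card_invOn_step hx
        _ = (invOn ((s.erase x).erase x)).card
            + ∑ y ∈ s.erase x, (invOn ((s.erase x).erase y)).card :=
            (Finset.add_sum_erase s _ hx).symm
        _ ≤ 2 ^ (m - 1) * b ^ ((m - 1) / 2)
            + ∑ y ∈ s.erase x, (invOn ((s.erase x).erase y)).card := by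
            gcongr
            rw [Finset.erase_idem]
            have := IH (s.erase x) (Finset.erase_ssubset hx)
            rwa [Finset.card_erase_of_mem hx] at this
        _ ≤ 2 ^ (m - 1) * b ^ ((m - 1) / 2)
            + (m - 1) * (2 ^ (m - 2) * b ^ ((m - 2) / 2)) := by
            gcongr
            rw [← Finset.card_erase_of_mem hx, ← smul_eq_mul, ← Finset.sum_const]
            refine Finset.sum_le_sum fun y hy => ?_
            have hss : (s.erase x).erase y ⊂ s :=
              lt_of_le_of_lt (Finset.erase_subset _ _) (Finset.erase_ssubset hx)
            have := IH _ hss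
            rwa [Finset.card_erase_of_mem hy, Finset.card_erase_of_mem hx] at this
        _ ≤ 2 ^ m * b ^ (m / 2) := by
            rcases Nat.lt_or_ge m 2 with hm2 | hm2
            · interval_cases m
              simp
            · have e1 : (m - 2) / 2 + 1 = m / 2 := by omega
              have e2 : (m - 1) / 2 ≤ m / 2 := by omega
              calc 2 ^ (m - 1) * b ^ ((m - 1) / 2)
                    + (m - 1) * (2 ^ (m - 2) * b ^ ((m - 2) / 2))
                  ≤ 2 ^ (m - 1) * b ^ (m / 2)
                    + b * (2 ^ (m - 2) * b ^ ((m - 2) / 2)) := by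
                    gcongr
                    omega
                _ = 2 ^ (m - 1) * b ^ (m / 2) + 2 ^ (m - 2) * b ^ ((m - 2) / 2 + 1) := by
                    ring
                _ = 2 ^ (m - 1) * b ^ (m / 2) + 2 ^ (m - 2) * b ^ (m / 2) := by rw [e1]
                _ ≤ 2 ^ m * b ^ (m / 2) := by
                    have : 2 ^ (m - 1) + 2 ^ (m - 2) ≤ 2 ^ m := by
                      have h1 : 2 ^ (m - 1) ≤ 2 ^ m := Nat.pow_le_pow_right (by norm_num) (by omega)
                      have h2 : (2:ℕ) ^ (m - 2) ≤ 2 ^ (m - 1) := Nat.pow_le_pow_right (by norm_num) (by omega)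
                      have h3 : 2 ^ (m-1) * 2 = 2 ^ m := by
                        rw [← pow_succ]
                        congr 1
                        omega
                      omega
                    calc 2 ^ (m - 1) * b ^ (m / 2) + 2 ^ (m - 2) * b ^ (m / 2)
                        = (2 ^ (m - 1) + 2 ^ (m - 2)) * b ^ (m / 2) := by ring
                      _ ≤ 2 ^ m * b ^ (m / 2) := by gcongr

instance (n : ℕ) [NeZero n] : Finite (PMatching n) :=
  Finite.of_injective (fun m : PMatching n => m.1) (fun a b h => Subtype.ext h)

noncomputable instance (n : ℕ) [NeZero n] : Fintype (PMatching n) := Fintype.ofFinite _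

section Rot
variable {n : ℕ}

/-- Rotation of a perfect matching. -/
def rotM (a : ZMod (2 * n)) (m : PMatching n) : PMatching n := by
  refine ⟨m.1.image (Finset.image (fun v => v + a)), ?_, ?_⟩
  · intro e he
    obtain ⟨e', he', rfl⟩ := Finset.mem_image.1 he
    rw [Finset.card_image_of_injective _ (add_left_injective a)]
    exact m.2.1 e' he'
  · intro v
    obtain ⟨e, ⟨heM, hwe⟩, huniq⟩ := m.2.2 (v - a)
    refine ⟨e.image (fun v => v + a), ⟨Finset.mem_image_of_mem _ heM, ?_⟩, ?_⟩
    · exact Finset.mem_image.2 ⟨v - a, hwe, by ring⟩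
    · rintro f ⟨hf, hvf⟩
      obtain ⟨f', hf', rfl⟩ := Finset.mem_image.1 hf
      obtain ⟨u, hu, huv⟩ := Finset.mem_image.1 hvf
      have : u = v - a := by rw [← huv]; ring
      subst this
      rw [huniq f' ⟨hf', hu⟩]

@[simp] lemma rotM_coe (a : ZMod (2 * n)) (m : PMatching n) :
    (rotM a m).1 = m.1.image (Finset.image (fun v => v + a)) := rfl

lemma rotRel_iff {m m' : PMatching n} : rotRel n m m' ↔ ∃ a, m' = rotM a m := by
  constructor
  · rintro ⟨a, h⟩; exact ⟨a, Subtype.ext h⟩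
  · rintro ⟨a, rfl⟩; exact ⟨a, rfl⟩

lemma rotM_rotM (a b : ZMod (2 * n)) (m : PMatching n) :
    rotM a (rotM b m) = rotM (b + a) m := by
  refine Subtype.ext ?_
  simp only [rotM_coe, Finset.image_image]
  refine Finset.image_congr fun e he => ?_
  rw [Function.comp_apply, Finset.image_image]
  refine Finset.image_congr fun v hv => ?_
  simp [add_assoc]

@[simp] lemma rotM_zero (m : PMatching n) : rotM 0 m = m := by
  refine Subtype.ext ?_
  simp only [rotM_coe]
  have : (Finset.image (fun v : ZMod (2*n) => v + 0)) = id := by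
    funext e; simp
  rw [this, Finset.image_id]

lemma rotRel_refl (m : PMatching n) : rotRel n m m :=
  rotRel_iff.2 ⟨0, (rotM_zero m).symm⟩

lemma rotRel_symm {m m' : PMatching n} (h : rotRel n m m') : rotRel n m' m := by
  obtain ⟨a, rfl⟩ := rotRel_iff.1 h
  exact rotRel_iff.2 ⟨-a, by rw [rotM_rotM, add_neg_cancel, rotM_zero]⟩

lemma rotRel_trans {m₁ m₂ m₃ : PMatching n} (h : rotRel n m₁ m₂) (h' : rotRel n m₂ m₃) :
    rotRel n m₁ m₃ := by
  obtain ⟨a, rfl⟩ := rotRel_iff.1 h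
  obtain ⟨b, rfl⟩ := rotRel_iff.1 h'
  exact rotRel_iff.2 ⟨a + b, by rw [rotM_rotM]⟩

end Rot

section PM
variable {n : ℕ} [NeZero n]

lemma pm_mem_matchFinset (m : PMatching n) : m.1 ∈ matchFinset (univ : Finset (ZMod (2*n))) := by
  rw [mem_matchFinset]
  exact ⟨fun e he => ⟨m.2.1 e he, Finset.subset_univ e⟩, fun v _ => m.2.2 v⟩

/-- the partner of `v` in the matching `m` -/
noncomputable def pmp (m : PMatching n) (v : ZMod (2*n)) : ZMod (2*n) := mpartner v m.1

lemma pmp_ne (m : PMatching n) (v : ZMod (2*n)) : pmp m v ≠ v :=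
  (mpartner_spec (pm_mem_matchFinset m) (mem_univ v)).1

lemma pmp_mem (m : PMatching n) (v : ZMod (2*n)) : ({v, pmp m v} : Finset (ZMod (2*n))) ∈ m.1 :=
  (mpartner_spec (pm_mem_matchFinset m) (mem_univ v)).2

lemma pmp_eq (m : PMatching n) {v y : ZMod (2*n)} (h1 : y ≠ v)
    (h2 : ({v, y} : Finset (ZMod (2*n))) ∈ m.1) : pmp m v = y :=
  mpartner_eq (pm_mem_matchFinset m) (mem_univ v) h1 h2

lemma pmp_pmp (m : PMatching n) (v : ZMod (2*n)) : pmp m (pmp m v) = v :=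
  pmp_eq m (Ne.symm (pmp_ne m v)) (by rw [Finset.pair_comm]; exact pmp_mem m v)

lemma pm_ext {m m' : PMatching n} (h : ∀ v, pmp m v = pmp m' v) : m = m' := by
  refine Subtype.ext (Finset.ext fun e => ?_)
  suffices H : ∀ (m m' : PMatching n), (∀ v, pmp m v = pmp m' v) → e ∈ m.1 → e ∈ m'.1 by
    exact ⟨H m m' h, H m' m (fun v => (h v).symm)⟩
  intro m m' h he
  obtain ⟨v, hv⟩ := Finset.card_pos.1 (by rw [m.2.1 e he]; norm_num : 0 < e.card)
  have : e = {v, pmp m v} := edge_eq_pair (pm_mem_matchFinset m) (mem_univ v) he hv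
  rw [this, h v]
  exact pmp_mem m' v

lemma pmp_rotM (m : PMatching n) (a v : ZMod (2*n)) :
    pmp (rotM a m) (v + a) = pmp m v + a := by
  refine pmp_eq _ (by simpa using pmp_ne m v) ?_
  rw [rotM_coe]
  refine Finset.mem_image.2 ⟨{v, pmp m v}, pmp_mem m v, ?_⟩
  rw [Finset.image_insert, Finset.image_singleton]

lemma pmp_fixed {m : PMatching n} {a : ZMod (2*n)} (hfix : rotM a m = m) (v : ZMod (2*n)) :
    pmp m (v + a) = pmp m v + a := by
  conv_lhs => rw [← hfix]
  exact pmp_rotM m a v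

lemma fix_add {m : PMatching n} {a b : ZMod (2*n)} (ha : rotM a m = m) (hb : rotM b m = m) :
    rotM (a + b) m = m := by
  rw [← rotM_rotM, ha, hb]

lemma fix_nsmul {m : PMatching n} {a : ZMod (2*n)} (ha : rotM a m = m) (k : ℕ) :
    rotM (k • a) m = m := by
  induction k with
  | zero => simpa using rotM_zero m
  | succ k ih => rw [succ_nsmul]; exact fix_add ih ha

lemma fix_mul {m : PMatching n} {a : ZMod (2*n)} (ha : rotM a m = m) (c : ZMod (2*n)) :
    rotM (c * a) m = m := by
  have : c * a = c.val • a := by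
    rw [nsmul_eq_mul]
    norm_cast
    rw [ZMod.natCast_val, ZMod.cast_id]
  rw [this]
  exact fix_nsmul ha c.val

lemma fix_gcd {m : PMatching n} {a : ZMod (2*n)} (ha : rotM a m = m) :
    rotM ((Nat.gcd a.val (2*n) : ℕ) : ZMod (2*n)) m = m := by
  have hbez := Nat.gcd_eq_gcd_ab a.val (2*n)
  have h : ((Nat.gcd a.val (2*n) : ℕ) : ZMod (2*n))
      = ((Nat.gcdA a.val (2*n) : ℤ) : ZMod (2*n)) * a := by
    have h2 := congrArg (fun z : ℤ => (z : ZMod (2*n))) hbez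
    simp only [Int.cast_add, Int.cast_mul, Int.cast_natCast] at h2
    rw [ZMod.natCast_self, zero_mul, add_zero] at h2
    rw [ZMod.natCast_val, ZMod.cast_id] at h2
    simpa [mul_comm] using h2
  rw [h]
  exact fix_mul ha _

/-- Matchings fixed by rotation by `a`. -/
noncomputable def FixF (n : ℕ) [NeZero n] (a : ZMod (2*n)) : Finset (PMatching n) :=
  univ.filter (fun m => rotM a m = m)

lemma val_cast_eq (v : ZMod (2*n)) : ((v.val : ℕ) : ZMod (2*n)) = v := by
  rw [ZMod.natCast_val, ZMod.cast_id]

lemma fixF_card_le (a : ZMod (2*n)) :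
    (FixF n a).card ≤ (2*n) ^ (Nat.gcd a.val (2*n)) := by
  have h2n : 0 < 2*n := by have := NeZero.pos n; omega
  set g := Nat.gcd a.val (2*n) with hg
  have hgpos : 0 < g := Nat.gcd_pos_of_pos_right _ h2n
  have hcard : ((univ : Finset (Fin g → ZMod (2*n)))).card = (2*n) ^ g := by
    rw [Finset.card_univ, Fintype.card_fun, ZMod.card, Fintype.card_fin]
  rw [← hcard]
  refine Finset.card_le_card_of_injOn
    (fun m => (fun i : Fin g => pmp m ((i : ℕ) : ZMod (2*n)))) (fun _ _ => mem_univ _) ?_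
  intro m1 hm1 m2 hm2 heq
  simp only [Finset.coe_filter, Set.mem_setOf_eq, FixF] at hm1 hm2
  refine pm_ext fun v => ?_
  have key : ∀ m : PMatching n, rotM a m = m →
      pmp m v = pmp m ((v.val % g : ℕ) : ZMod (2*n)) + (v.val / g) • ((g : ℕ) : ZMod (2*n)) := by
    intro m hfix
    have hfixg : rotM ((g : ℕ) : ZMod (2*n)) m = m := fix_gcd hfix
    have hq : rotM ((v.val / g) • ((g : ℕ) : ZMod (2*n))) m = m := fix_nsmul hfixg _
    have hv : v = ((v.val % g : ℕ) : ZMod (2*n)) + (v.val / g) • ((g : ℕ) : ZMod (2*n)) := by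
      have hsplit : v.val % g + (v.val / g) * g = v.val := by
        rw [Nat.mod_add_div']
      rw [nsmul_eq_mul]
      calc v = ((v.val : ℕ) : ZMod (2*n)) := (val_cast_eq v).symm
      _ = _ := by rw [← Nat.cast_mul, ← Nat.cast_add, hsplit]
    conv_lhs => rw [hv]
    exact pmp_fixed hq _
  rw [key m1 hm1.2, key m2 hm2.2]
  have hi : pmp m1 ((v.val % g : ℕ) : ZMod (2*n)) = pmp m2 ((v.val % g : ℕ) : ZMod (2*n)) := by
    have := congrFun heq ⟨v.val % g, Nat.mod_lt _ hgpos⟩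
    simpa using this
  rw [hi]

lemma gcd_le_of_ne (a : ZMod (2*n)) (ha : a ≠ 0) (ha' : a ≠ ((n : ℕ) : ZMod (2*n))) :
    3 * Nat.gcd a.val (2*n) ≤ 2*n := by
  have h2n : 0 < 2*n := by have := NeZero.pos n; omega
  set g := Nat.gcd a.val (2*n) with hg
  have hdvd : g ∣ 2*n := Nat.gcd_dvd_right _ _
  have hdvda : g ∣ a.val := Nat.gcd_dvd_left _ _
  have havpos : a.val ≠ 0 := fun h => ha (by rw [← val_cast_eq a, h]; simp)
  have havlt : a.val < 2*n := ZMod.val_lt a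
  obtain ⟨k, hk⟩ := hdvd
  have hk0 : k ≠ 0 := by rintro rfl; omega
  have hk1 : k ≠ 1 := by
    rintro rfl
    rw [mul_one] at hk
    obtain ⟨c, hc⟩ := hdvda
    rcases c with _ | c
    · omega
    · have : 2*n ≤ a.val := by
        calc 2*n = g := by omega
        _ ≤ g * (c+1) := Nat.le_mul_of_pos_right _ (by omega)
        _ = a.val := hc.symm
      omega
  have hk2 : k ≠ 2 := by
    rintro rfl
    apply ha'
    -- g = n, n ∣ a.val, 0 < a.val < 2n ⇒ a.val = n
    have hgn : g = n := by omega
    obtain ⟨c, hc⟩ := hdvda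
    have hcv : c = 1 := by
      rcases c with _ | _ | c
      · omega
      · rfl
      · exfalso; rw [hgn] at hc; nlinarith
    rw [hgn, hcv, mul_one] at hc
    rw [← val_cast_eq a, hc]
  calc 3 * g ≤ k * g := Nat.mul_le_mul_right _ (by omega)
  _ = 2*n := by rw [mul_comm]; omega

lemma tau_add_tau : ((n : ℕ) : ZMod (2*n)) + ((n : ℕ) : ZMod (2*n)) = 0 := by
  rw [← Nat.cast_add]
  have : n + n = 2 * n := by ring
  rw [this, ZMod.natCast_self]

lemma cast_fin_val (i : Fin n) : (((i : ℕ) : ZMod (2*n))).val = (i : ℕ) :=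
  ZMod.val_cast_of_lt (by have := i.isLt; omega)

lemma fixF_tau_card_le :
    (FixF n ((n : ℕ) : ZMod (2*n))).card ≤ (invOn (univ : Finset (Fin n))).card * 2 ^ n := by
  have hn0 : 0 < n := NeZero.pos n
  set τ : ZMod (2*n) := ((n : ℕ) : ZMod (2*n)) with hτ
  -- auxiliary facts
  have hval : ∀ v : ZMod (2*n), v.val < 2*n := fun v => ZMod.val_lt v
  have hsub : ∀ p : ZMod (2*n), n ≤ p.val → ((p.val - n : ℕ) : ZMod (2*n)) = p + τ := by
    intro p hp
    have h1 : ((p.val - n : ℕ) : ZMod (2*n)) + τ + τ = p + τ := by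
      rw [hτ, ← Nat.cast_add, ← Nat.cast_add]
      have : p.val - n + n + n = p.val + n := by omega
      rw [this, Nat.cast_add, val_cast_eq]
    have h2 := tau_add_tau (n := n)
    calc ((p.val - n : ℕ) : ZMod (2*n)) = ((p.val - n : ℕ) : ZMod (2*n)) + (τ + τ) := by
          rw [← hτ] at h2; rw [h2, add_zero]
    _ = p + τ := by rw [← add_assoc, h1]
  -- the two encoding maps
  set σf : PMatching n → (Fin n → Fin n) := fun m i =>
    ⟨(pmp m ((i : ℕ) : ZMod (2*n))).val % n, Nat.mod_lt _ hn0⟩ with hσf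
  set εf : PMatching n → (Fin n → Bool) := fun m i =>
    decide ((pmp m ((i : ℕ) : ZMod (2*n))).val < n) with hεf
  have key : ∀ m : PMatching n, rotM τ m = m → ∀ i : Fin n,
      pmp m (((σf m i : ℕ) : ZMod (2*n)))
        = (if (pmp m ((i : ℕ) : ZMod (2*n))).val < n then ((i : ℕ) : ZMod (2*n))
           else ((i : ℕ) : ZMod (2*n)) + τ) := by
    intro m hfix i
    set v : ZMod (2*n) := ((i : ℕ) : ZMod (2*n)) with hv
    set p : ZMod (2*n) := pmp m v with hp
    by_cases hlt : p.val < n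
    · rw [if_pos hlt]
      have hj : ((σf m i : ℕ) : ZMod (2*n)) = p := by
        simp only [hσf]
        rw [Nat.mod_eq_of_lt hlt, val_cast_eq]
      rw [hj, hp, pmp_pmp]
    · rw [if_neg hlt]
      push_neg at hlt
      have hmod : p.val % n = p.val - n := by
        rw [Nat.mod_eq_sub_mod hlt, Nat.mod_eq_of_lt (by have := hval p; omega)]
      have hj : ((σf m i : ℕ) : ZMod (2*n)) = p + τ := by
        simp only [hσf]
        rw [hmod, hsub p hlt]
      rw [hj]
      have := pmp_fixed hfix p
      rw [this, hp, pmp_pmp]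
  have hcard2 : ((univ : Finset (Fin n → Bool))).card = 2 ^ n := by
    rw [Finset.card_univ, Fintype.card_fun, Fintype.card_fin, Fintype.card_bool]
  rw [← hcard2, ← Finset.card_product]
  refine Finset.card_le_card_of_injOn (fun m => (σf m, εf m)) ?_ ?_
  · -- maps to
    intro m hm
    simp only [FixF, Finset.mem_coe, mem_filter] at hm
    rw [Finset.mem_coe, Finset.mem_product]
    refine ⟨?_, mem_univ _⟩
    rw [mem_invOn]
    refine ⟨fun i _ => ⟨mem_univ _, ?_⟩, fun x hx => absurd (mem_univ x) hx⟩
    -- involutivity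
    have hk := key m hm.2 i
    set v : ZMod (2*n) := ((i : ℕ) : ZMod (2*n)) with hv
    set p : ZMod (2*n) := pmp m v with hp
    by_cases hlt : p.val < n
    · rw [if_pos hlt] at hk
      refine Fin.ext ?_
      simp only [hσf]
      rw [hk, hv, cast_fin_val, Nat.mod_eq_of_lt i.isLt]
    · rw [if_neg hlt] at hk
      refine Fin.ext ?_
      simp only [hσf]
      rw [hk]
      have : (v + τ).val = (i : ℕ) + n := by
        rw [hv, hτ, ← Nat.cast_add]
        exact ZMod.val_cast_of_lt (by have := i.isLt; omega)
      rw [this, Nat.add_mod_right, Nat.mod_eq_of_lt i.isLt]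
  · -- injective
    intro m1 hm1 m2 hm2 heq
    simp only [FixF, Finset.mem_coe, mem_filter] at hm1 hm2
    have hσ : σf m1 = σf m2 := congrArg Prod.fst heq
    have hε : εf m1 = εf m2 := congrArg Prod.snd heq
    have base : ∀ i : Fin n, pmp m1 ((i : ℕ) : ZMod (2*n)) = pmp m2 ((i : ℕ) : ZMod (2*n)) := by
      intro i
      set p1 : ZMod (2*n) := pmp m1 ((i : ℕ) : ZMod (2*n)) with hp1
      set p2 : ZMod (2*n) := pmp m2 ((i : ℕ) : ZMod (2*n)) with hp2
      have h1 := congrFun hσ i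
      have h2 := congrFun hε i
      simp only [hσf, Fin.mk.injEq] at h1
      simp only [hεf, decide_eq_decide] at h2
      have hveq : p1.val = p2.val := by
        rw [← hp1, ← hp2] at h1 h2
        have w1 := hval p1
        have w2 := hval p2
        by_cases hc : p1.val < n
        · have hc2 : p2.val < n := h2.1 hc
          rwa [Nat.mod_eq_of_lt hc, Nat.mod_eq_of_lt hc2] at h1
        · have hc2 : ¬ p2.val < n := fun h => hc (h2.2 h)
          push_neg at hc hc2
          rw [Nat.mod_eq_sub_mod hc, Nat.mod_eq_of_lt (by omega),
            Nat.mod_eq_sub_mod hc2, Nat.mod_eq_of_lt (by omega)] at h1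
          omega
      calc p1 = ((p1.val : ℕ) : ZMod (2*n)) := (val_cast_eq p1).symm
      _ = ((p2.val : ℕ) : ZMod (2*n)) := by rw [hveq]
      _ = p2 := val_cast_eq p2
    refine pm_ext fun v => ?_
    by_cases hc : v.val < n
    · have hv : v = (((⟨v.val, hc⟩ : Fin n) : ℕ) : ZMod (2*n)) := by
        simp only [Fin.val_mk]
        exact (val_cast_eq v).symm
      rw [hv]
      exact base ⟨v.val, hc⟩
    · push_neg at hc
      have hw : ((v.val - n : ℕ) : ZMod (2*n)) = v + τ := hsub v hc
      have hv : v = ((v.val - n : ℕ) : ZMod (2*n)) + τ := by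
        rw [hw, add_assoc]
        have h2 := tau_add_tau (n := n)
        rw [← hτ] at h2
        rw [h2, add_zero]
      have hwlt : v.val - n < n := by have := hval v; omega
      have hcast : ((v.val - n : ℕ) : ZMod (2*n))
          = (((⟨v.val - n, hwlt⟩ : Fin n) : ℕ) : ZMod (2*n)) := by simp
      rw [hv, pmp_fixed hm1.2, pmp_fixed hm2.2, hcast, base ⟨v.val - n, hwlt⟩]

end PM

section Orbit
variable {n : ℕ} [NeZero n]

noncomputable def clsF (m : PMatching n) : Finset (PMatching n) := univ.filter (rotRel n m)

lemma mem_clsF {m m' : PMatching n} : m' ∈ clsF m ↔ rotRel n m m' := by simp [clsF]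

lemma clsF_eq_of_rel {m m' : PMatching n} (h : rotRel n m m') : clsF m = clsF m' := by
  refine Finset.ext fun z => ?_
  rw [mem_clsF, mem_clsF]
  exact ⟨fun hz => rotRel_trans (rotRel_symm h) hz, fun hz => rotRel_trans h hz⟩

lemma self_mem_clsF (m : PMatching n) : m ∈ clsF m := mem_clsF.2 (rotRel_refl m)

lemma clsF_eq_image (m : PMatching n) :
    clsF m = (univ : Finset (ZMod (2*n))).image (fun a => rotM a m) := by
  refine Finset.ext fun z => ?_
  rw [mem_clsF, Finset.mem_image]
  rw [rotRel_iff]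
  exact ⟨fun ⟨a, ha⟩ => ⟨a, mem_univ a, ha.symm⟩, fun ⟨a, _, ha⟩ => ⟨a, ha.symm⟩⟩

lemma rotOrbitCount_eq :
    rotOrbitCount n = ((univ : Finset (PMatching n)).image clsF).card := by
  have hset : {S : Set (PMatching n) | ∃ m, S = {m' | rotRel n m m'}}
      = (fun t : Finset (PMatching n) => (t : Set (PMatching n)))
        '' ↑((univ : Finset (PMatching n)).image clsF) := by
    ext S
    simp only [Set.mem_setOf_eq, Set.mem_image, Finset.coe_image, Set.mem_image,
      Finset.mem_coe, Finset.mem_image]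
    constructor
    · rintro ⟨m, rfl⟩
      refine ⟨clsF m, ⟨m, mem_univ m, rfl⟩, ?_⟩
      ext z
      simp [mem_clsF]
    · rintro ⟨t, ⟨m, _, rfl⟩, rfl⟩
      refine ⟨m, ?_⟩
      ext z
      simp [mem_clsF]
  rw [rotOrbitCount, hset, Set.ncard_image_of_injective _ Finset.coe_injective,
    Set.ncard_coe_finset]

/-- Matchings with a nontrivial stabilizer. -/
noncomputable def BadF (n : ℕ) [NeZero n] : Finset (PMatching n) :=
  univ.filter (fun m => ∃ a : ZMod (2*n), a ≠ 0 ∧ rotM a m = m)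

lemma clsF_card_le (m : PMatching n) : (clsF m).card ≤ 2*n := by
  rw [clsF_eq_image]
  calc _ ≤ (univ : Finset (ZMod (2*n))).card := Finset.card_image_le
  _ = 2*n := by rw [Finset.card_univ, ZMod.card]

lemma clsF_card_of_good {m m' : PMatching n} (hm' : m' ∈ clsF m) (hbad : m' ∉ BadF n) :
    (clsF m).card = 2*n := by
  rw [clsF_eq_of_rel (mem_clsF.1 hm'), clsF_eq_image]
  rw [Finset.card_image_of_injective _ ?_, Finset.card_univ, ZMod.card]
  intro a b hab
  dsimp only at hab
  have h1 : rotM (a + -b) m' = m' := by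
    rw [← rotM_rotM, hab, rotM_rotM, add_neg_cancel, rotM_zero]
  by_contra hne
  exact hbad (mem_filter.2 ⟨mem_univ _, ⟨a + -b, fun h0 => hne (by
    have : a = b := by
      have := congrArg (fun x => x + b) h0
      simpa using this
    exact this), h1⟩⟩)

lemma total_eq_sum_orbits :
    Fintype.card (PMatching n)
      = ∑ t ∈ (univ : Finset (PMatching n)).image clsF, t.card := by
  rw [← Finset.card_univ (α := PMatching n)]
  rw [Finset.card_eq_sum_card_fiberwise
    (fun m (_ : m ∈ univ) => Finset.mem_image_of_mem clsF (mem_univ m))]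
  refine Finset.sum_congr rfl fun t ht => ?_
  obtain ⟨m0, _, rfl⟩ := Finset.mem_image.1 ht
  congr 1
  refine Finset.ext fun z => ?_
  simp only [mem_filter, mem_univ, true_and]
  constructor
  · intro hz
    rw [← hz]
    exact self_mem_clsF z
  · intro hz
    exact (clsF_eq_of_rel (mem_clsF.1 hz)).symm

theorem count_lower :
    Fintype.card (PMatching n) ≤ 2*n * rotOrbitCount n := by
  rw [rotOrbitCount_eq, total_eq_sum_orbits]
  calc ∑ t ∈ (univ : Finset (PMatching n)).image clsF, t.card
      ≤ ∑ t ∈ (univ : Finset (PMatching n)).image clsF, 2*n := by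
        refine Finset.sum_le_sum fun t ht => ?_
        obtain ⟨m0, _, rfl⟩ := Finset.mem_image.1 ht
        exact clsF_card_le m0
  _ = _ := by rw [Finset.sum_const, smul_eq_mul, mul_comm]

theorem count_upper :
    2*n * rotOrbitCount n ≤ Fintype.card (PMatching n) + 2*n * (BadF n).card := by
  rw [rotOrbitCount_eq]
  set O := (univ : Finset (PMatching n)).image clsF with hO
  set O1 := O.filter (fun t => t.card = 2*n) with hO1
  set O2 := O.filter (fun t => ¬ t.card = 2*n) with hO2
  have hsplit : O.card = O1.card + O2.card :=
    (Finset.card_filter_add_card_filter_not _).symm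
  have hbadsub : ∀ t ∈ O2, t ⊆ BadF n := by
    intro t ht
    obtain ⟨htO, htc⟩ := mem_filter.1 ht
    obtain ⟨m0, _, rfl⟩ := Finset.mem_image.1 htO
    intro m' hm'
    by_contra hb
    exact htc (clsF_card_of_good hm' hb)
  have hdisj : ∀ t ∈ O2, ∀ t' ∈ O2, t ≠ t' → Disjoint t t' := by
    intro t ht t' ht' hne
    obtain ⟨m0, _, rfl⟩ := Finset.mem_image.1 (mem_filter.1 ht).1
    obtain ⟨m0', _, rfl⟩ := Finset.mem_image.1 (mem_filter.1 ht').1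
    rw [Finset.disjoint_left]
    intro z hz hz'
    exact hne ((clsF_eq_of_rel (mem_clsF.1 hz)).trans (clsF_eq_of_rel (mem_clsF.1 hz')).symm)
  have hO2bad : O2.card ≤ (BadF n).card := by
    have h1 : O2.card ≤ ∑ t ∈ O2, t.card := by
      calc O2.card = ∑ _t ∈ O2, 1 := by rw [Finset.sum_const, smul_eq_mul, mul_one]
      _ ≤ ∑ t ∈ O2, t.card := by
        refine Finset.sum_le_sum fun t ht => ?_
        obtain ⟨m0, _, rfl⟩ := Finset.mem_image.1 (mem_filter.1 ht).1
        exact Finset.card_pos.2 ⟨m0, self_mem_clsF m0⟩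
    have h2 : ∑ t ∈ O2, t.card = (O2.biUnion id).card := (Finset.card_biUnion hdisj).symm
    have h3 : O2.biUnion id ⊆ BadF n := by
      intro z hz
      obtain ⟨t, ht, hzt⟩ := Finset.mem_biUnion.1 hz
      exact hbadsub t ht hzt
    calc O2.card ≤ _ := h1
    _ = _ := h2
    _ ≤ _ := Finset.card_le_card h3
  have hO1total : 2*n * O1.card ≤ Fintype.card (PMatching n) := by
    rw [total_eq_sum_orbits]
    calc 2*n * O1.card = ∑ t ∈ O1, 2*n := by rw [Finset.sum_const, smul_eq_mul, mul_comm]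
    _ = ∑ t ∈ O1, t.card := by
        refine Finset.sum_congr rfl fun t ht => ?_
        exact ((mem_filter.1 ht).2).symm
    _ ≤ ∑ t ∈ O, t.card := Finset.sum_le_sum_of_subset (Finset.filter_subset _ _)
  calc 2*n * O.card = 2*n * O1.card + 2*n * O2.card := by rw [hsplit]; ring
  _ ≤ Fintype.card (PMatching n) + 2*n * (BadF n).card := by
      have := Nat.mul_le_mul_left (2*n) hO2bad
      omega

lemma badF_card_le :
    (BadF n).card ≤ ∑ a ∈ (univ : Finset (ZMod (2*n))).erase 0, (FixF n a).card := by
  have hsub : BadF n ⊆ ((univ : Finset (ZMod (2*n))).erase 0).biUnion (fun a => FixF n a) := by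
    intro m hm
    obtain ⟨-, a, ha0, hafix⟩ := mem_filter.1 hm
    exact Finset.mem_biUnion.2 ⟨a, Finset.mem_erase.2 ⟨ha0, mem_univ a⟩,
      mem_filter.2 ⟨mem_univ m, hafix⟩⟩
  calc (BadF n).card ≤ _ := Finset.card_le_card hsub
  _ ≤ _ := Finset.card_biUnion_le

end Orbit

section Master
variable {n : ℕ} [NeZero n]

lemma card_pmatching :
    Fintype.card (PMatching n) = ∏ j ∈ range n, (2*j+1) := by
  have H : ∀ M : Finset (Finset (ZMod (2*n))),
      M ∈ matchFinset (univ : Finset (ZMod (2*n))) ↔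
      ((∀ e ∈ M, e.card = 2) ∧ ∀ v : ZMod (2*n), ∃! e, e ∈ M ∧ v ∈ e) := by
    intro M
    rw [mem_matchFinset]
    constructor
    · rintro ⟨h1, h2⟩
      exact ⟨fun e he => (h1 e he).1, fun v => h2 v (mem_univ v)⟩
    · rintro ⟨h1, h2⟩
      exact ⟨fun e he => ⟨h1 e he, Finset.subset_univ e⟩, fun v _ => h2 v⟩
  have h1 : Fintype.card (PMatching n)
      = (matchFinset (univ : Finset (ZMod (2*n)))).card := by
    calc Fintype.card (PMatching n)
        = Fintype.card {M : Finset (Finset (ZMod (2*n))) //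
            (∀ e ∈ M, e.card = 2) ∧ ∀ v : ZMod (2*n), ∃! e, e ∈ M ∧ v ∈ e} :=
          Fintype.card_congr (Equiv.refl _)
    _ = (matchFinset (univ : Finset (ZMod (2*n)))).card := Fintype.card_of_subtype _ H
  rw [h1]
  exact card_matchFinset n univ (by rw [Finset.card_univ, ZMod.card])

theorem master_bound :
    (∏ j ∈ range n, (2*j+1)) ≤ 2*n * rotOrbitCount n ∧
    2*n * rotOrbitCount n
      ≤ (∏ j ∈ range n, (2*j+1))
        + (2*n)^2 * ((2*n) ^ ((2*n)/3) + 4^n * n^(n/2)) := by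
  have hn0 : 0 < n := NeZero.pos n
  constructor
  · rw [← card_pmatching]; exact count_lower
  · have hbad : (BadF n).card ≤ 2*n * ((2*n) ^ ((2*n)/3) + 4^n * n^(n/2)) := by
      calc (BadF n).card ≤ ∑ a ∈ (univ : Finset (ZMod (2*n))).erase 0, (FixF n a).card :=
            badF_card_le
      _ ≤ ∑ _a ∈ (univ : Finset (ZMod (2*n))).erase 0,
            ((2*n) ^ ((2*n)/3) + 4^n * n^(n/2)) := by
          refine Finset.sum_le_sum fun a ha => ?_
          by_cases hτ : a = ((n : ℕ) : ZMod (2*n))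
          · subst hτ
            calc (FixF n _).card ≤ (invOn (univ : Finset (Fin n))).card * 2^n :=
                  fixF_tau_card_le
            _ ≤ (2 ^ n * n ^ (n/2)) * 2^n := by
                gcongr
                have := card_invOn_le (α := Fin n) n (by rw [Fintype.card_fin]) univ
                rwa [Finset.card_univ, Fintype.card_fin] at this
            _ = 4^n * n^(n/2) := by
                rw [show (4:ℕ) = 2*2 from rfl, mul_pow]
                ring
            _ ≤ _ := Nat.le_add_left _ _
          · have ha0 : a ≠ 0 := (Finset.mem_erase.1 ha).1
            calc (FixF n a).card ≤ (2*n) ^ (Nat.gcd a.val (2*n)) := fixF_card_le a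
            _ ≤ (2*n) ^ ((2*n)/3) := by
                refine Nat.pow_le_pow_right (by omega) ?_
                have := gcd_le_of_ne a ha0 hτ
                omega
            _ ≤ _ := Nat.le_add_right _ _
      _ ≤ 2*n * ((2*n) ^ ((2*n)/3) + 4^n * n^(n/2)) := by
          refine le_trans (le_of_eq (Finset.sum_const _)) ?_
          rw [smul_eq_mul]
          refine Nat.mul_le_mul_right _ ?_
          calc ((univ : Finset (ZMod (2*n))).erase 0).card
              ≤ (univ : Finset (ZMod (2*n))).card := Finset.card_le_card (Finset.erase_subset _ _)
          _ = 2*n := by rw [Finset.card_univ, ZMod.card]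
    calc 2*n * rotOrbitCount n ≤ Fintype.card (PMatching n) + 2*n * (BadF n).card := count_upper
    _ ≤ (∏ j ∈ range n, (2*j+1)) + 2*n * (2*n * ((2*n) ^ ((2*n)/3) + 4^n * n^(n/2))) := by
        rw [card_pmatching]
        exact Nat.add_le_add_left (Nat.mul_le_mul_left _ hbad) _
    _ = _ := by ring

end Master

section Analysis
open Filter Real

lemma tendsto_zero_of_ratio (a : ℕ → ℝ) (h0 : ∀ n, 0 ≤ a n) (N : ℕ)
    (h : ∀ n, N ≤ n → a (n+1) ≤ a n / 2) : Tendsto a atTop (nhds 0) := by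
  have key : ∀ k, a (N + k) ≤ a N / 2^k := by
    intro k
    induction k with
    | zero => simp
    | succ k ih =>
      have h2 := h (N+k) (by omega)
      have h2k : (0:ℝ) < 2^k := by positivity
      calc a (N+(k+1)) = a ((N+k)+1) := by ring_nf
      _ ≤ a (N+k)/2 := h2
      _ ≤ (a N / 2^k)/2 := by linarith
      _ = a N / 2^(k+1) := by rw [pow_succ]; ring
  have hg : Tendsto (fun n : ℕ => a N / 2^(n - N)) atTop (nhds 0) := by
    have h1 : Tendsto (fun k : ℕ => a N / 2^k) atTop (nhds 0) := by
      have h2 : Tendsto (fun k : ℕ => a N * (1/2:ℝ)^k) atTop (nhds (a N * 0)) :=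
        tendsto_const_nhds.mul
          (tendsto_pow_atTop_nhds_zero_of_lt_one (by norm_num) (by norm_num))
      rw [mul_zero] at h2
      refine h2.congr fun k => ?_
      rw [div_pow, one_pow]
      ring
    exact h1.comp (tendsto_sub_atTop_nat N)
  refine squeeze_zero' (Filter.eventually_atTop.2 ⟨N, fun n _ => h0 n⟩)
    (Filter.eventually_atTop.2 ⟨N, fun n hn => ?_⟩) hg
  have := key (n - N)
  rwa [Nat.add_sub_cancel' hn] at this

lemma tendsto_zero_of_pow_le (k : ℕ) (hk : 0 < k) (f g : ℕ → ℝ) (hf : ∀ n, 0 ≤ f n)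
    (hfg : ∀ᶠ n in atTop, f n ^ k ≤ g n) (hg : Tendsto g atTop (nhds 0)) :
    Tendsto f atTop (nhds 0) := by
  have hkR : (0:ℝ) < (k:ℝ) := by exact_mod_cast hk
  have hkd : (0:ℝ) < 1/(k:ℝ) := one_div_pos.2 hkR
  have hg0 : ∀ᶠ n in atTop, 0 ≤ g n :=
    hfg.mono fun n hn => le_trans (pow_nonneg (hf n) k) hn
  have hroot : Tendsto (fun n => g n ^ (1/(k:ℝ) : ℝ)) atTop (nhds 0) := by
    have hc : ContinuousAt (fun x : ℝ => x ^ (1/(k:ℝ) : ℝ)) 0 :=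
      Real.continuousAt_rpow_const 0 _ (Or.inr hkd.le)
    have := hc.tendsto.comp hg
    rwa [Real.zero_rpow (ne_of_gt hkd)] at this
  refine squeeze_zero' (Filter.eventually_atTop.2 ⟨0, fun n _ => hf n⟩) ?_ hroot
  filter_upwards [hfg] with n hn
  have h1 : f n = (f n ^ k) ^ (1/(k:ℝ) : ℝ) := by
    rw [← Real.rpow_natCast (f n) k, ← Real.rpow_mul (hf n)]
    rw [mul_one_div, div_self hkR.ne', Real.rpow_one]
  rw [h1]
  exact Real.rpow_le_rpow (pow_nonneg (hf n) k) hn hkd.le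

lemma pow_succ_le_real (n k : ℕ) (hn : 1 ≤ n) (hk : (k:ℝ) ≤ 3*n) :
    ((n:ℝ)+1)^k ≤ 21 * (n:ℝ)^k := by
  have hn0 : (0:ℝ) < n := by exact_mod_cast hn
  have h1 : ((n:ℝ)+1) = n * (1 + 1/n) := by field_simp
  have h2 : (1 + 1/(n:ℝ))^k ≤ Real.exp ((k:ℝ)/n) := by
    have hb : (1 + 1/(n:ℝ)) ≤ Real.exp (1/n) := by
      have := Real.add_one_le_exp (1/(n:ℝ))
      linarith
    calc (1+1/(n:ℝ))^k ≤ (Real.exp (1/n))^k := by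
          exact pow_le_pow_left₀ (by positivity) hb k
    _ = Real.exp ((k:ℝ)/n) := by
        rw [← Real.exp_nat_mul]
        congr 1
        ring
  have h3 : Real.exp ((k:ℝ)/n) ≤ Real.exp 3 :=
    Real.exp_le_exp.2 (by rw [div_le_iff₀ hn0]; linarith)
  have h4 : Real.exp 3 ≤ 21 := by
    have he : Real.exp 1 < 2.7182818286 := Real.exp_one_lt_d9
    have h5 : Real.exp 3 = (Real.exp 1)^(3:ℕ) := by
      rw [← Real.exp_nat_mul]
      norm_num
    rw [h5]
    calc (Real.exp 1)^(3:ℕ) ≤ (2.7182818286:ℝ)^(3:ℕ) := by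
          exact pow_le_pow_left₀ (le_of_lt (Real.exp_pos 1)) (le_of_lt he) 3
    _ ≤ 21 := by norm_num
  calc ((n:ℝ)+1)^k = (n:ℝ)^k * (1+1/n)^k := by rw [h1, mul_pow]
  _ ≤ (n:ℝ)^k * Real.exp ((k:ℝ)/n) := by
      exact mul_le_mul_of_nonneg_left h2 (by positivity)
  _ ≤ (n:ℝ)^k * 21 := mul_le_mul_of_nonneg_left (h3.trans h4) (by positivity)
  _ = 21 * (n:ℝ)^k := by ring

noncomputable def Preal (n : ℕ) : ℝ := ∏ j ∈ range n, (2*(j:ℝ)+1)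

lemma Preal_pos (n : ℕ) : 0 < Preal n :=
  Finset.prod_pos fun j _ => by positivity

lemma Preal_succ (n : ℕ) : Preal (n+1) = Preal n * (2*(n:ℝ)+1) := Finset.prod_range_succ _ n

noncomputable def Gseq (n : ℕ) : ℝ := (2*(n:ℝ))^4 * 16^n * (n:ℝ)^n / (Preal n)^2

noncomputable def Hseq (n : ℕ) : ℝ := (2*(n:ℝ))^(2*n+6) / (Preal n)^3

lemma Gseq_tendsto : Filter.Tendsto Gseq Filter.atTop (nhds 0) := by
  refine tendsto_zero_of_ratio Gseq (fun n => by
    have := Preal_pos n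
    unfold Gseq
    positivity) 3000 (fun n hn => ?_)
  have hx1 : (1:ℝ) ≤ (n:ℝ) := by exact_mod_cast (by omega : 1 ≤ n)
  have hx : (3000:ℝ) ≤ (n:ℝ) := by exact_mod_cast hn
  set x : ℝ := (n:ℝ) with hxdef
  have hP := Preal_pos n
  have hP1 := Preal_pos (n+1)
  have key : 2 * ((2*(x+1))^4 * 16^(n+1) * (x+1)^(n+1))
      ≤ ((2*x)^4 * 16^n * x^n) * (2*x+1)^2 := by
    have e1 : (x+1)^(n+1) ≤ 21 * x^(n+1) := by
      refine pow_succ_le_real n (n+1) (by omega) ?_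
      push_cast
      linarith
    have e2 : (2*(x+1))^4 ≤ 256 * x^4 := by
      calc (2*(x+1))^4 ≤ (4*x)^4 := by
            refine pow_le_pow_left₀ (by positivity) (by linarith) 4
      _ = 256 * x^4 := by ring
    have base : 172032*x ≤ 16*(2*x+1)^2 := by nlinarith
    calc 2 * ((2*(x+1))^4 * 16^(n+1) * (x+1)^(n+1))
        = 32 * 16^n * ((2*(x+1))^4 * (x+1)^(n+1)) := by ring
    _ ≤ 32 * 16^n * ((256*x^4) * (21 * x^(n+1))) := by
        gcongr
    _ = (172032*x)*(x^4*x^n*16^n) := by ring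
    _ ≤ (16*(2*x+1)^2)*(x^4*x^n*16^n) := by
        refine mul_le_mul_of_nonneg_right base (by positivity)
    _ = ((2*x)^4 * 16^n * x^n) * (2*x+1)^2 := by ring
  unfold Gseq
  rw [Preal_succ, div_div]
  rw [div_le_div_iff₀ (by positivity) (by positivity)]
  push_cast
  calc (2*(x+1))^4 * 16^(n+1) * (x+1)^(n+1) * (Preal n ^2 * 2)
      = (2 * ((2*(x+1))^4 * 16^(n+1) * (x+1)^(n+1))) * Preal n ^2 := by ring
  _ ≤ (((2*x)^4 * 16^n * x^n) * (2*x+1)^2) * Preal n ^2 := by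
      refine mul_le_mul_of_nonneg_right key (by positivity)
  _ = (2*x)^4 * 16^n * x^n * (Preal n * (2*x+1))^2 := by ring

lemma Hseq_tendsto : Filter.Tendsto Hseq Filter.atTop (nhds 0) := by
  refine tendsto_zero_of_ratio Hseq (fun n => by
    have := Preal_pos n
    unfold Hseq
    positivity) 3000 (fun n hn => ?_)
  have hx1 : (1:ℝ) ≤ (n:ℝ) := by exact_mod_cast (by omega : 1 ≤ n)
  have hx : (3000:ℝ) ≤ (n:ℝ) := by exact_mod_cast hn
  set x : ℝ := (n:ℝ) with hxdef
  have hP := Preal_pos n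
  have hP1 := Preal_pos (n+1)
  have hexp : 2*(n+1)+6 = (2*n+6)+2 := by omega
  have key : 2 * (2*(x+1))^((2*n+6)+2) ≤ (2*x)^(2*n+6) * (2*x+1)^3 := by
    have e1 : (x+1)^((2*n+6)+2) ≤ 21 * x^((2*n+6)+2) := by
      refine pow_succ_le_real n ((2*n+6)+2) (by omega) ?_
      push_cast
      linarith
    have base : 168 * x^2 ≤ (2*x+1)^3 := by nlinarith
    calc 2 * (2*(x+1))^((2*n+6)+2)
        = 2 * (2:ℝ)^((2*n+6)+2) * (x+1)^((2*n+6)+2) := by rw [mul_pow]; ring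
    _ ≤ 2 * (2:ℝ)^((2*n+6)+2) * (21 * x^((2*n+6)+2)) := by
        gcongr
    _ = (168 * x^2) * ((2:ℝ)^(2*n+6) * x^(2*n+6)) := by
        rw [pow_add, pow_add]
        ring
    _ ≤ ((2*x+1)^3) * ((2:ℝ)^(2*n+6) * x^(2*n+6)) := by
        refine mul_le_mul_of_nonneg_right base (by positivity)
    _ = (2*x)^(2*n+6) * (2*x+1)^3 := by
        rw [mul_pow]
        ring
  unfold Hseq
  rw [Preal_succ, div_div]
  rw [div_le_div_iff₀ (by positivity) (by positivity)]
  push_cast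
  rw [hexp]
  calc (2*(x+1))^((2*n+6)+2) * (Preal n ^3 * 2)
      = (2 * (2*(x+1))^((2*n+6)+2)) * Preal n ^3 := by ring
  _ ≤ ((2*x)^(2*n+6) * (2*x+1)^3) * Preal n ^3 := by
      refine mul_le_mul_of_nonneg_right key (by positivity)
  _ = (2*x)^(2*n+6) * (Preal n * (2*x+1))^3 := by ring

noncomputable def hseq (n : ℕ) : ℝ := (2*(n:ℝ))^2 * (2*(n:ℝ))^((2*n)/3) / Preal n

noncomputable def gseq (n : ℕ) : ℝ := (2*(n:ℝ))^2 * ((4:ℝ)^n * (n:ℝ)^(n/2)) / Preal n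

lemma hseq_tendsto : Filter.Tendsto hseq Filter.atTop (nhds 0) := by
  refine tendsto_zero_of_pow_le 3 (by norm_num) hseq Hseq (fun n => by
    have := Preal_pos n
    unfold hseq
    positivity) ?_ Hseq_tendsto
  filter_upwards [Filter.eventually_ge_atTop 1] with n hn
  have hx1 : (1:ℝ) ≤ (n:ℝ) := by exact_mod_cast hn
  have hP := Preal_pos n
  unfold hseq Hseq
  rw [div_pow]
  gcongr
  calc ((2*(n:ℝ))^2 * (2*(n:ℝ))^((2*n)/3))^3
      = (2*(n:ℝ))^6 * ((2*(n:ℝ))^((2*n)/3))^3 := by rw [mul_pow]; ring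
  _ = (2*(n:ℝ))^6 * (2*(n:ℝ))^(((2*n)/3)*3) := by rw [← pow_mul]
  _ = (2*(n:ℝ))^(6 + ((2*n)/3)*3) := by rw [← pow_add]
  _ ≤ (2*(n:ℝ))^(2*n+6) := by
      refine pow_le_pow_right₀ (by linarith) ?_
      have := Nat.div_mul_le_self (2*n) 3
      omega

lemma gseq_tendsto : Filter.Tendsto gseq Filter.atTop (nhds 0) := by
  refine tendsto_zero_of_pow_le 2 (by norm_num) gseq Gseq (fun n => by
    have := Preal_pos n
    unfold gseq
    positivity) ?_ Gseq_tendsto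
  filter_upwards [Filter.eventually_ge_atTop 1] with n hn
  have hx1 : (1:ℝ) ≤ (n:ℝ) := by exact_mod_cast hn
  have hP := Preal_pos n
  unfold gseq Gseq
  rw [div_pow]
  gcongr
  have h16 : ((4:ℝ)^n)^2 = 16^n := by
    rw [← pow_mul, mul_comm, pow_mul]
    norm_num
  calc ((2*(n:ℝ))^2 * ((4:ℝ)^n * (n:ℝ)^(n/2)))^2
      = (2*(n:ℝ))^4 * ((4:ℝ)^n)^2 * ((n:ℝ)^(n/2))^2 := by rw [mul_pow, mul_pow]; ring
  _ = (2*(n:ℝ))^4 * 16^n * (n:ℝ)^((n/2)*2) := by rw [h16, ← pow_mul]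
  _ ≤ (2*(n:ℝ))^4 * 16^n * (n:ℝ)^n := by
      gcongr
      have := Nat.div_mul_le_self n 2
      omega

/-- `c_n ∼ (2n−1)!!/(2n)` as `n → ∞`: the number of rotation orbits of perfect
matchings of `K_{2n}` satisfies `2n·c_n/(2n−1)!! → 1`. -/
theorem rotOrbitCount_asymptotic :
    Filter.Tendsto
      (fun n : ℕ => (2 * n * rotOrbitCount n : ℝ) / ∏ j ∈ Finset.range n, (2 * j + 1 : ℝ))
      Filter.atTop (nhds 1) := by
  have hDz : Filter.Tendsto (fun n => hseq n + gseq n) Filter.atTop (nhds 0) := by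
    have := hseq_tendsto.add gseq_tendsto
    simpa using this
  have hsub : Filter.Tendsto
      (fun n : ℕ => (2 * (n:ℝ) * (rotOrbitCount n : ℝ)) / Preal n - 1)
      Filter.atTop (nhds 0) := by
    refine squeeze_zero' ?_ ?_ hDz
    · filter_upwards [Filter.eventually_ge_atTop 1] with n hn
      haveI : NeZero n := ⟨by omega⟩
      have h1 := (master_bound (n := n)).1
      have hP := Preal_pos n
      have hcast : ((∏ j ∈ range n, (2*j+1) : ℕ) : ℝ) = Preal n := by
        unfold Preal
        push_cast
        rfl
      rw [sub_nonneg, le_div_iff₀ hP, one_mul]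
      calc Preal n = ((∏ j ∈ range n, (2*j+1) : ℕ) : ℝ) := hcast.symm
      _ ≤ ((2*n*rotOrbitCount n : ℕ) : ℝ) := by exact_mod_cast h1
      _ = 2*(n:ℝ)*(rotOrbitCount n : ℝ) := by push_cast; ring
    · filter_upwards [Filter.eventually_ge_atTop 1] with n hn
      haveI : NeZero n := ⟨by omega⟩
      have h2 := (master_bound (n := n)).2
      have hP := Preal_pos n
      have hcast : ((∏ j ∈ range n, (2*j+1) : ℕ) : ℝ) = Preal n := by
        unfold Preal
        push_cast
        rfl
      have hnum : 2*(n:ℝ)*(rotOrbitCount n : ℝ)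
          ≤ Preal n + (((2*n)^2 * ((2*n) ^ ((2*n)/3) + 4^n * n^(n/2)) : ℕ) : ℝ) := by
        rw [← hcast]
        calc 2*(n:ℝ)*(rotOrbitCount n : ℝ) = ((2*n*rotOrbitCount n : ℕ) : ℝ) := by
              push_cast; ring
        _ ≤ _ := by exact_mod_cast h2
      have hD : (((2*n)^2 * ((2*n) ^ ((2*n)/3) + 4^n * n^(n/2)) : ℕ) : ℝ)
          = (hseq n + gseq n) * Preal n := by
        unfold hseq gseq
        push_cast
        field_simp
      rw [sub_le_iff_le_add, div_le_iff₀ hP]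
      rw [hD] at hnum
      linarith
  have h1 := hsub.add (tendsto_const_nhds (x := (1:ℝ)))
  rw [zero_add] at h1
  refine Filter.Tendsto.congr (fun n => ?_) h1
  show (2 * (n:ℝ) * (rotOrbitCount n : ℝ)) / Preal n - 1 + 1 = _
  rw [sub_add_cancel]
  rfl
end Analysis
end

section
/- For odd i dividing 2n with i > 1, one has (2n/i − 1)!! < √(2e) · (2n/(e·i))^{n/i}. -/
open Nat Finset

lemma factorial_le_stirling_bound (k : ℕ) (hk : 1 ≤ k) :
    (k ! : ℝ) ≤ Real.exp 1 * Real.sqrt k * ((k : ℝ) / Real.exp 1) ^ k := by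
  have hkR : (0 : ℝ) < k := by exact_mod_cast hk
  have h := Stirling.stirlingSeq'_antitone (Nat.zero_le (k - 1))
  simp only [Function.comp] at h
  rw [Nat.succ_eq_add_one, Nat.sub_add_cancel hk] at h
  rw [Stirling.stirlingSeq_one, Stirling.stirlingSeq] at h
  have hden : (0 : ℝ) < Real.sqrt (2 * k) * ((k : ℝ) / Real.exp 1) ^ k := by
    positivity
  rw [div_le_iff₀ hden] at h
  calc (k ! : ℝ) ≤ Real.exp 1 / Real.sqrt 2 * (Real.sqrt (2 * k) * ((k : ℝ) / Real.exp 1) ^ k) := h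
    _ = Real.exp 1 * Real.sqrt k * ((k : ℝ) / Real.exp 1) ^ k := by
        rw [Real.sqrt_mul (by norm_num : (0:ℝ) ≤ 2)]
        have h2 : Real.sqrt 2 ≠ 0 := by positivity
        field_simp

lemma shift_prod (k : ℕ) : (∏ j ∈ Finset.range k, (2 * (j : ℝ) + 3)) =
    (∏ j ∈ Finset.range k, (2 * (j : ℝ) + 1)) * (2 * k + 1) := by
  induction k with
  | zero => simp
  | succ t ih =>
    rw [Finset.prod_range_succ, Finset.prod_range_succ, ih]
    push_cast; ring

lemma key_double_fact (k : ℕ) (hk : 1 ≤ k) :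
    (∏ j ∈ Finset.range k, (2 * j + 1 : ℝ)) <
      Real.sqrt (2 * Real.exp 1) * (2 * (k : ℝ) / Real.exp 1) ^ k := by
  have he1 : (0 : ℝ) < Real.exp 1 := Real.exp_pos 1
  have hkR : (0 : ℝ) < k := by exact_mod_cast hk
  set P := ∏ j ∈ Finset.range k, (2 * (j : ℝ) + 1) with hP
  have hPpos : 0 < P := Finset.prod_pos fun j _ => by positivity
  -- Step 1 : P^2 * (2k+1) < (2^k * k!)^2
  have h3 : (∏ j ∈ Finset.range k, (2 * (j : ℝ) + 3)) = P * (2 * k + 1) := shift_prod k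
  have hfact : (∏ j ∈ Finset.range k, (2 * ((j : ℝ) + 1))) = 2 ^ k * (k ! : ℝ) := by
    rw [Finset.prod_mul_distrib, Finset.prod_const, Finset.card_range]
    congr 1
    rw [← Finset.prod_range_add_one_eq_factorial, Nat.cast_prod]
    push_cast
    rfl
  have hstep : P ^ 2 * (2 * k + 1) < (2 ^ k * (k ! : ℝ)) ^ 2 := by
    have hlt : (∏ j ∈ Finset.range k, ((2 * (j : ℝ) + 1) * (2 * (j : ℝ) + 3))) <
        ∏ j ∈ Finset.range k, (2 * ((j : ℝ) + 1)) ^ 2 := by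
      apply Finset.prod_lt_prod_of_nonempty
      · intro j _; positivity
      · intro j _; nlinarith [sq_nonneg ((j : ℝ) + 1)]
      · exact Finset.nonempty_range_iff.mpr (by omega)
    calc P ^ 2 * (2 * k + 1) = P * (P * (2 * k + 1)) := by ring
      _ = (∏ j ∈ Finset.range k, (2 * (j : ℝ) + 1)) *
          (∏ j ∈ Finset.range k, (2 * (j : ℝ) + 3)) := by rw [h3]
      _ = ∏ j ∈ Finset.range k, ((2 * (j : ℝ) + 1) * (2 * (j : ℝ) + 3)) := by
          rw [Finset.prod_mul_distrib]
      _ < ∏ j ∈ Finset.range k, (2 * ((j : ℝ) + 1)) ^ 2 := hlt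
      _ = (2 ^ k * (k ! : ℝ)) ^ 2 := by rw [Finset.prod_pow, hfact]
  -- Step 2 : combine with factorial bound
  have hfac := factorial_le_stirling_bound k hk
  have hfacpos : (0 : ℝ) < (k ! : ℝ) := by exact_mod_cast k.factorial_pos
  have hsqrtk : Real.sqrt k ^ 2 = (k : ℝ) := Real.sq_sqrt hkR.le
  have hRHSsq : (Real.sqrt (2 * Real.exp 1) * (2 * (k : ℝ) / Real.exp 1) ^ k) ^ 2
      = 2 * Real.exp 1 * ((2 * (k : ℝ) / Real.exp 1) ^ k) ^ 2 := by
    rw [mul_pow, Real.sq_sqrt (by positivity)]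
  have hpowid : (2 : ℝ) ^ k * ((k : ℝ) / Real.exp 1) ^ k = (2 * (k : ℝ) / Real.exp 1) ^ k := by
    rw [← mul_pow]; congr 1; field_simp
  have h2 : ((2 : ℝ) ^ k * (k ! : ℝ)) ^ 2 ≤
      (Real.exp 1) ^ 2 * k * ((2 * (k : ℝ) / Real.exp 1) ^ k) ^ 2 := by
    calc ((2 : ℝ) ^ k * (k ! : ℝ)) ^ 2
        ≤ ((2 : ℝ) ^ k * (Real.exp 1 * Real.sqrt k * ((k : ℝ) / Real.exp 1) ^ k)) ^ 2 := by
          apply pow_le_pow_left₀ (by positivity)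
          exact mul_le_mul_of_nonneg_left hfac (by positivity)
      _ = (Real.exp 1) ^ 2 * (Real.sqrt k) ^ 2 *
          ((2 : ℝ) ^ k * ((k : ℝ) / Real.exp 1) ^ k) ^ 2 := by ring
      _ = (Real.exp 1) ^ 2 * k * ((2 * (k : ℝ) / Real.exp 1) ^ k) ^ 2 := by
          rw [hsqrtk, hpowid]
  have hconst : (Real.exp 1) ^ 2 * k ≤ 2 * Real.exp 1 * (2 * k + 1) := by
    have he4 : Real.exp 1 ≤ 4 := by
      have := Real.exp_one_lt_d9
      linarith
    have h5 : 0 ≤ (4 - Real.exp 1) * Real.exp 1 * k :=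
      mul_nonneg (mul_nonneg (by linarith) he1.le) hkR.le
    nlinarith [h5, he1]
  have hfinal : P ^ 2 < (Real.sqrt (2 * Real.exp 1) * (2 * (k : ℝ) / Real.exp 1) ^ k) ^ 2 := by
    rw [hRHSsq]
    have hpos2k1 : (0 : ℝ) < 2 * k + 1 := by positivity
    have hApos : (0 : ℝ) ≤ ((2 * (k : ℝ) / Real.exp 1) ^ k) ^ 2 := by positivity
    have hcomb := hstep.trans_le h2
    nlinarith [mul_le_mul_of_nonneg_right hconst hApos, hpos2k1, hcomb]
  exact lt_of_pow_lt_pow_left₀ 2 (by positivity) hfinal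

/-- For odd `i > 1` dividing `2n` (so `i ∣ n`), one has
`(2n/i − 1)!! < √(2e) · (2n/(e·i))^{n/i}`, where `(2m−1)!! = ∏_{j<m} (2j+1)`. -/
theorem doubleFactorial_upper_bound_odd (n i : ℕ) (hn : 0 < n) (hi : Odd i)
    (h1 : 1 < i) (hd : i ∣ 2 * n) :
    (∏ j ∈ Finset.range (n / i), (2 * j + 1 : ℝ)) <
      Real.sqrt (2 * Real.exp 1) * ((2 * n) / (Real.exp 1 * i)) ^ (n / i) := by
  have hdvd : i ∣ n := (Nat.Coprime.dvd_of_dvd_mul_left (hi.coprime_two_right) hd)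
  set k := n / i with hk
  have hipos : 0 < i := by omega
  have hkn : n = k * i := (Nat.div_mul_cancel hdvd).symm
  have hk1 : 1 ≤ k := by
    rw [hk, Nat.le_div_iff_mul_le hipos, one_mul]
    exact Nat.le_of_dvd hn hdvd
  have harg : ((2 * n : ℕ) : ℝ) / (Real.exp 1 * i) = 2 * (k : ℝ) / Real.exp 1 := by
    rw [hkn]
    push_cast
    have : (i : ℝ) ≠ 0 := by positivity
    field_simp
  have := key_double_fact k hk1
  push_cast at harg ⊢
  rw [harg]
  exact this
end

section
/- For even i dividing 2n, one has 1 + Σ_{k=1}^{⌊n/i⌋} C(2n/i, 2k) · i^k · (2k−1)!! < √(2e) · n · (2en)^{n/i}. -/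
open Nat Finset

private lemma aux_prod_odd (k : ℕ) :
    ∏ j ∈ Finset.range k, (2 * j + 1 : ℝ) = (2 * k)! / (2 ^ k * k !) := by
  induction k with
  | zero => simp
  | succ k ih =>
    rw [Finset.prod_range_succ, ih]
    have h : (2 * (k + 1))! = (2 * k)! * (2 * k + 1) * (2 * k + 2) := by
      have h2 : 2 * (k + 1) = (2 * k + 1) + 1 := by ring
      rw [h2, Nat.factorial_succ, Nat.factorial_succ]
      ring
    rw [h, Nat.factorial_succ]
    have h1 : ((2:ℝ) ^ k * k !) ≠ 0 := by positivity
    have h2 : ((2:ℝ) ^ (k+1) * ((k+1) * k !)) ≠ 0 := by positivity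
    field_simp
    push_cast
    ring

private lemma aux_pow_le_exp_fact (K : ℕ) :
    ((K : ℝ) + 1) ^ K ≤ Real.exp 1 ^ (K + 1) * K ! := by
  induction K with
  | zero => simpa using Real.one_le_exp (by norm_num)
  | succ K ih =>
    have hK1 : (0:ℝ) < (K:ℝ) + 1 := by positivity
    have hbig : (1 + 1 / ((K:ℝ) + 1)) ^ (K + 1) ≤ Real.exp 1 := by
      have h1 : 1 + 1 / ((K:ℝ) + 1) ≤ Real.exp (1 / ((K:ℝ) + 1)) := by
        have := Real.add_one_le_exp (1 / ((K:ℝ) + 1)); linarith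
      calc (1 + 1 / ((K:ℝ) + 1)) ^ (K + 1)
          ≤ Real.exp (1 / ((K:ℝ) + 1)) ^ (K + 1) :=
            pow_le_pow_left₀ (by positivity) h1 _
        _ = Real.exp (((K + 1 : ℕ) : ℝ) * (1 / ((K:ℝ) + 1))) := by
            rw [← Real.exp_nat_mul]
        _ = Real.exp 1 := by
            congr 1; push_cast; field_simp
    have heq : ((K:ℝ) + 1 + 1) ^ (K + 1)
        = ((K:ℝ) + 1) ^ (K + 1) * (1 + 1 / ((K:ℝ) + 1)) ^ (K + 1) := by
      rw [← mul_pow]; congr 1; field_simp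
    have hih : ((K:ℝ) + 1) ^ (K + 1) ≤ ((K:ℝ) + 1) * (Real.exp 1 ^ (K + 1) * K !) := by
      rw [pow_succ, mul_comm]
      exact mul_le_mul_of_nonneg_left ih hK1.le
    calc (((K + 1 : ℕ) : ℝ) + 1) ^ (K + 1)
        = ((K:ℝ) + 1) ^ (K + 1) * (1 + 1 / ((K:ℝ) + 1)) ^ (K + 1) := by
          push_cast; rw [← heq]
      _ ≤ (((K:ℝ) + 1) * (Real.exp 1 ^ (K + 1) * K !)) * Real.exp 1 := by
          apply mul_le_mul hih hbig (by positivity)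
          positivity
      _ = Real.exp 1 ^ (K + 1 + 1) * ((K + 1 : ℕ)) ! := by
          rw [Nat.factorial_succ]; push_cast; ring

private lemma aux_fact_le (k d : ℕ) : (k + d)! ≤ k ! * (k + d) ^ d := by
  induction d with
  | zero => simp
  | succ d ih =>
    have h : (k + (d + 1))! = (k + d + 1) * (k + d)! := by
      rw [show k + (d + 1) = (k + d) + 1 from rfl, Nat.factorial_succ]
    rw [h]
    calc (k + d + 1) * (k + d)! ≤ (k + d + 1) * (k ! * (k + d) ^ d) :=
          Nat.mul_le_mul_left _ ih
      _ ≤ (k + d + 1) * (k ! * (k + d + 1) ^ d) := by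
          apply Nat.mul_le_mul_left
          exact Nat.mul_le_mul_left _ (Nat.pow_le_pow_left (Nat.le_succ _) _)
      _ = k ! * (k + (d + 1)) ^ (d + 1) := by ring

/-- For even `i` dividing `2n`, `n ≥ 1`, one has
`1 + Σ_{k=1}^{⌊n/i⌋} C(2n/i, 2k) i^k (2k−1)!! < √(2e) · n · (2en)^{n/i}`. -/
theorem nu_upper_bound_even (n i : ℕ) (hn : 1 ≤ n) (hi : Even i) (hd : i ∣ 2 * n) :
    (1 : ℝ) + ∑ k ∈ Finset.Icc 1 (n / i),
        ((2 * n / i).choose (2 * k) : ℝ) * (i : ℝ) ^ k *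
          ∏ j ∈ Finset.range k, (2 * j + 1 : ℝ) <
      Real.sqrt (2 * Real.exp 1) * n * (2 * Real.exp 1 * n) ^ (n / i) := by
  have hi0 : i ≠ 0 := by rintro rfl; omega
  have hi2 : 2 ≤ i := Nat.le_of_dvd (Nat.pos_of_ne_zero hi0) hi.two_dvd
  have hn0 : (0:ℝ) < n := by exact_mod_cast hn
  have hn1R : (1:ℝ) ≤ n := by exact_mod_cast hn
  have hiR : (0:ℝ) < i := by exact_mod_cast Nat.pos_of_ne_zero hi0
  have he1 : (1:ℝ) < Real.exp 1 := by
    have := Real.exp_one_gt_d9; linarith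
  have he9 : Real.exp 1 < 2.7182818286 := Real.exp_one_lt_d9
  have hsqrt3 : (2:ℝ) * Real.exp 1 / 3 < Real.sqrt (2 * Real.exp 1) := by
    apply Real.lt_sqrt_of_sq_lt
    nlinarith
  have hsqrt1 : (1:ℝ) < Real.sqrt (2 * Real.exp 1) := by
    apply Real.lt_sqrt_of_sq_lt
    nlinarith
  set K := n / i with hK
  by_cases hK0 : K = 0
  · rw [hK0, show Finset.Icc 1 0 = (∅ : Finset ℕ) from Finset.Icc_eq_empty (by omega)]
    simp only [Finset.sum_empty, add_zero, pow_zero, mul_one]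
    nlinarith [mul_le_mul_of_nonneg_left hn1R (le_of_lt (lt_trans one_pos hsqrt1))]
  -- main case : K ≥ 1, hence i ≤ n and n ≥ 2
  have hK1 : 1 ≤ K := Nat.one_le_iff_ne_zero.mpr hK0
  have hin : i ≤ n := by
    by_contra h
    have : n / i = 0 := Nat.div_eq_of_lt (by omega)
    omega
  have hn2 : 2 ≤ n := le_trans hi2 hin
  have hn2R : (2:ℝ) ≤ n := by exact_mod_cast hn2
  set x : ℝ := 2 * (n:ℝ) ^ 2 / i with hx
  have hx0 : 0 < x := by positivity
  have hmR : ((2 * n / i : ℕ) : ℝ) = 2 * (n:ℝ) / i := by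
    rw [Nat.cast_div hd (by exact_mod_cast hi0)]; push_cast; ring
  have hKle : (K * i : ℕ) ≤ n := Nat.div_mul_le_self n i
  have hKleR : (K : ℝ) * i ≤ n := by exact_mod_cast hKle
  have hxK : 2 * (n:ℝ) * K ≤ x := by
    rw [hx, le_div_iff₀ hiR]
    nlinarith
  have hlt : (n:ℝ) / i < (K:ℝ) + 1 := by
    have h2 : n / i < K + 1 := by omega
    have h1 : n < (K + 1) * i := (Nat.div_lt_iff_lt_mul (Nat.pos_of_ne_zero hi0)).mp h2
    rw [div_lt_iff₀ hiR]
    exact_mod_cast h1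
  -- Step A : termwise bound by x^k / k!
  have hterm : ∀ k ∈ Finset.Icc 1 K,
      ((2 * n / i).choose (2 * k) : ℝ) * (i : ℝ) ^ k *
          ∏ j ∈ Finset.range k, (2 * j + 1 : ℝ) ≤ x ^ k / k ! := by
    intro k _
    rw [aux_prod_odd]
    have hc : ((2 * n / i).choose (2 * k) : ℝ) ≤ ((2 * n / i : ℕ) : ℝ) ^ (2 * k) / (2 * k)! :=
      Nat.choose_le_pow_div (2 * k) (2 * n / i)
    have hpos : (0:ℝ) ≤ (i : ℝ) ^ k * (((2 * k)! : ℝ) / (2 ^ k * k !)) := by positivity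
    calc ((2 * n / i).choose (2 * k) : ℝ) * (i : ℝ) ^ k * (((2 * k)! : ℝ) / (2 ^ k * k !))
        = ((2 * n / i).choose (2 * k) : ℝ) * ((i : ℝ) ^ k * (((2 * k)! : ℝ) / (2 ^ k * k !))) := by
          ring
      _ ≤ (((2 * n / i : ℕ) : ℝ) ^ (2 * k) / (2 * k)!) *
            ((i : ℝ) ^ k * (((2 * k)! : ℝ) / (2 ^ k * k !))) :=
          mul_le_mul_of_nonneg_right hc hpos
      _ = x ^ k / k ! := by
          rw [hmR, hx]
          have h1 : ((2 * k)! : ℝ) ≠ 0 := by positivity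
          have h2 : ((k ! : ℕ) : ℝ) ≠ 0 := by positivity
          have hine : (i:ℝ) ≠ 0 := ne_of_gt hiR
          have h4 : (4:ℝ) ^ k = 2 ^ (k * 2) := by
            rw [mul_comm, pow_mul]; norm_num
          rw [pow_mul, div_pow, div_pow]
          field_simp
          ring_nf
          rw [← h4]
          rw [inv_pow, show (i:ℝ) ^ (k * 2) = (i:ℝ) ^ k * (i:ℝ) ^ k by ring, ← mul_assoc,
            mul_inv_cancel_right₀ (pow_ne_zero _ hine)]
  -- Step B : 1 + sum ≤ sum over range (K+1)
  have hins : Finset.range (K + 1) = insert 0 (Finset.Icc 1 K) := by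
    ext a; simp only [Finset.mem_range, Finset.mem_insert, Finset.mem_Icc]; omega
  have hsum1 : (1 : ℝ) + ∑ k ∈ Finset.Icc 1 K,
      ((2 * n / i).choose (2 * k) : ℝ) * (i : ℝ) ^ k *
        ∏ j ∈ Finset.range k, (2 * j + 1 : ℝ)
      ≤ ∑ k ∈ Finset.range (K + 1), x ^ k / k ! := by
    rw [hins, Finset.sum_insert (by simp)]
    simp only [pow_zero, Nat.factorial_zero, Nat.cast_one, div_one]
    exact add_le_add le_rfl (Finset.sum_le_sum hterm)
  -- Step C : each x^k/k! ≤ x^K/K! * (1/(2n))^(K-k)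
  set r : ℝ := 1 / (2 * n) with hr
  have hr0 : (0:ℝ) ≤ r := by positivity
  have hr1 : r < 1 := by
    rw [hr, div_lt_one (by positivity)]; linarith
  have hCk : ∀ k, k ≤ K → x ^ k / k ! ≤ x ^ K / K ! * r ^ (K - k) := by
    intro k hk
    obtain ⟨d, hdd⟩ : ∃ d, K = k + d := ⟨K - k, by omega⟩
    have hdK : K - k = d := by omega
    have hfact : ((K)! : ℝ) ≤ (k ! : ℝ) * (K : ℝ) ^ d := by
      have h := aux_fact_le k d
      rw [hdd]; exact_mod_cast h
    have h5 : (2 * (n:ℝ)) ^ d * r ^ d = 1 := by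
      rw [← mul_pow, hr, mul_one_div, div_self (by positivity : (2 * (n:ℝ)) ≠ 0), one_pow]
    have hxd : ((2 * (n:ℝ)) * K) ^ d ≤ x ^ d :=
      pow_le_pow_left₀ (by positivity) hxK d
    have key : (K:ℝ) ^ d ≤ x ^ d * r ^ d := by
      have h3 : (2 * (n:ℝ)) ^ d * (K:ℝ) ^ d ≤ x ^ d := by rw [← mul_pow]; exact hxd
      have h4 : (2 * (n:ℝ)) ^ d * (K:ℝ) ^ d * r ^ d ≤ x ^ d * r ^ d :=
        mul_le_mul_of_nonneg_right h3 (by positivity)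
      calc (K:ℝ) ^ d = (2 * (n:ℝ)) ^ d * r ^ d * (K:ℝ) ^ d := by rw [h5, one_mul]
        _ = (2 * (n:ℝ)) ^ d * (K:ℝ) ^ d * r ^ d := by ring
        _ ≤ x ^ d * r ^ d := h4
    rw [hdK, div_mul_eq_mul_div,
      div_le_div_iff₀ (by positivity : (0:ℝ) < (k ! : ℝ)) (by positivity : (0:ℝ) < ((K)! : ℝ))]
    calc x ^ k * ((K)! : ℝ) ≤ x ^ k * ((k ! : ℝ) * (K:ℝ) ^ d) :=
          mul_le_mul_of_nonneg_left hfact (by positivity)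
      _ ≤ x ^ k * ((k ! : ℝ) * (x ^ d * r ^ d)) := by
          apply mul_le_mul_of_nonneg_left _ (by positivity)
          exact mul_le_mul_of_nonneg_left key (by positivity)
      _ = x ^ (k + d) * r ^ d * (k ! : ℝ) := by rw [pow_add]; ring
      _ = x ^ K * r ^ d * (k ! : ℝ) := by rw [hdd]
  -- Step D : geometric sum bound
  have hgeom : ∑ k ∈ Finset.range (K + 1), x ^ k / k ! ≤ x ^ K / K ! * (1 - r)⁻¹ := by
    calc ∑ k ∈ Finset.range (K + 1), x ^ k / k !
        ≤ ∑ k ∈ Finset.range (K + 1), x ^ K / K ! * r ^ (K - k) := by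
          apply Finset.sum_le_sum
          intro k hkm
          exact hCk k (by simpa using Nat.lt_succ_iff.mp (Finset.mem_range.mp hkm))
      _ = x ^ K / K ! * ∑ k ∈ Finset.range (K + 1), r ^ (K - k) := by
          rw [Finset.mul_sum]
      _ = x ^ K / K ! * ∑ j ∈ Finset.range (K + 1), r ^ j := by
          congr 1
          have := Finset.sum_range_reflect (fun j => r ^ j) (K + 1)
          simpa using this
      _ ≤ x ^ K / K ! * (1 - r)⁻¹ := by
          apply mul_le_mul_of_nonneg_left _ (by positivity)
          calc ∑ j ∈ Finset.range (K + 1), r ^ j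
              ≤ ∑' j : ℕ, r ^ j :=
                Summable.sum_le_tsum _ (fun j _ => by positivity)
                  (summable_geometric_of_lt_one hr0 hr1)
            _ = (1 - r)⁻¹ := tsum_geometric_of_lt_one hr0 hr1
  -- Step E : x^K/K! ≤ e * (2 e n)^K
  have hE : x ^ K / K ! ≤ Real.exp 1 * (2 * Real.exp 1 * n) ^ K := by
    have hxeq : x = 2 * (n:ℝ) * ((n:ℝ) / i) := by rw [hx]; field_simp
    have h1 : x ^ K ≤ (2 * (n:ℝ)) ^ K * ((K:ℝ) + 1) ^ K := by
      rw [hxeq, mul_pow]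
      apply mul_le_mul_of_nonneg_left _ (by positivity)
      exact pow_le_pow_left₀ (by positivity) hlt.le K
    have h2 : ((K:ℝ) + 1) ^ K ≤ Real.exp 1 ^ (K + 1) * K ! := aux_pow_le_exp_fact K
    rw [div_le_iff₀ (by positivity : (0:ℝ) < ((K)! : ℝ))]
    calc x ^ K ≤ (2 * (n:ℝ)) ^ K * ((K:ℝ) + 1) ^ K := h1
      _ ≤ (2 * (n:ℝ)) ^ K * (Real.exp 1 ^ (K + 1) * K !) :=
          mul_le_mul_of_nonneg_left h2 (by positivity)
      _ = Real.exp 1 * (2 * Real.exp 1 * n) ^ K * K ! := by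
          rw [pow_succ, mul_pow, mul_pow]; ring
  -- Step F : final arithmetic
  have hrle : r ≤ 1 / 4 := by
    rw [hr]
    apply div_le_div_of_nonneg_left one_pos.le (by norm_num)
    linarith
  have hinv : (1 - r)⁻¹ ≤ 4 / 3 := by
    rw [show (4:ℝ)/3 = ((3:ℝ)/4)⁻¹ by norm_num]
    apply inv_anti₀ (by norm_num)
    linarith
  have hpowpos : (0:ℝ) < (2 * Real.exp 1 * n) ^ K := by positivity
  have hfinal : Real.exp 1 * (1 - r)⁻¹ < Real.sqrt (2 * Real.exp 1) * n := by
    have hs0 : (0:ℝ) ≤ Real.sqrt (2 * Real.exp 1) := Real.sqrt_nonneg _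
    have h1 : Real.sqrt (2 * Real.exp 1) * 2 ≤ Real.sqrt (2 * Real.exp 1) * n :=
      mul_le_mul_of_nonneg_left hn2R hs0
    have h2 : Real.exp 1 * (1 - r)⁻¹ ≤ Real.exp 1 * (4 / 3) :=
      mul_le_mul_of_nonneg_left hinv (by positivity)
    nlinarith
  calc (1 : ℝ) + ∑ k ∈ Finset.Icc 1 K,
        ((2 * n / i).choose (2 * k) : ℝ) * (i : ℝ) ^ k *
          ∏ j ∈ Finset.range k, (2 * j + 1 : ℝ)
      ≤ ∑ k ∈ Finset.range (K + 1), x ^ k / k ! := hsum1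
    _ ≤ x ^ K / K ! * (1 - r)⁻¹ := hgeom
    _ ≤ Real.exp 1 * (2 * Real.exp 1 * n) ^ K * (1 - r)⁻¹ := by
        apply mul_le_mul_of_nonneg_right hE
        have : (0:ℝ) < 1 - r := by linarith
        positivity
    _ = (Real.exp 1 * (1 - r)⁻¹) * (2 * Real.exp 1 * n) ^ K := by ring
    _ < (Real.sqrt (2 * Real.exp 1) * n) * (2 * Real.exp 1 * n) ^ K :=
        mul_lt_mul_of_pos_right hfinal hpowpos
    _ = Real.sqrt (2 * Real.exp 1) * n * (2 * Real.exp 1 * n) ^ K := by ring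
end
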